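/- arXiv:1705.00836 — 12 statements merged into one kernel-verified Lean document; each statement's English description precedes it below -/
import Mathlib

section
/- Let A be an n×N real matrix (n ≥ 2) whose columns form a frame for ℝⁿ (i.e., A has rank n). Suppose that for all sign vectors s, s' ∈ S_N := {(s_1,...,s_N) : s_1 = 1, s_i = ±1} with s ≠ s', the column spaces D_s Aᵀ ℝⁿ and D_{s'} Aᵀ ℝⁿ are distinct (where D_s is the diagonal matrix with diagonal s). Then A is almost phase retrievable: there is a finite union E_0 of proper subspaces of ℝⁿ such that every x ∈ ℝⁿ \ E_0 is determined up to a global sign by the sequence of absolute frame coefficients (|⟨x, A_i⟩|)_{i=1}^N, where A_i are the columns of A. -/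
/-!
Write `B = Aᵀ`, which is injective. If `|B x| = |B y|` entrywise then, after replacing `y` by `-y`,
`B y = D_s B x` for a sign vector `s` with `s₀ = 1`. Either `s = 1`, and then `y = x`, or
`D_s B x ∈ range B`, i.e. `x` lies in `W_s = (D_s B)⁻¹ (range B)`. Each such `W_s` is proper:
otherwise `range (D_s B) ⊆ range B`, and both have dimension `n`, contradicting the hypothesis
with `s' = 1`. The exceptional set is the union of the `W_s`, `s ≠ 1`.
-/

open Matrix

section SignedPreimage

variable {ι n K : Type*} [Fintype n] [Field K]

theorem Matrix.injective_mulVecLin_of_rank_eq_card (B : Matrix ι n K)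
    (hB : B.rank = Fintype.card n) : Function.Injective B.mulVecLin := by
  rw [← LinearMap.ker_eq_bot, ← Submodule.finrank_eq_zero]
  have := B.mulVecLin.finrank_range_add_finrank_ker
  rw [← Matrix.rank, hB, Module.finrank_fintype_fun_eq_card] at this
  omega

variable [Fintype ι] [DecidableEq ι]

def signedPreimage (B : Matrix ι n K) (s : ι → K) : Submodule K (n → K) :=
  (LinearMap.range B.mulVecLin).comap (diagonal s * B).mulVecLin

theorem mem_signedPreimage_of_mulVec_eq {B : Matrix ι n K} {s : ι → K} {x y : n → K}
    (h : B *ᵥ y = s * B *ᵥ x) : x ∈ signedPreimage B s := by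
  refine ⟨y, ?_⟩
  ext i
  simp [h, mulVec_diagonal]

theorem signedPreimage_ne_top {B : Matrix ι n K} {s : ι → K} (hs : ∀ i, s i ≠ 0)
    (hne : LinearMap.range (diagonal s * B).mulVecLin ≠ LinearMap.range B.mulVecLin) :
    signedPreimage B s ≠ ⊤ := by
  intro htop
  refine hne (Submodule.eq_of_le_of_finrank_eq ?_ ?_)
  · rintro _ ⟨x, rfl⟩
    exact (htop ▸ Submodule.mem_top : x ∈ signedPreimage B s)
  · rw [← Matrix.rank, ← Matrix.rank, rank_mul_eq_right_of_det_ne_zero]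
    simpa [det_diagonal, Finset.prod_ne_zero_iff] using hs

end SignedPreimage

section SignVectors

variable {ι K : Type*} [Fintype ι] [DecidableEq ι] [Ring K]

def signVectors [DecidableEq K] (i₀ : ι) : Finset (ι → K) :=
  Fintype.piFinset fun i => if i = i₀ then {1} else {1, -1}

theorem mem_signVectors [DecidableEq K] {i₀ : ι} {s : ι → K} :
    s ∈ signVectors i₀ ↔ s i₀ = 1 ∧ ∀ i, s i = 1 ∨ s i = -1 := by
  simp only [signVectors, Fintype.mem_piFinset]
  constructor
  · intro h
    refine ⟨by simpa using h i₀, fun i => ?_⟩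
    have := h i
    split_ifs at this <;> simp_all
  · rintro ⟨h₀, h⟩ i
    split_ifs with hi
    · simp [hi, h₀]
    · simpa using h i

theorem exists_mem_signVectors_of_abs_eq [LinearOrder K] [IsOrderedRing K] {i₀ : ι}
    {u v : ι → K} (habs : ∀ i, |u i| = |v i|) (h₀ : v i₀ = u i₀) : ∃ s ∈ signVectors i₀, v = s * u := by
  refine ⟨fun i => if v i = u i then 1 else -1, mem_signVectors.2 ⟨if_pos h₀, fun i => ?_⟩, ?_⟩
  · split_ifs <;> simp
  · ext i
    simp only [Pi.mul_apply]
    split_ifs with h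
    · simp [h]
    · simpa using (abs_eq_abs.1 (habs i).symm).resolve_left h

end SignVectors

section SignRetrieval

variable {ι n K : Type*} [Fintype ι] [DecidableEq ι] [Fintype n] [Field K] [LinearOrder K]
  [IsOrderedRing K] {B : Matrix ι n K} {i₀ : ι} {x y : n → K}

theorem eq_of_abs_mulVec_eq_of_mulVec_apply_eq (hB : Function.Injective B.mulVecLin)
    (hx : ∀ s ∈ (signVectors i₀).erase 1, x ∉ signedPreimage B s)
    (habs : ∀ i, |(B *ᵥ x) i| = |(B *ᵥ y) i|) (h₀ : (B *ᵥ y) i₀ = (B *ᵥ x) i₀) : y = x := by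
  obtain ⟨s, hs, hy⟩ := exists_mem_signVectors_of_abs_eq habs h₀
  by_cases h1 : s = 1
  · exact hB (by simpa [h1] using hy)
  · exact absurd (mem_signedPreimage_of_mulVec_eq hy) (hx s (Finset.mem_erase.2 ⟨h1, hs⟩))

theorem eq_or_eq_neg_of_abs_mulVec_eq (hB : Function.Injective B.mulVecLin)
    (hx : ∀ s ∈ (signVectors i₀).erase 1, x ∉ signedPreimage B s)
    (habs : ∀ i, |(B *ᵥ x) i| = |(B *ᵥ y) i|) : y = x ∨ y = -x := by
  rcases abs_eq_abs.1 (habs i₀).symm with h₀ | h₀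
  · exact Or.inl (eq_of_abs_mulVec_eq_of_mulVec_apply_eq hB hx habs h₀)
  · refine Or.inr (neg_eq_iff_eq_neg.1 ?_)
    exact eq_of_abs_mulVec_eq_of_mulVec_apply_eq hB hx (by simpa [mulVec_neg] using habs)
      (by simp [mulVec_neg, h₀])

end SignRetrieval

theorem stmt_0_general {n N : ℕ} (A : Matrix (Fin n) (Fin (N + 1)) ℝ)
    (hrank : A.rank = n)
    (hdist : ∀ s s' : Fin (N + 1) → ℝ,
      (∀ i, s i = 1 ∨ s i = -1) → (∀ i, s' i = 1 ∨ s' i = -1) →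
      s 0 = 1 → s' 0 = 1 → s ≠ s' →
      LinearMap.range (Matrix.mulVecLin (Matrix.diagonal s * A.transpose)) ≠
        LinearMap.range (Matrix.mulVecLin (Matrix.diagonal s' * A.transpose))) :
    ∃ S : Finset (Submodule ℝ (Fin n → ℝ)), (∀ W ∈ S, W ≠ ⊤) ∧
      ∀ x : Fin n → ℝ, (∀ W ∈ S, x ∉ W) →
        ∀ y : Fin n → ℝ,
          (∀ i, |∑ j, x j * A j i| = |∑ j, y j * A j i|) → y = x ∨ y = -x := by
  refine ⟨((signVectors 0).erase 1).image (signedPreimage Aᵀ), ?_, ?_⟩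
  · simp only [Finset.mem_image, Finset.mem_erase]
    rintro _ ⟨s, ⟨hs1, hs⟩, rfl⟩
    obtain ⟨hs0, hsign⟩ := mem_signVectors.1 hs
    refine signedPreimage_ne_top (fun i => by rcases hsign i with h | h <;> simp [h]) ?_
    simpa using hdist s 1 hsign (fun _ => Or.inl rfl) hs0 rfl hs1
  · intro x hx y hy
    have hB := Aᵀ.injective_mulVecLin_of_rank_eq_card (by simp [rank_transpose, hrank])
    refine eq_or_eq_neg_of_abs_mulVec_eq hB (fun s hs => hx _ (Finset.mem_image_of_mem _ hs)) ?_
    simpa [mulVec_transpose, vecMul, dotProduct] using hy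

/-- almost phase retrievability from distinctness of signed column spaces. -/
theorem stmt_0 {n N : ℕ} (hn : 2 ≤ n) (A : Matrix (Fin n) (Fin (N + 1)) ℝ)
    (hrank : A.rank = n)
    (hdist : ∀ s s' : Fin (N + 1) → ℝ,
      (∀ i, s i = 1 ∨ s i = -1) → (∀ i, s' i = 1 ∨ s' i = -1) →
      s 0 = 1 → s' 0 = 1 → s ≠ s' →
      LinearMap.range (Matrix.mulVecLin (Matrix.diagonal s * A.transpose)) ≠
        LinearMap.range (Matrix.mulVecLin (Matrix.diagonal s' * A.transpose))) :
    ∃ S : Finset (Submodule ℝ (Fin n → ℝ)), (∀ W ∈ S, W ≠ ⊤) ∧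
      ∀ x : Fin n → ℝ, (∀ W ∈ S, x ∉ W) →
        ∀ y : Fin n → ℝ,
          (∀ i, |∑ j, x j * A j i| = |∑ j, y j * A j i|) → y = x ∨ y = -x :=
  stmt_0_general A hrank hdist
end

section
/- Let A be an n×N real matrix of rank n whose columns form a frame for ℝⁿ, n ≥ 2. If A is almost phase retrievable, then A is weak full spark: removing any single column of A leaves a matrix of rank n. -/
open Matrix

/-!
If deleting column `i` lowers the rank, some `u` is orthogonal to every column except `A i`, and
`⟨u, A i⟩ ≠ 0` because `A` has rank `n`. The map `x ↦ x - (2⟨x, A i⟩ / ⟨u, A i⟩) u` flips the sign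
of `⟨x, A i⟩` and fixes every other `⟨x, A j⟩`, so it preserves all magnitudes. Since `ℝⁿ` is not a
finite union of proper subspaces, some `x` avoids the exceptional subspaces, the hyperplane
`⟨·, A i⟩ = 0` and the line `ℝ u` (proper since `n ≥ 2`); its image is then neither `x` nor `-x`.
-/

theorem Submodule.span_singleton_ne_top_of_one_lt_finrank {K E : Type*} [DivisionRing K]
    [AddCommGroup E] [Module K E] (hE : 1 < Module.finrank K E) (u : E) : (K ∙ u) ≠ ⊤ := by
  intro h
  have hle := finrank_span_le_card (R := K) ({u} : Set E)
  rw [h, finrank_top, Set.toFinset_singleton, Finset.card_singleton] at hle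
  omega

theorem Subspace.exists_forall_notMem_of_ne_top {K E : Type*} [DivisionRing K] [Infinite K]
    [AddCommGroup E] [Module K E] {s : Finset (Subspace K E)} (hs : ∀ p ∈ s, p ≠ ⊤) :
    ∃ x : E, ∀ p ∈ s, x ∉ p := by
  obtain ⟨x, hx⟩ := Set.ne_univ_iff_exists_notMem _ |>.mp <|
    Subspace.biUnion_ne_univ_of_top_notMem fun htop => hs ⊤ htop rfl
  simp only [Set.mem_iUnion, SetLike.mem_coe, not_exists] at hx
  exact ⟨x, hx⟩

theorem sub_smul_ne_self_and_ne_neg {K E : Type*} [Field K] [CharZero K] [AddCommGroup E]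
    [Module K E] {x u : E} {t : K} (hu : u ≠ 0) (ht : t ≠ 0) (hx : x ∉ K ∙ u) :
    ¬(x - t • u = x ∨ x - t • u = -x) := by
  rintro (h | h)
  · exact smul_ne_zero ht hu (by simpa using h)
  · refine hx (Submodule.mem_span_singleton.mpr ⟨2⁻¹ * t, ?_⟩)
    have h2 : (2 : K) • x = t • u := by
      rw [two_smul]; linear_combination (norm := module) h
    rw [mul_smul, ← h2, smul_smul, inv_mul_cancel₀ two_ne_zero, one_smul]

namespace Matrix

variable {m n R : Type*} [Fintype m] [Field R]

theorem vecMul_injective_iff_rank_eq_card [Fintype n] {A : Matrix m n R} :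
    Function.Injective A.vecMul ↔ A.rank = Fintype.card m := by
  rw [vecMul_injective_iff, linearIndependent_iff_card_eq_finrank_span, rank_eq_finrank_span_row,
    Set.finrank, eq_comm]

theorem exists_ne_zero_vecMul_eq_zero_of_rank_ne [Fintype n] {A : Matrix m n R}
    (h : A.rank ≠ Fintype.card m) : ∃ u ≠ 0, u ᵥ* A = 0 := by
  rw [Ne, ← vecMul_injective_iff_rank_eq_card, ← coe_vecMulLinear, injective_iff_map_eq_zero] at h
  push Not at h
  obtain ⟨u, hu, hu0⟩ := h
  exact ⟨u, hu0, hu⟩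

theorem exists_vecMul_eq_zero_off_of_rank_submatrix_ne [Fintype n] [DecidableEq n]
    {A : Matrix m n R} {i : n}
    (hA : A.rank = Fintype.card m)
    (hdrop : (A.submatrix id (fun j : {j // j ≠ i} => (j : n))).rank ≠ Fintype.card m) :
    ∃ u, (u ᵥ* A) i ≠ 0 ∧ ∀ j ≠ i, (u ᵥ* A) j = 0 := by
  obtain ⟨u, hu0, hu⟩ := exists_ne_zero_vecMul_eq_zero_of_rank_ne hdrop
  have hoff : ∀ j ≠ i, (u ᵥ* A) j = 0 := fun j hj => congrFun hu ⟨j, hj⟩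
  refine ⟨u, fun hi => hu0 (vecMul_injective_iff_rank_eq_card.mpr hA ?_), hoff⟩
  change u ᵥ* A = 0 ᵥ* A
  rw [zero_vecMul]
  ext j
  by_cases hj : j = i
  · exact hj ▸ hi
  · exact hoff j hj

theorem abs_vecMul_sub_smul_eq {A : Matrix m n R} [LinearOrder R] [IsStrictOrderedRing R]
    {u : m → R} {i : n} (hi : (u ᵥ* A) i ≠ 0) (hoff : ∀ j ≠ i, (u ᵥ* A) j = 0)
    (x : m → R) (j : n) :
    |((x - (2 * (x ᵥ* A) i / (u ᵥ* A) i) • u) ᵥ* A) j| = |(x ᵥ* A) j| := by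
  rw [sub_vecMul, smul_vecMul, Pi.sub_apply, Pi.smul_apply, smul_eq_mul]
  by_cases hj : j = i
  · subst hj
    rw [div_mul_cancel₀ _ hi, ← abs_neg]
    ring_nf
  · rw [hoff j hj, mul_zero, sub_zero]

end Matrix

/-- an almost phase retrievable frame matrix is weak full spark. -/
theorem stmt_3 {n N : ℕ} (hn : 2 ≤ n) (A : Matrix (Fin n) (Fin N) ℝ)
    (hrank : A.rank = n)
    (hAPR : ∃ S : Finset (Submodule ℝ (Fin n → ℝ)), (∀ W ∈ S, W ≠ ⊤) ∧
      ∀ x : Fin n → ℝ, (∀ W ∈ S, x ∉ W) →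
        ∀ y : Fin n → ℝ,
          (∀ i, |∑ j, x j * A j i| = |∑ j, y j * A j i|) → y = x ∨ y = -x) :
    ∀ i : Fin N,
      (A.submatrix id (fun j : {j : Fin N // j ≠ i} => (j : Fin N))).rank = n := by
  intro i
  by_contra hdrop
  obtain ⟨u, hi, hoff⟩ := exists_vecMul_eq_zero_off_of_rank_submatrix_ne
    (hrank.trans (Fintype.card_fin n).symm) (by rwa [Fintype.card_fin])
  have hu : u ≠ 0 := by rintro rfl; simp at hi
  obtain ⟨S, hS, hdetermined⟩ := hAPR
  let H : Submodule ℝ (Fin n → ℝ) := LinearMap.ker (LinearMap.proj i ∘ₗ A.vecMulLinear)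
  have hH : H ≠ ⊤ := fun h => hi (LinearMap.mem_ker.mp (h ▸ Submodule.mem_top : u ∈ H))
  have hU : (ℝ ∙ u) ≠ ⊤ :=
    Submodule.span_singleton_ne_top_of_one_lt_finrank (by rwa [Module.finrank_fin_fun]) u
  obtain ⟨x, hx⟩ := Subspace.exists_forall_notMem_of_ne_top (s := insert H (insert (ℝ ∙ u) S))
    (by simpa [hH, hU] using hS)
  have hxH : (x ᵥ* A) i ≠ 0 := fun h => hx H (by simp) (LinearMap.mem_ker.mpr h)
  have hmag (j : Fin N) : |∑ k, x k * A k j|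
      = |∑ k, (x - (2 * (x ᵥ* A) i / (u ᵥ* A) i) • u) k * A k j| :=
    (abs_vecMul_sub_smul_eq hi hoff x j).symm
  exact sub_smul_ne_self_and_ne_neg hu (div_ne_zero (mul_ne_zero two_ne_zero hxH) hi)
    (hx _ (by simp)) (hdetermined x (fun W hW => hx W (by simp [hW])) _ hmag)
end

section
/- Let A be an n×(n+1) real matrix of rank n, n ≥ 2. If A is weak full spark (deleting any single column leaves rank n), then A is almost phase retrievable: all vectors x ∈ ℝⁿ outside a finite union of proper subspaces are determined up to a sign by the magnitudes |⟨x, A_i⟩| over the columns A_i of A. -/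
/-!
If `|⟪x, aᵢ⟫| = |⟪y, aᵢ⟫|` for every column `aᵢ`, then each index kills `x - y` or `x + y`, so
the two sets `s`, `t` of such indices cover all `n + 1` columns. If one of them has `n` elements,
full spark forces `x - y = 0` or `x + y = 0`. Otherwise `x = ((x - y) + (x + y)) / 2` lies in
`K s ⊔ K t`, where `K s` is the common kernel of the columns in `s`; as any `n` columns are
independent, `dim K s = n - #s`, so `dim (K s ⊔ K t) ≤ 2n - (n + 1) < n`. There are only finitely
many such pairs `(s, t)`.
-/

open Module Submodule Finset

section CommonKer

variable {K V ι : Type*} [Field K] [AddCommGroup V] [Module K V]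

def commonKer (f : ι → Dual K V) (s : Set ι) : Submodule K V :=
  (span K (f '' s)).dualCoannihilator

variable {f : ι → Dual K V}

theorem mem_commonKer {s : Set ι} {x : V} : x ∈ commonKer f s ↔ ∀ i ∈ s, f i x = 0 := by
  rw [commonKer, ← SetLike.mem_coe, coe_dualCoannihilator_span]
  simp

theorem commonKer_anti {s t : Set ι} (hst : s ⊆ t) : commonKer f t ≤ commonKer f s :=
  dualCoannihilator_anti (span_mono (Set.image_mono hst))

variable [FiniteDimensional K V]

theorem finrank_commonKer_add_card {s : Finset ι} (hs : LinearIndependent K fun i : s ↦ f i) :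
    finrank K (commonKer f s) + #s = finrank K V := by
  have hrange : f '' s = Set.range fun i : s ↦ f i := by ext; simp
  have h := Subspace.finrank_add_finrank_dualCoannihilator_eq (span K (f '' s))
  rwa [hrange, finrank_span_eq_card hs, Fintype.card_coe, add_comm, ← hrange] at h

variable (f) in
def FullSpark : Prop :=
  ∀ s : Finset ι, #s ≤ finrank K V → LinearIndependent K fun i : s ↦ f i

theorem FullSpark.commonKer_eq_bot (hf : FullSpark f) {s : Finset ι} (hs : finrank K V ≤ #s) :
    commonKer f s = ⊥ := by
  obtain ⟨t, hts, ht⟩ := exists_subset_card_eq hs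
  have h := finrank_commonKer_add_card (hf t ht.le)
  rw [ht, Nat.add_eq_right, Submodule.finrank_eq_zero] at h
  exact eq_bot_iff.mpr (h ▸ commonKer_anti (coe_subset.mpr hts))

theorem FullSpark.sup_commonKer_ne_top [DecidableEq ι] (hf : FullSpark f) {s t : Finset ι}
    (hs : #s ≤ finrank K V) (ht : #t ≤ finrank K V) (hst : finrank K V < #(s ∪ t)) :
    commonKer f s ⊔ commonKer f t ≠ ⊤ := by
  intro htop
  have hsup := Submodule.finrank_add_le_finrank_add_finrank (commonKer f s) (commonKer f t)
  rw [htop, finrank_top] at hsup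
  have := finrank_commonKer_add_card (hf s hs)
  have := finrank_commonKer_add_card (hf t ht)
  have := card_union_le s t
  omega

end CommonKer

section PhaseRetrieval

variable {K V ι : Type*} [Field K] [AddCommGroup V] [Module K V] [FiniteDimensional K V]
  [Fintype ι] [DecidableEq ι]
  {f : ι → Dual K V}

open Classical in
variable (f) in
noncomputable def exceptionalSubspaces : Finset (Submodule K V) :=
  ((univ : Finset (Finset ι × Finset ι)).filter fun p ↦
      #p.1 < finrank K V ∧ #p.2 < finrank K V ∧ p.1 ∪ p.2 = univ).image
    fun p ↦ commonKer f p.1 ⊔ commonKer f p.2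

theorem FullSpark.ne_top_of_mem_exceptionalSubspaces (hf : FullSpark f)
    (hι : finrank K V < Fintype.card ι) {W : Submodule K V} (hW : W ∈ exceptionalSubspaces f) :
    W ≠ ⊤ := by
  simp only [exceptionalSubspaces, mem_image, mem_filter, mem_univ, true_and] at hW
  obtain ⟨⟨s, t⟩, ⟨hs, ht, hst⟩, rfl⟩ := hW
  exact hf.sup_commonKer_ne_top hs.le ht.le (by rwa [hst, card_univ])

theorem FullSpark.eq_or_eq_neg_of_abs_eq [LinearOrder K] [IsStrictOrderedRing K]
    (hf : FullSpark f) {x y : V}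
    (hx : ∀ W ∈ exceptionalSubspaces f, x ∉ W) (h : ∀ i, |f i x| = |f i y|) :
    y = x ∨ y = -x := by
  set s := univ.filter fun i ↦ f i (x - y) = 0
  set t := univ.filter fun i ↦ f i (x + y) = 0
  have hsub : x - y ∈ commonKer f s := mem_commonKer.mpr fun i hi ↦ (mem_filter.mp hi).2
  have hadd : x + y ∈ commonKer f t := mem_commonKer.mpr fun i hi ↦ (mem_filter.mp hi).2
  by_cases hs : finrank K V ≤ #s
  · rw [hf.commonKer_eq_bot hs, mem_bot, sub_eq_zero] at hsub
    exact .inl hsub.symm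
  by_cases ht : finrank K V ≤ #t
  · rw [hf.commonKer_eq_bot ht, mem_bot, add_eq_zero_iff_eq_neg'] at hadd
    exact .inr hadd
  have hst : s ∪ t = univ := by
    refine eq_univ_of_forall fun i ↦ ?_
    rcases abs_eq_abs.mp (h i) with hi | hi
    · exact mem_union_left _ (mem_filter.mpr ⟨mem_univ _, by simp [hi]⟩)
    · exact mem_union_right _ (mem_filter.mpr ⟨mem_univ _, by simp [hi]⟩)
  refine absurd ?_ (hx _ (mem_image.mpr
    ⟨(s, t), mem_filter.mpr ⟨mem_univ _, not_le.mp hs, not_le.mp ht, hst⟩, rfl⟩))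
  have hmid : x = (2 : K)⁻¹ • ((x - y) + (x + y)) := by
    rw [sub_add_add_cancel, ← two_smul K x, smul_smul, inv_mul_cancel₀ two_ne_zero, one_smul]
  rw [hmid]
  exact smul_mem _ _ (add_mem (mem_sup_left hsub) (mem_sup_right hadd))

end PhaseRetrieval

theorem Matrix.linearIndependent_col_of_rank_eq_card {m n R : Type*} [Field R] [Fintype m]
    [Fintype n] {A : Matrix m n R} (h : A.rank = Fintype.card n) : LinearIndependent R A.col := by
  rw [linearIndependent_iff_card_eq_finrank_span, ← h, rank_eq_finrank_span_cols]
  rfl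

theorem Matrix.fullSpark_col_of_rank_submatrix_eq {m ι K : Type*} [Field K] [Fintype m]
    [DecidableEq m] [Fintype ι] [DecidableEq ι]
    {A : Matrix m ι K} (hι : Fintype.card ι = Fintype.card m + 1)
    (hA : ∀ i : ι, (A.submatrix id fun j : {j : ι // j ≠ i} ↦ (j : ι)).rank = Fintype.card m) :
    FullSpark fun i ↦ dotProductEquiv K m (A.col i) := by
  intro s hs
  rw [finrank_fintype_fun_eq_card] at hs
  obtain ⟨i, -, hi⟩ : ∃ i ∈ univ, i ∉ s :=
    exists_mem_notMem_of_card_lt_card (by rw [card_univ, hι]; omega)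
  have hcol := linearIndependent_col_of_rank_eq_card
    ((hA i).trans (by simp [Fintype.card_subtype_compl, hι]))
  have hne : ∀ j ∈ s, j ≠ i := fun j hj h ↦ hi (h ▸ hj)
  exact (hcol.comp _ (Subtype.map_injective (q := (· ≠ i)) hne Function.injective_id)).map' _
    (dotProductEquiv K m).ker

theorem stmt_4_general {n : ℕ} (A : Matrix (Fin n) (Fin (n + 1)) ℝ)
    (hWFS : ∀ i : Fin (n + 1),
      (A.submatrix id (fun j : {j : Fin (n + 1) // j ≠ i} => (j : Fin (n + 1)))).rank = n) :
    ∃ S : Finset (Submodule ℝ (Fin n → ℝ)), (∀ W ∈ S, W ≠ ⊤) ∧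
      ∀ x : Fin n → ℝ, (∀ W ∈ S, x ∉ W) →
        ∀ y : Fin n → ℝ,
          (∀ i, |∑ j, x j * A j i| = |∑ j, y j * A j i|) → y = x ∨ y = -x := by
  have hf : FullSpark fun i ↦ dotProductEquiv ℝ (Fin n) (A.col i) :=
    Matrix.fullSpark_col_of_rank_submatrix_eq (by simp) (by simpa using hWFS)
  refine ⟨exceptionalSubspaces _, fun W ↦ hf.ne_top_of_mem_exceptionalSubspaces (by simp),
    fun x hx y hy ↦ hf.eq_or_eq_neg_of_abs_eq hx fun i ↦ ?_⟩
  simpa [dotProduct, mul_comm] using hy i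

/-- a weak full spark n×(n+1) matrix of rank n is almost phase retrievable. -/
theorem stmt_4 {n : ℕ} (hn : 2 ≤ n) (A : Matrix (Fin n) (Fin (n + 1)) ℝ)
    (hrank : A.rank = n)
    (hWFS : ∀ i : Fin (n + 1),
      (A.submatrix id (fun j : {j : Fin (n + 1) // j ≠ i} => (j : Fin (n + 1)))).rank = n) :
    ∃ S : Finset (Submodule ℝ (Fin n → ℝ)), (∀ W ∈ S, W ≠ ⊤) ∧
      ∀ x : Fin n → ℝ, (∀ W ∈ S, x ∉ W) →
        ∀ y : Fin n → ℝ,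
          (∀ i, |∑ j, x j * A j i| = |∑ j, y j * A j i|) → y = x ∨ y = -x :=
  stmt_4_general A hWFS
end

section
/- Let A be an n×(n+1) real matrix of rank n, n ≥ 2, which is weak full spark. If s, s' ∈ {±1}^{n+1} satisfy N(A D_s) = N(A D_{s'}), then s = s' or s = -s'. (Here the one-dimensional null space of A D_s equals {t·D_s a : t ∈ ℝ} for a fixed vector a with all entries nonzero satisfying A a = 0.) -/
/-!
Since `D_s ^ 2 = 1`, a vector `x` lies in `N(A D_s)` iff `s * x ∈ N(A)`. With `a` spanning the
line `N(A)`, `s * a ∈ N(A D_s) = N(A D_{s'})` gives `s' * s * a = t • a`; as every entry of `a`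
is nonzero (deleting column `i` leaves an injective matrix), `s' i * s i = t` for all `i`, and
signs with constant pointwise product agree or are opposite.
-/

open Module

namespace Matrix

variable {K m n : Type*} [Field K] [Fintype n]

theorem rank_add_finrank_ker_mulVecLin (A : Matrix m n K) :
    A.rank + finrank K (LinearMap.ker A.mulVecLin) = Fintype.card n := by
  rw [rank, LinearMap.finrank_range_add_finrank_ker, finrank_fintype_fun_eq_card]

theorem ker_mulVecLin_eq_bot_of_rank_eq_card {A : Matrix m n K}
    (hA : A.rank = Fintype.card n) :
    LinearMap.ker A.mulVecLin = ⊥ := by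
  have := A.rank_add_finrank_ker_mulVecLin
  exact Submodule.finrank_eq_zero.mp (by omega)

theorem submatrix_mulVec_eq_mulVec_of_apply_eq_zero [DecidableEq n] (A : Matrix m n K)
    {x : n → K} {i : n} (hxi : x i = 0) :
    A.submatrix id (fun j : {j // j ≠ i} => (j : n)) *ᵥ (fun j => x j) = A *ᵥ x := by
  ext k
  simp only [mulVec, dotProduct, submatrix_apply, id]
  rw [Fintype.sum_eq_add_sum_subtype_ne _ i, hxi, mul_zero, zero_add]

theorem apply_ne_zero_of_mulVec_eq_zero [DecidableEq n] {A : Matrix m n K} {i : n}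
    (hi : LinearMap.ker (A.submatrix id (fun j : {j // j ≠ i} => (j : n))).mulVecLin = ⊥)
    {x : n → K} (hx : A *ᵥ x = 0) (hx0 : x ≠ 0) : x i ≠ 0 := by
  intro hxi
  have hrestrict : (fun j : {j // j ≠ i} => x j) ∈ LinearMap.ker
      (A.submatrix id (fun j : {j // j ≠ i} => (j : n))).mulVecLin := by
    rw [LinearMap.mem_ker, mulVecLin_apply, A.submatrix_mulVec_eq_mulVec_of_apply_eq_zero hxi, hx]
  rw [hi, Submodule.mem_bot] at hrestrict
  refine hx0 (funext fun j => ?_)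
  by_cases hj : j = i
  · rw [hj, hxi, Pi.zero_apply]
  · exact congrFun hrestrict ⟨j, hj⟩

theorem mul_diagonal_mulVec [DecidableEq n] (A : Matrix m n K) (s x : n → K) :
    (A * diagonal s) *ᵥ x = A *ᵥ (s * x) := by
  rw [← mulVec_mulVec]
  congr 1
  ext i
  rw [mulVec_diagonal, Pi.mul_apply]

theorem mem_ker_mul_diagonal_iff [DecidableEq n] (A : Matrix m n K) (s x : n → K) :
    x ∈ LinearMap.ker (A * diagonal s).mulVecLin ↔ s * x ∈ LinearMap.ker A.mulVecLin := by
  rw [LinearMap.mem_ker, LinearMap.mem_ker, mulVecLin_apply, mulVecLin_apply, mul_diagonal_mulVec]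

end Matrix

theorem eq_or_eq_neg_of_mul_eq_const {R ι : Type*} [CommRing R] {s s' : ι → R} {t : R}
    (hs : ∀ i, s i = 1 ∨ s i = -1) (hs' : ∀ i, s' i = 1 ∨ s' i = -1)
    (h : ∀ i, s' i * s i = t) : s = s' ∨ s = -s' := by
  have hsq : ∀ i, s' i * s' i = 1 := fun i => by rcases hs' i with h1 | h1 <;> rw [h1] <;> ring
  by_cases hagree : ∃ i, s i = s' i
  · obtain ⟨i, hi⟩ := hagree
    have ht : t = 1 := by rw [← h i, hi, hsq]
    left
    funext j
    calc s j = s' j * (s' j * s j) := by rw [← mul_assoc, hsq, one_mul]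
      _ = s' j := by rw [h, ht, mul_one]
  · push Not at hagree
    right
    funext j
    have := hagree j
    rcases hs j with h1 | h1 <;> rcases hs' j with h2 | h2 <;> simp_all

open Matrix in
theorem stmt_5_general {n : ℕ} (A : Matrix (Fin n) (Fin (n + 1)) ℝ)
    (hrank : A.rank = n)
    (hWFS : ∀ i : Fin (n + 1),
      (A.submatrix id (fun j : {j : Fin (n + 1) // j ≠ i} => (j : Fin (n + 1)))).rank = n)
    (s s' : Fin (n + 1) → ℝ)
    (hs : ∀ i, s i = 1 ∨ s i = -1) (hs' : ∀ i, s' i = 1 ∨ s' i = -1)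
    (hker : LinearMap.ker (Matrix.mulVecLin (A * Matrix.diagonal s)) =
      LinearMap.ker (Matrix.mulVecLin (A * Matrix.diagonal s'))) :
    s = s' ∨ s = -s' := by
  have hdim : finrank ℝ (LinearMap.ker A.mulVecLin) = 1 := by
    have := A.rank_add_finrank_ker_mulVecLin
    rw [hrank, Fintype.card_fin] at this
    omega
  obtain ⟨a, haA, ha0⟩ := Submodule.exists_mem_ne_zero_of_ne_bot
    (Submodule.one_le_finrank_iff.mp hdim.ge)
  have ha : ∀ i, a i ≠ 0 := fun i => apply_ne_zero_of_mulVec_eq_zero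
    (ker_mulVecLin_eq_bot_of_rank_eq_card (by simpa using hWFS i)) haA ha0
  have hss : s * s = 1 := funext fun i => by rcases hs i with h | h <;> simp [h]
  have hsa : s * a ∈ LinearMap.ker (A * diagonal s).mulVecLin := by
    rwa [mem_ker_mul_diagonal_iff, ← mul_assoc, hss, one_mul]
  rw [hker, mem_ker_mul_diagonal_iff, eq_span_singleton_of_mem_of_finrank_eq_one hdim haA ha0,
    Submodule.mem_span_singleton] at hsa
  obtain ⟨t, ht⟩ := hsa
  refine eq_or_eq_neg_of_mul_eq_const hs hs' (t := t) fun i => mul_right_cancel₀ (ha i) ?_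
  simpa [mul_assoc] using (congrFun ht i).symm

/-- for a weak full spark n×(n+1) matrix of rank n, equal null spaces of
`A Dₛ` and `A Dₛ'` force `s = s'` or `s = -s'`. -/
theorem stmt_5 {n : ℕ} (hn : 2 ≤ n) (A : Matrix (Fin n) (Fin (n + 1)) ℝ)
    (hrank : A.rank = n)
    (hWFS : ∀ i : Fin (n + 1),
      (A.submatrix id (fun j : {j : Fin (n + 1) // j ≠ i} => (j : Fin (n + 1)))).rank = n)
    (s s' : Fin (n + 1) → ℝ)
    (hs : ∀ i, s i = 1 ∨ s i = -1) (hs' : ∀ i, s' i = 1 ∨ s' i = -1)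
    (hker : LinearMap.ker (Matrix.mulVecLin (A * Matrix.diagonal s)) =
      LinearMap.ker (Matrix.mulVecLin (A * Matrix.diagonal s'))) :
    s = s' ∨ s = -s' :=
  stmt_5_general A hrank hWFS s s' hs hs' hker
end

section
/- Let m ≥ 1 and let φ_m be the B-spline of degree m (the (m+1)-fold convolution of the indicator of [0,1]). A function f = Σ_{n=N_1-m}^{N_2-1} c_n φ_m(·−n), restricted to [N_1, N_2], is separable (i.e., f = f_1 + f_2 with f_1, f_2 nonzero elements of the restricted spline space and f_1·f_2 ≡ 0 on [N_1,N_2]) if and only if N_2 − N_1 ≥ 2 and there exist indices n_1 < n_2 with n_2 − n_1 ≥ m + 1 such that c_{n_1} ≠ 0, c_{n_2} ≠ 0, and c_n = 0 for all n_1 < n < n_2. -/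
/-!
On a unit cell `(k, k + 1)` only the `m + 1` B-splines `φ_m(· - n)`, `k - m ≤ n ≤ k`, are active;
each of them is a polynomial there, and they are linearly independent: differentiating a vanishing
combination of the `φ_{m+1}(· - n)` (using `φ_{m+1}' = φ_m - φ_m(· - 1)`) gives a vanishing
combination of the `φ_m(· - n)` with coefficients `c_n - c_{n-1}`, so by induction the coefficients
are constant, and the partition of unity `Σ_n φ_m(x - n) = 1` forces the constant to be `0`.

If `f₁ f₂ ≡ 0`, then on every cell one of the two polynomial pieces vanishes, so by independence
the coefficients of `f₁` and `f₂` active on a common cell cannot both be nonzero: the two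
coefficient supports are at distance at least `m + 1`. Independence on `[N₁, N₂]` also gives
`c = c₁ + c₂` on the indices, and two consecutive nonzero coefficients of `c`, one from each
support, span the required gap. Conversely, cutting `c` at such a gap gives two splines with
disjoint supports, as `φ_m` vanishes outside `(0, m + 1)` when `m ≥ 1`.
-/

open MeasureTheory

/-- The degree-`m` B-spline: `(m+1)`-fold convolution of the indicator of `[0,1]`. -/
noncomputable def bspline : ℕ → ℝ → ℝ
  | 0 => Set.indicator (Set.Icc (0 : ℝ) 1) (fun _ => 1)
  | m + 1 => fun x => ∫ t in (0 : ℝ)..1, bspline m (x - t)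

/-- The spline `Σ_{n=N₁-m}^{N₂-1} cₙ φ_m(x-n)`. -/
noncomputable def splineFun (m : ℕ) (N₁ N₂ : ℤ) (c : ℤ → ℝ) (x : ℝ) : ℝ :=
  ∑ n ∈ Finset.Icc (N₁ - m) (N₂ - 1), c n * bspline m (x - n)

open Set Polynomial

theorem bspline_succ_apply (m : ℕ) (x : ℝ) :
    bspline (m + 1) x = ∫ t in (0 : ℝ)..1, bspline m (x - t) := rfl

theorem bspline_succ_eq_zero {m : ℕ} {x : ℝ} (h : ∀ t ∈ Ioo (0 : ℝ) 1, bspline m (x - t) = 0) :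
    bspline (m + 1) x = 0 := by
  rw [bspline_succ_apply, intervalIntegral.integral_of_le zero_le_one, integral_Ioc_eq_integral_Ioo,
    setIntegral_congr_fun measurableSet_Ioo (g := 0) h]
  simp

theorem bspline_eq_zero_of_neg : ∀ (m : ℕ) {x : ℝ}, x < 0 → bspline m x = 0
  | 0, _, hx => indicator_of_notMem (fun h => hx.not_ge h.1) _
  | m + 1, _, hx => bspline_succ_eq_zero fun _ ht => bspline_eq_zero_of_neg m (by linarith [ht.1])

theorem bspline_eq_zero_of_gt : ∀ (m : ℕ) {x : ℝ}, (m : ℝ) + 1 < x → bspline m x = 0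
  | 0, _, hx => indicator_of_notMem (fun h => by simp at hx; linarith [h.2]) _
  | m + 1, _, hx => bspline_succ_eq_zero fun _ ht =>
      bspline_eq_zero_of_gt m (by push_cast at hx; linarith [ht.2])

theorem bspline_eq_zero_of_add_one_le {m : ℕ} (hm : 1 ≤ m) {x : ℝ} (hx : (m : ℝ) + 1 ≤ x) :
    bspline m x = 0 := by
  obtain ⟨m, rfl⟩ := Nat.exists_eq_add_of_le' hm
  exact bspline_succ_eq_zero fun _ ht =>
    bspline_eq_zero_of_gt m (by push_cast at hx; linarith [ht.2])

theorem bspline_succ_eq_sub_primitive {m : ℕ}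
    (hm : ∀ a b : ℝ, IntervalIntegrable (bspline m) volume a b) (x : ℝ) :
    bspline (m + 1) x =
      (∫ s in (0 : ℝ)..x, bspline m s) - ∫ s in (0 : ℝ)..(x - 1), bspline m s := by
  rw [bspline_succ_apply, intervalIntegral.integral_comp_sub_left (bspline m) x, sub_zero,
    intervalIntegral.integral_interval_sub_left (hm 0 x) (hm 0 (x - 1))]

theorem intervalIntegrable_bspline :
    ∀ (m : ℕ) (a b : ℝ), IntervalIntegrable (bspline m) volume a b
  | 0, _, _ =>
    ((integrableOn_const (by simp)).integrable_indicator measurableSet_Icc).intervalIntegrable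
  | m + 1, a, b => by
    have hint := intervalIntegrable_bspline m
    have hF := intervalIntegral.continuous_primitive hint 0
    rw [funext (bspline_succ_eq_sub_primitive hint)]
    exact (hF.sub (hF.comp (continuous_sub_right 1))).intervalIntegrable a b

theorem sub_intCast_mem_Ioo {k : ℤ} {x : ℝ} (hx : x ∈ Ioo (k : ℝ) (k + 1)) (n : ℤ) :
    x - n ∈ Ioo ((k - n : ℤ) : ℝ) ((k - n : ℤ) + 1) := by
  push_cast
  exact ⟨by linarith [hx.1], by linarith [hx.2]⟩

theorem Polynomial.exists_derivative_eq {K : Type*} [Field K] [CharZero K] (p : K[X]) :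
    ∃ q : K[X], derivative q = p := by
  induction p using Polynomial.induction_on' with
  | add p q hp hq =>
    obtain ⟨P, rfl⟩ := hp
    obtain ⟨Q, rfl⟩ := hq
    exact ⟨P + Q, derivative_add⟩
  | monomial n a =>
    refine ⟨monomial (n + 1) (a / (n + 1)), ?_⟩
    rw [derivative_monomial, Nat.add_sub_cancel]
    congr 1
    push_cast
    field_simp

theorem exists_poly_eqOn_primitive {f : ℝ → ℝ} {p : ℝ[X]} {a b : ℝ}
    (hf : EqOn f (fun x => p.eval x) (Ioo a b)) (hfi : ∀ u v, IntervalIntegrable f volume u v)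
    (c : ℝ) : ∃ q : ℝ[X], EqOn (fun x => ∫ s in c..x, f s) (fun x => q.eval x) (Ioo a b) := by
  obtain ⟨P, hP⟩ := p.exists_derivative_eq
  refine ⟨C ((∫ s in c..a, f s) - P.eval a) + P, fun x hx => ?_⟩
  have hax : ∫ s in a..x, f s = P.eval x - P.eval a := by
    rw [intervalIntegral.integral_congr_ae (g := fun s => p.eval s)
      (Filter.Eventually.of_forall fun s hs => hf ?_)]
    · exact intervalIntegral.integral_eq_sub_of_hasDerivAt (fun s _ => hP ▸ P.hasDerivAt s)
        (p.continuous.intervalIntegrable a x)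
    · rw [uIoc_of_le hx.1.le] at hs
      exact ⟨hs.1, hs.2.trans_lt hx.2⟩
  simp only [← intervalIntegral.integral_add_adjacent_intervals (hfi c a) (hfi a x), hax,
    eval_add, eval_C]
  ring

theorem exists_poly_eqOn_bspline :
    ∀ (m : ℕ) (j : ℤ), ∃ p : ℝ[X], EqOn (bspline m) (fun x => p.eval x) (Ioo (j : ℝ) (j + 1))
  | 0, j => by
    refine ⟨C (if j = 0 then 1 else 0), fun x hx => ?_⟩
    split_ifs with hj
    · subst hj
      simp only [Int.cast_zero, zero_add] at hx
      simp [bspline, indicator_of_mem (Ioo_subset_Icc_self hx)]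
    · rcases Int.lt_or_gt_of_ne hj with hj | hj
      · have : (j : ℝ) + 1 ≤ 0 := by exact_mod_cast hj
        simpa using bspline_eq_zero_of_neg 0 (by linarith [hx.2])
      · have : (1 : ℝ) ≤ j := by exact_mod_cast hj
        simpa using bspline_eq_zero_of_gt 0 (by push_cast; linarith [hx.1])
  | m + 1, j => by
    have hint := intervalIntegrable_bspline m
    obtain ⟨q, hq⟩ := (exists_poly_eqOn_bspline m j).elim
      fun _ hp => exists_poly_eqOn_primitive hp hint 0
    obtain ⟨q', hq'⟩ := (exists_poly_eqOn_bspline m (j - 1)).elim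
      fun _ hp => exists_poly_eqOn_primitive hp hint 0
    refine ⟨q - q'.comp (X - C 1), fun x hx => ?_⟩
    have hx' : x - 1 ∈ Ioo ((j - 1 : ℤ) : ℝ) ((j - 1 : ℤ) + 1) := by
      simpa using sub_intCast_mem_Ioo hx 1
    simp only [bspline_succ_eq_sub_primitive hint, eval_sub, eval_comp, eval_X, eval_C]
    exact congr_arg₂ (· - ·) (hq hx) (hq' hx')

theorem continuousOn_bspline_Ioo (m : ℕ) (j : ℤ) :
    ContinuousOn (bspline m) (Ioo (j : ℝ) (j + 1)) := by
  obtain ⟨p, hp⟩ := exists_poly_eqOn_bspline m j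
  exact p.continuous.continuousOn.congr hp

theorem hasDerivAt_bspline_succ {m : ℕ} {j : ℤ} {x : ℝ} (hx : x ∈ Ioo (j : ℝ) (j + 1)) :
    HasDerivAt (bspline (m + 1)) (bspline m x - bspline m (x - 1)) x := by
  have hint := intervalIntegrable_bspline m
  have hF : ∀ {i : ℤ} {y : ℝ}, y ∈ Ioo (i : ℝ) (i + 1) →
      HasDerivAt (fun z => ∫ s in (0 : ℝ)..z, bspline m s) (bspline m y) y := fun hy =>
    intervalIntegral.integral_hasDerivAt_right (hint 0 _)
      ((continuousOn_bspline_Ioo m _).stronglyMeasurableAtFilter isOpen_Ioo _ hy)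
      ((continuousOn_bspline_Ioo m _).continuousAt (isOpen_Ioo.mem_nhds hy))
  have hx' : x - 1 ∈ Ioo ((j - 1 : ℤ) : ℝ) ((j - 1 : ℤ) + 1) := by
    simpa using sub_intCast_mem_Ioo hx 1
  rw [funext (bspline_succ_eq_sub_primitive hint)]
  exact (hF hx).sub ((hF hx').comp_sub_const x 1)

theorem sum_mul_bspline_eq_of_subset {m : ℕ} {k : ℤ} {x : ℝ} (hx : x ∈ Ioo (k : ℝ) (k + 1))
    {s : Finset ℤ} (hs : Finset.Icc (k - m) k ⊆ s) (a : ℤ → ℝ) :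
    ∑ n ∈ s, a n * bspline m (x - n) = ∑ n ∈ Finset.Icc (k - m) k, a n * bspline m (x - n) := by
  refine (Finset.sum_subset hs fun n _ hn => ?_).symm
  rw [Finset.mem_Icc, not_and_or, not_le, not_le] at hn
  rcases hn with hn | hn
  · have : (n : ℝ) + m + 1 ≤ k := by exact_mod_cast (by omega : n + m + 1 ≤ k)
    rw [bspline_eq_zero_of_gt m (by linarith [hx.1]), mul_zero]
  · have : (k : ℝ) + 1 ≤ n := by exact_mod_cast hn
    rw [bspline_eq_zero_of_neg m (by linarith [hx.2]), mul_zero]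

theorem sum_bspline_eq_one :
    ∀ (m : ℕ) {k : ℤ} {x : ℝ}, x ∈ Ioo (k : ℝ) (k + 1) →
      ∑ n ∈ Finset.Icc (k - m) k, bspline m (x - n) = 1
  | 0, k, x, hx => by
    have : x - k ∈ Icc (0 : ℝ) 1 := ⟨by linarith [hx.1], by linarith [hx.2]⟩
    simp [bspline, indicator_of_mem this]
  | m + 1, k, x, hx => by
    have hone : ∀ t ∈ Ioc (0 : ℝ) 1, t ≠ x - k →
        ∑ n ∈ Finset.Icc (k - (m + 1 : ℕ)) k, bspline m (x - n - t) = 1 := by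
      intro t ht htx
      obtain ⟨j, hj, hy⟩ : ∃ j : ℤ, (j = k ∨ j = k - 1) ∧ x - t ∈ Ioo (j : ℝ) (j + 1) := by
        rcases lt_or_gt_of_ne (sub_ne_zero.2 htx) with h | h
        · exact ⟨k, Or.inl rfl, by linarith, by linarith [ht.1, hx.2]⟩
        · exact ⟨k - 1, Or.inr rfl, by push_cast; linarith [ht.2, hx.1], by push_cast; linarith⟩
      have hs : Finset.Icc (j - m) j ⊆ Finset.Icc (k - (m + 1 : ℕ)) k := by
        intro n
        simp only [Finset.mem_Icc]
        omega
      simp_rw [sub_right_comm x]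
      simpa [sum_bspline_eq_one m hy] using sum_mul_bspline_eq_of_subset hy hs 1
    calc ∑ n ∈ Finset.Icc (k - (m + 1 : ℕ)) k, bspline (m + 1) (x - n)
        = ∫ t in (0 : ℝ)..1, ∑ n ∈ Finset.Icc (k - (m + 1 : ℕ)) k, bspline m (x - n - t) := by
          simp only [bspline_succ_apply]
          refine (intervalIntegral.integral_finsetSum fun n _ => ?_).symm
          simpa using (intervalIntegrable_bspline m (x - n) (x - n - 1)).comp_sub_left (x - n)
      _ = ∫ _ in (0 : ℝ)..1, (1 : ℝ) := intervalIntegral.integral_congr_ae <| by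
          filter_upwards [(countable_singleton (x - k)).ae_notMem volume] with t ht hmem
          exact hone t (by rwa [uIoc_of_le zero_le_one] at hmem) ht
      _ = 1 := by simp

theorem Int.eq_of_forall_eq_sub_one {α : Type*} {a : ℤ → α} {lo hi : ℤ}
    (h : ∀ n, lo < n → n ≤ hi → a n = a (n - 1)) : ∀ n, lo ≤ n → n ≤ hi → a n = a hi := by
  intro n hlo hhi
  induction n, hhi using Int.leInductionDown with
  | base => rfl
  | pred n hn ih => exact (h n (by omega) hn).symm.trans (ih (by omega))

theorem sum_mul_bspline_sub_shift {m : ℕ} {k : ℤ} {x : ℝ} (hx : x ∈ Ioo (k : ℝ) (k + 1))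
    (a : ℤ → ℝ) :
    ∑ n ∈ Finset.Icc (k - (m + 1 : ℕ)) k, a n * (bspline m (x - n) - bspline m (x - n - 1)) =
      ∑ n ∈ Finset.Icc (k - m) k, (a n - a (n - 1)) * bspline m (x - n) := by
  have hshift : ∑ n ∈ Finset.Icc (k - (m + 1 : ℕ)) k, a n * bspline m (x - n - 1) =
      ∑ n ∈ Finset.Icc (k - m) (k + 1), a (n - 1) * bspline m (x - n) := by
    rw [show k - m = k - (m + 1 : ℕ) + 1 by push_cast; ring, ← Finset.map_add_right_Icc,
      Finset.sum_map]
    simp only [addRightEmbedding_apply, add_sub_cancel_right, Int.cast_add, Int.cast_one, sub_sub]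
  simp only [mul_sub, Finset.sum_sub_distrib, sub_mul, hshift]
  rw [sum_mul_bspline_eq_of_subset hx (s := Finset.Icc (k - (m + 1 : ℕ)) k) ?_ a,
    sum_mul_bspline_eq_of_subset hx (s := Finset.Icc (k - m) (k + 1)) ?_]
  all_goals
    intro n
    simp only [Finset.mem_Icc]
    omega

theorem sum_sub_mul_bspline_eqOn_zero {m : ℕ} {k : ℤ} {a : ℤ → ℝ}
    (h : EqOn (fun x => ∑ n ∈ Finset.Icc (k - (m + 1 : ℕ)) k, a n * bspline (m + 1) (x - n)) 0
      (Ioo (k : ℝ) (k + 1))) :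
    EqOn (fun x => ∑ n ∈ Finset.Icc (k - m) k, (a n - a (n - 1)) * bspline m (x - n)) 0
      (Ioo (k : ℝ) (k + 1)) := by
  intro x hx
  have hderiv := HasDerivAt.fun_sum (u := Finset.Icc (k - (m + 1 : ℕ)) k) fun n _ =>
    ((hasDerivAt_bspline_succ (m := m) (sub_intCast_mem_Ioo hx n)).comp_sub_const x _).const_mul
      (a n)
  have hzero : HasDerivAt (fun x => ∑ n ∈ Finset.Icc (k - (m + 1 : ℕ)) k,
      a n * bspline (m + 1) (x - n)) 0 x :=
    (hasDerivAt_const x 0).congr_of_eventuallyEq (h.eventuallyEq_of_mem (isOpen_Ioo.mem_nhds hx))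
  simp only [Pi.zero_apply, ← sum_mul_bspline_sub_shift hx]
  exact hderiv.unique hzero

theorem eq_zero_of_forall_eq_of_sum_mul_bspline_eqOn_zero {m : ℕ} {k : ℤ} {a : ℤ → ℝ}
    (hconst : ∀ n ∈ Finset.Icc (k - m) k, a n = a k)
    (h : EqOn (fun x => ∑ n ∈ Finset.Icc (k - m) k, a n * bspline m (x - n)) 0
      (Ioo (k : ℝ) (k + 1))) :
    ∀ n ∈ Finset.Icc (k - m) k, a n = 0 := by
  have hx : (k : ℝ) + 1 / 2 ∈ Ioo (k : ℝ) (k + 1) := ⟨by linarith, by linarith⟩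
  have hk : a k = 0 := calc
    a k = a k * ∑ n ∈ Finset.Icc (k - m) k, bspline m (k + 1 / 2 - n) := by
      rw [sum_bspline_eq_one m hx, mul_one]
    _ = ∑ n ∈ Finset.Icc (k - m) k, a n * bspline m (k + 1 / 2 - n) := by
      rw [Finset.mul_sum]
      exact Finset.sum_congr rfl fun n hn => by rw [hconst n hn]
    _ = 0 := h hx
  intro n hn
  rw [hconst n hn, hk]

theorem eq_zero_of_sum_mul_bspline_eqOn_zero (m : ℕ) {k : ℤ} {a : ℤ → ℝ}
    (h : EqOn (fun x => ∑ n ∈ Finset.Icc (k - m) k, a n * bspline m (x - n)) 0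
      (Ioo (k : ℝ) (k + 1))) :
    ∀ n ∈ Finset.Icc (k - m) k, a n = 0 := by
  induction m generalizing a with
  | zero => exact eq_zero_of_forall_eq_of_sum_mul_bspline_eqOn_zero (by simp) h
  | succ m ih =>
    have hdiff := ih (sum_sub_mul_bspline_eqOn_zero h)
    refine eq_zero_of_forall_eq_of_sum_mul_bspline_eqOn_zero (fun n hn => ?_) h
    rw [Finset.mem_Icc] at hn
    refine Int.eq_of_forall_eq_sub_one (fun n h₁ h₂ => ?_) n hn.1 hn.2
    exact sub_eq_zero.1 (hdiff n (Finset.mem_Icc.2 ⟨by push_cast at h₁; omega, h₂⟩))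

theorem exists_poly_eqOn_sum_mul_bspline (m : ℕ) (k : ℤ) (s : Finset ℤ) (a : ℤ → ℝ) :
    ∃ p : ℝ[X], EqOn (fun x => ∑ n ∈ s, a n * bspline m (x - n)) (fun x => p.eval x)
      (Ioo (k : ℝ) (k + 1)) := by
  choose P hP using exists_poly_eqOn_bspline m
  refine ⟨∑ n ∈ s, C (a n) * (P (k - n)).comp (X - C (n : ℝ)), fun x hx => ?_⟩
  simp only [eval_finsetSum, eval_mul, eval_C, eval_comp, eval_sub, eval_X]
  exact Finset.sum_congr rfl fun n _ => by rw [hP _ (sub_intCast_mem_Ioo hx n)]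

theorem Polynomial.eqOn_zero_or_eqOn_zero_of_mul_eq_zero {R : Type*} [CommRing R] [IsDomain R]
    {f g : R → R} {s : Set R} (hs : s.Infinite) {p q : R[X]} (hf : EqOn f (fun x => p.eval x) s)
    (hg : EqOn g (fun x => q.eval x) s) (h : ∀ x ∈ s, f x * g x = 0) :
    EqOn f 0 s ∨ EqOn g 0 s := by
  have hpq : p * q = 0 := eq_zero_of_infinite_isRoot _ <| hs.mono fun x hx => by
    simpa [IsRoot, ← hf hx, ← hg hx] using h x hx
  rcases mul_eq_zero.1 hpq with rfl | rfl
  · exact Or.inl fun x hx => by simpa using hf hx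
  · exact Or.inr fun x hx => by simpa using hg hx

theorem Finset.exists_adjacent_of_ne {α : Type*} [LinearOrder α] {A B : Finset α} {a b : α}
    (ha : a ∈ A) (hb : b ∈ B) (hab : a ≠ b) :
    ∃ x y, x < y ∧ (x ∈ A ∧ y ∈ B ∨ x ∈ B ∧ y ∈ A) ∧ ∀ z, x < z → z < y → z ∉ A ∧ z ∉ B := by
  wlog hlt : a < b generalizing A B a b
  · obtain ⟨x, y, hxy, hmem, hgap⟩ := this hb ha hab.symm (hab.symm.lt_of_le (not_lt.1 hlt))
    exact ⟨x, y, hxy, hmem.symm, fun z hxz hzy => (hgap z hxz hzy).symm⟩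
  have hB : (B.filter (a < ·)).Nonempty := ⟨b, mem_filter.2 ⟨hb, hlt⟩⟩
  obtain ⟨hyB, hay⟩ := mem_filter.1 ((B.filter (a < ·)).min'_mem hB)
  set y := (B.filter (a < ·)).min' hB
  have hA : (A.filter (· < y)).Nonempty := ⟨a, mem_filter.2 ⟨ha, hay⟩⟩
  obtain ⟨hxA, hxy⟩ := mem_filter.1 ((A.filter (· < y)).max'_mem hA)
  have hax : a ≤ (A.filter (· < y)).max' hA := le_max' _ a (mem_filter.2 ⟨ha, hay⟩)
  refine ⟨_, y, hxy, Or.inl ⟨hxA, hyB⟩, fun z hxz hzy => ⟨fun hz => ?_, fun hz => ?_⟩⟩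
  · exact (le_max' _ z (mem_filter.2 ⟨hz, hzy⟩)).not_gt hxz
  · exact (min'_le _ z (mem_filter.2 ⟨hz, hax.trans_lt hxz⟩)).not_gt hzy

section splineFun

variable {m : ℕ} {N₁ N₂ : ℤ}

theorem splineFun_add (a b : ℤ → ℝ) (x : ℝ) :
    splineFun m N₁ N₂ (a + b) x = splineFun m N₁ N₂ a x + splineFun m N₁ N₂ b x := by
  simp only [splineFun, Pi.add_apply, add_mul, Finset.sum_add_distrib]

theorem splineFun_sub (a b : ℤ → ℝ) (x : ℝ) :
    splineFun m N₁ N₂ (a - b) x = splineFun m N₁ N₂ a x - splineFun m N₁ N₂ b x := by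
  simp only [splineFun, Pi.sub_apply, sub_mul, Finset.sum_sub_distrib]

theorem Ioo_subset_Icc_of_le_of_lt {k : ℤ} (hk₁ : N₁ ≤ k) (hk₂ : k < N₂) :
    Ioo (k : ℝ) (k + 1) ⊆ Icc (N₁ : ℝ) N₂ := by
  have h₁ : (N₁ : ℝ) ≤ k := by exact_mod_cast hk₁
  have h₂ : (k : ℝ) + 1 ≤ N₂ := by exact_mod_cast hk₂
  exact Ioo_subset_Icc_self.trans (Icc_subset_Icc h₁ h₂)

theorem exists_cell_of_abs_sub_le (hN : N₁ < N₂) {p q : ℤ}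
    (hp : p ∈ Finset.Icc (N₁ - m) (N₂ - 1)) (hq : q ∈ Finset.Icc (N₁ - m) (N₂ - 1))
    (hpq : |p - q| ≤ m) :
    ∃ k, N₁ ≤ k ∧ k < N₂ ∧ p ∈ Finset.Icc (k - m) k ∧ q ∈ Finset.Icc (k - m) k := by
  rw [abs_le] at hpq
  simp only [Finset.mem_Icc] at hp hq ⊢
  exact ⟨max (max p q) N₁, by omega⟩

theorem coeff_eq_zero_of_splineFun_eqOn_zero_Ioo {k : ℤ} (hk₁ : N₁ ≤ k) (hk₂ : k < N₂)
    {a : ℤ → ℝ} (h : EqOn (splineFun m N₁ N₂ a) 0 (Ioo (k : ℝ) (k + 1))) :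
    ∀ n ∈ Finset.Icc (k - m) k, a n = 0 :=
  eq_zero_of_sum_mul_bspline_eqOn_zero m fun x hx =>
    (sum_mul_bspline_eq_of_subset hx (fun n => by simp only [Finset.mem_Icc]; omega) a).symm.trans
      (h hx)

theorem coeff_eq_zero_of_splineFun_eqOn_zero (hN : N₁ < N₂) {a : ℤ → ℝ}
    (h : EqOn (splineFun m N₁ N₂ a) 0 (Icc (N₁ : ℝ) N₂)) :
    ∀ n ∈ Finset.Icc (N₁ - m) (N₂ - 1), a n = 0 := by
  intro n hn
  obtain ⟨k, hk₁, hk₂, hnk, -⟩ := exists_cell_of_abs_sub_le hN hn hn (by simp)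
  exact coeff_eq_zero_of_splineFun_eqOn_zero_Ioo hk₁ hk₂
    (h.mono (Ioo_subset_Icc_of_le_of_lt hk₁ hk₂)) n hnk

theorem exists_splineFun_ne_zero_iff (hN : N₁ < N₂) {a : ℤ → ℝ} :
    (∃ x ∈ Icc (N₁ : ℝ) N₂, splineFun m N₁ N₂ a x ≠ 0) ↔
      ∃ n ∈ Finset.Icc (N₁ - m) (N₂ - 1), a n ≠ 0 := by
  constructor
  · rintro ⟨x, -, hx⟩
    obtain ⟨n, hn, hne⟩ := Finset.exists_ne_zero_of_sum_ne_zero hx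
    exact ⟨n, hn, left_ne_zero_of_mul hne⟩
  · intro ⟨n, hn, hne⟩
    by_contra! h
    exact hne (coeff_eq_zero_of_splineFun_eqOn_zero hN h n hn)

theorem add_one_le_abs_sub_of_splineFun_mul_eq_zero (hN : N₁ < N₂) {a b : ℤ → ℝ}
    (h : ∀ x ∈ Icc (N₁ : ℝ) N₂, splineFun m N₁ N₂ a x * splineFun m N₁ N₂ b x = 0) {p q : ℤ}
    (hp : p ∈ Finset.Icc (N₁ - m) (N₂ - 1)) (hq : q ∈ Finset.Icc (N₁ - m) (N₂ - 1))
    (ha : a p ≠ 0) (hb : b q ≠ 0) : (m : ℤ) + 1 ≤ |p - q| := by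
  by_contra! hpq
  obtain ⟨k, hk₁, hk₂, hpk, hqk⟩ := exists_cell_of_abs_sub_le hN hp hq (Int.lt_add_one_iff.1 hpq)
  obtain ⟨P, hP⟩ := exists_poly_eqOn_sum_mul_bspline m k (Finset.Icc (N₁ - m) (N₂ - 1)) a
  obtain ⟨Q, hQ⟩ := exists_poly_eqOn_sum_mul_bspline m k (Finset.Icc (N₁ - m) (N₂ - 1)) b
  rcases eqOn_zero_or_eqOn_zero_of_mul_eq_zero (Ioo_infinite (by linarith)) hP hQ
    (fun x hx => h x (Ioo_subset_Icc_of_le_of_lt hk₁ hk₂ hx)) with h0 | h0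
  · exact ha (coeff_eq_zero_of_splineFun_eqOn_zero_Ioo hk₁ hk₂ h0 p hpk)
  · exact hb (coeff_eq_zero_of_splineFun_eqOn_zero_Ioo hk₁ hk₂ h0 q hqk)

theorem splineFun_eq_zero_of_lt {a : ℤ → ℝ} {b : ℤ} (ha : ∀ n < b, a n = 0) {x : ℝ}
    (hx : x < b) : splineFun m N₁ N₂ a x = 0 := by
  refine Finset.sum_eq_zero fun n _ => ?_
  rcases lt_or_ge n b with hn | hn
  · rw [ha n hn, zero_mul]
  · have : (b : ℝ) ≤ n := by exact_mod_cast hn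
    rw [bspline_eq_zero_of_neg m (by linarith), mul_zero]

theorem splineFun_eq_zero_of_add_one_le (hm : 1 ≤ m) {a : ℤ → ℝ} {b : ℤ}
    (ha : ∀ n, b < n → a n = 0) {x : ℝ} (hx : b + m + 1 ≤ x) : splineFun m N₁ N₂ a x = 0 := by
  refine Finset.sum_eq_zero fun n _ => ?_
  rcases lt_or_ge b n with hn | hn
  · rw [ha n hn, zero_mul]
  · have : (n : ℝ) ≤ b := by exact_mod_cast hn
    rw [bspline_eq_zero_of_add_one_le hm (by linarith), mul_zero]

end splineFun

def SplineSeparable (m : ℕ) (N₁ N₂ : ℤ) (c : ℤ → ℝ) : Prop :=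
  ∃ c₁ c₂ : ℤ → ℝ,
    (∀ x ∈ Icc (N₁ : ℝ) N₂,
      splineFun m N₁ N₂ c x = splineFun m N₁ N₂ c₁ x + splineFun m N₁ N₂ c₂ x) ∧
    (∃ x ∈ Icc (N₁ : ℝ) N₂, splineFun m N₁ N₂ c₁ x ≠ 0) ∧
    (∃ x ∈ Icc (N₁ : ℝ) N₂, splineFun m N₁ N₂ c₂ x ≠ 0) ∧
    (∀ x ∈ Icc (N₁ : ℝ) N₂, splineFun m N₁ N₂ c₁ x * splineFun m N₁ N₂ c₂ x = 0)

section separable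

variable {m : ℕ} {N₁ N₂ : ℤ} {c : ℤ → ℝ}

theorem SplineSeparable.exists_gap (hN : N₁ < N₂) (h : SplineSeparable m N₁ N₂ c) :
    ∃ n₁ n₂ : ℤ, N₁ - m ≤ n₁ ∧ n₂ ≤ N₂ - 1 ∧ (m : ℤ) + 1 ≤ n₂ - n₁ ∧
      c n₁ ≠ 0 ∧ c n₂ ≠ 0 ∧ ∀ n : ℤ, n₁ < n → n < n₂ → c n = 0 := by
  obtain ⟨c₁, c₂, hsum, hne₁, hne₂, hprod⟩ := h
  set R := Finset.Icc (N₁ - m) (N₂ - 1)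
  have hadd : ∀ n ∈ R, c n = c₁ n + c₂ n := fun n hn => sub_eq_zero.1 <|
    coeff_eq_zero_of_splineFun_eqOn_zero hN (a := c - (c₁ + c₂))
      (fun x hx => by simp [splineFun_sub, splineFun_add, hsum x hx]) n hn
  have hsep : ∀ {p q}, p ∈ R → q ∈ R → c₁ p ≠ 0 → c₂ q ≠ 0 → (m : ℤ) + 1 ≤ |p - q| :=
    add_one_le_abs_sub_of_splineFun_mul_eq_zero hN hprod
  have hdisj : ∀ n ∈ R, c₁ n = 0 ∨ c₂ n = 0 := by
    intro n hn
    by_contra! h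
    have := hsep hn hn h.1 h.2
    simp at this
    omega
  have hc : ∀ n ∈ R, c₁ n ≠ 0 ∨ c₂ n ≠ 0 → c n ≠ 0 := by
    intro n hn h
    rw [hadd n hn]
    rcases hdisj n hn with h0 | h0 <;> simp_all
  obtain ⟨p, hp, hp₁⟩ := (exists_splineFun_ne_zero_iff hN).1 hne₁
  obtain ⟨q, hq, hq₂⟩ := (exists_splineFun_ne_zero_iff hN).1 hne₂
  have hpq : p ≠ q := by
    rintro rfl
    rcases hdisj p hp with h | h <;> contradiction
  obtain ⟨n₁, n₂, hlt, hmem, hbetween⟩ := Finset.exists_adjacent_of_ne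
    (A := R.filter (c₁ · ≠ 0)) (B := R.filter (c₂ · ≠ 0))
    (Finset.mem_filter.2 ⟨hp, hp₁⟩) (Finset.mem_filter.2 ⟨hq, hq₂⟩) hpq
  simp only [Finset.mem_filter] at hmem hbetween
  have hR₁ : n₁ ∈ R := by tauto
  have hR₂ : n₂ ∈ R := by tauto
  have hgap : (m : ℤ) + 1 ≤ |n₂ - n₁| := by
    rcases hmem with ⟨⟨-, h₁⟩, -, h₂⟩ | ⟨⟨-, h₂⟩, -, h₁⟩
    · rw [abs_sub_comm]; exact hsep hR₁ hR₂ h₁ h₂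
    · exact hsep hR₂ hR₁ h₁ h₂
  rw [abs_of_pos (sub_pos.2 hlt)] at hgap
  refine ⟨n₁, n₂, (Finset.mem_Icc.1 hR₁).1, (Finset.mem_Icc.1 hR₂).2, hgap,
    hc n₁ hR₁ (by tauto), hc n₂ hR₂ (by tauto), fun n h₁ h₂ => ?_⟩
  have hR : n ∈ R := by simp only [R, Finset.mem_Icc] at hR₁ hR₂ ⊢; omega
  obtain ⟨h₁', h₂'⟩ := hbetween n h₁ h₂
  simp only [hR, true_and, not_not] at h₁' h₂'
  rw [hadd n hR, h₁', h₂', add_zero]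

theorem splineSeparable_of_gap (hm : 1 ≤ m) (hN : N₁ < N₂) {n₁ n₂ : ℤ} (h₁ : N₁ - m ≤ n₁)
    (h₂ : n₂ ≤ N₂ - 1) (hgap : (m : ℤ) + 1 ≤ n₂ - n₁) (hc₁ : c n₁ ≠ 0) (hc₂ : c n₂ ≠ 0)
    (hmid : ∀ n : ℤ, n₁ < n → n < n₂ → c n = 0) : SplineSeparable m N₁ N₂ c := by
  classical
  set c₁ : ℤ → ℝ := fun n => if n ≤ n₁ then c n else 0
  have hlow : ∀ n < n₂, (c - c₁) n = 0 := by
    intro n hn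
    by_cases h : n ≤ n₁
    · simp [c₁, h]
    · simp [c₁, h, hmid n (not_le.1 h) hn]
  refine ⟨c₁, c - c₁, fun x _ => by rw [← splineFun_add, add_sub_cancel], ?_, ?_, fun x _ => ?_⟩
  · exact (exists_splineFun_ne_zero_iff hN).2
      ⟨n₁, Finset.mem_Icc.2 ⟨h₁, by omega⟩, by simpa [c₁] using hc₁⟩
  · exact (exists_splineFun_ne_zero_iff hN).2
      ⟨n₂, Finset.mem_Icc.2 ⟨by omega, h₂⟩, by simpa [c₁, show ¬n₂ ≤ n₁ by omega] using hc₂⟩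
  · rcases lt_or_ge x n₂ with hx | hx
    · rw [splineFun_eq_zero_of_lt hlow hx, mul_zero]
    · have : (n₁ : ℝ) + m + 1 ≤ n₂ := by exact_mod_cast (by omega : n₁ + m + 1 ≤ n₂)
      have hhigh : ∀ n, n₁ < n → c₁ n = 0 := fun n hn => by simp [c₁, not_le.2 hn]
      rw [splineFun_eq_zero_of_add_one_le hm hhigh (by linarith), zero_mul]

end separable

/-- characterization of separable functions in the restricted spline space. -/
theorem stmt_6 (m : ℕ) (hm : 1 ≤ m) (N₁ N₂ : ℤ) (hN : N₁ < N₂) (c : ℤ → ℝ) :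
    (∃ c₁ c₂ : ℤ → ℝ,
      (∀ x ∈ Set.Icc (N₁ : ℝ) N₂,
        splineFun m N₁ N₂ c x = splineFun m N₁ N₂ c₁ x + splineFun m N₁ N₂ c₂ x) ∧
      (∃ x ∈ Set.Icc (N₁ : ℝ) N₂, splineFun m N₁ N₂ c₁ x ≠ 0) ∧
      (∃ x ∈ Set.Icc (N₁ : ℝ) N₂, splineFun m N₁ N₂ c₂ x ≠ 0) ∧
      (∀ x ∈ Set.Icc (N₁ : ℝ) N₂, splineFun m N₁ N₂ c₁ x * splineFun m N₁ N₂ c₂ x = 0)) ↔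
    (2 ≤ N₂ - N₁ ∧ ∃ n₁ n₂ : ℤ, N₁ - m ≤ n₁ ∧ n₂ ≤ N₂ - 1 ∧ (m : ℤ) + 1 ≤ n₂ - n₁ ∧
      c n₁ ≠ 0 ∧ c n₂ ≠ 0 ∧ ∀ n : ℤ, n₁ < n → n < n₂ → c n = 0) := by
  constructor
  · intro h
    obtain ⟨n₁, n₂, h₁, h₂, hgap, hc₁, hc₂, hmid⟩ := SplineSeparable.exists_gap hN h
    exact ⟨by omega, n₁, n₂, h₁, h₂, hgap, hc₁, hc₂, hmid⟩
  · rintro ⟨-, n₁, n₂, h₁, h₂, hgap, hc₁, hc₂, hmid⟩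
    exact splineSeparable_of_gap hm hN h₁ h₂ hgap hc₁ hc₂ hmid
end

section
/- Let N_1 < N_2 be integers and E ⊂ [N_1, N_2] a finite set of distinct points with #E ≥ N_2 − N_1 + m. Then there exist integers n_1, n_2 ∈ [N_1, N_2] with n_1 < n_2 such that E ∩ [n_1, n_2] is a sampling set for V_m|_{[n_1,n_2]}, i.e., every f ∈ V_m is uniquely determined on [n_1, n_2] by its values on E ∩ [n_1, n_2]. -/
/-!
Call an integer interval `[a, b]` *heavy* if it contains at least `b - a + m` points of `E`. By
hypothesis `[N₁, N₂]` is heavy, so it contains a heavy integer subinterval `[a, b]`, `a < b`, none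
of whose shorter nondegenerate integer subintervals is heavy. Each Schönberg–Whitney condition for
`E ∩ [a, b]` then follows by covering `[a, b]` with the interval in question and at most two
shorter integer subintervals, which carry at most `length + m` points each by minimality (singletons
carry at most `1 ≤ m` points).
-/

/-- Schönberg–Whitney characterization of (local) sampling sets for the spline space
`V_m|_{[a,b]}`, taken as the definition. -/
def IsSamplingSet (m a b : ℤ) (F : Set ℝ) : Prop :=
  (b - a + m ≤ (F.ncard : ℤ)) ∧
  (∀ k : ℤ, 0 ≤ k → k ≤ b - a → k ≤ ((F ∩ Set.Ico (a : ℝ) ((a : ℝ) + k)).ncard : ℤ)) ∧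
  (∀ k : ℤ, 0 ≤ k → k ≤ b - a → k ≤ ((F ∩ Set.Ioc ((b : ℝ) - k) (b : ℝ)).ncard : ℤ)) ∧
  (∀ c d : ℤ, a ≤ c → c < d → d ≤ b →
    d - c - m ≤ ((F ∩ Set.Ioo (c : ℝ) (d : ℝ)).ncard : ℤ))

open Set

theorem ncard_inter_le_of_subset_union {α : Type*} {s S T U : Set α} (hs : s.Finite)
    (h : S ⊆ T ∪ U) : (s ∩ S).ncard ≤ (s ∩ T).ncard + (s ∩ U).ncard :=
  calc (s ∩ S).ncard ≤ (s ∩ T ∪ s ∩ U).ncard :=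
        ncard_le_ncard (inter_union_distrib_left s T U ▸ inter_subset_inter_right s h)
          ((hs.subset inter_subset_left).union (hs.subset inter_subset_left))
    _ ≤ (s ∩ T).ncard + (s ∩ U).ncard := ncard_union_le _ _

def IsHeavyInterval (s : Set ℝ) (m a b : ℤ) : Prop :=
  b - a + m ≤ ((s ∩ Icc (a : ℝ) b).ncard : ℤ)

def IsMinimalHeavyInterval (s : Set ℝ) (m a b : ℤ) : Prop :=
  a < b ∧ IsHeavyInterval s m a b ∧
    ∀ c d : ℤ, a ≤ c → c < d → d ≤ b → d - c < b - a → ¬ IsHeavyInterval s m c d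

theorem exists_minimalHeavyInterval_le (s : Set ℝ) (m : ℤ) {a b : ℤ} (hab : a < b)
    (hheavy : IsHeavyInterval s m a b) :
    ∃ c d : ℤ, a ≤ c ∧ d ≤ b ∧ IsMinimalHeavyInterval s m c d := by
  induction hn : (b - a).toNat using Nat.strong_induction_on generalizing a b with
  | _ n ih =>
    by_cases hmin : ∀ c d : ℤ, a ≤ c → c < d → d ≤ b → d - c < b - a → ¬ IsHeavyInterval s m c d
    · exact ⟨a, b, le_rfl, le_rfl, hab, hheavy, hmin⟩
    · push Not at hmin
      obtain ⟨c, d, hac, hcd, hdb, hshorter, hcd_heavy⟩ := hmin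
      obtain ⟨c', d', hcc', hd'd, hmin'⟩ := ih _ (by omega) hcd hcd_heavy rfl
      exact ⟨c', d', by omega, by omega, hmin'⟩

section MinimalHeavyInterval

variable {s : Set ℝ} {m a b : ℤ}

theorem IsMinimalHeavyInterval.ncard_le (hm : 1 ≤ m)
    (h : IsMinimalHeavyInterval s m a b) {c d : ℤ} (hac : a ≤ c) (hcd : c ≤ d) (hdb : d ≤ b)
    (hshorter : d - c < b - a) : ((s ∩ Icc (c : ℝ) d).ncard : ℤ) ≤ d - c + m := by
  rcases hcd.lt_or_eq with hcd | rfl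
  · have := h.2.2 c d hac hcd hdb hshorter
    rw [IsHeavyInterval, not_le] at this
    omega
  · have : (s ∩ Icc (c : ℝ) c).ncard ≤ 1 := by
      rw [Icc_self]
      exact (ncard_le_ncard inter_subset_right (finite_singleton _)).trans
        (ncard_singleton _).le
    omega

theorem IsMinimalHeavyInterval.le_ncard_inter_Ico (hs : s.Finite) (hm : 1 ≤ m)
    (h : IsMinimalHeavyInterval s m a b) {k : ℤ} (hk0 : 0 ≤ k) (hkb : k ≤ b - a) :
    k ≤ ((s ∩ Ico (a : ℝ) (a + k)).ncard : ℤ) := by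
  obtain rfl | hk0 := hk0.eq_or_lt
  · exact Int.natCast_nonneg _
  have hheavy : b - a + m ≤ _ := h.2.1
  have hcover := ncard_inter_le_of_subset_union hs
    (Icc_subset_Ico_union_Icc (a := (a : ℝ)) (b := (a : ℝ) + k) (c := (b : ℝ)))
  have hrest := h.ncard_le hm (c := a + k) (d := b) (by omega) (by omega) le_rfl (by omega)
  push_cast at hrest
  omega

theorem IsMinimalHeavyInterval.le_ncard_inter_Ioc (hs : s.Finite) (hm : 1 ≤ m)
    (h : IsMinimalHeavyInterval s m a b) {k : ℤ} (hk0 : 0 ≤ k) (hkb : k ≤ b - a) :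
    k ≤ ((s ∩ Ioc ((b : ℝ) - k) b).ncard : ℤ) := by
  obtain rfl | hk0 := hk0.eq_or_lt
  · exact Int.natCast_nonneg _
  have hheavy : b - a + m ≤ _ := h.2.1
  have hcover := ncard_inter_le_of_subset_union hs
    (Icc_subset_Icc_union_Ioc (a := (a : ℝ)) (b := (b : ℝ) - k) (c := (b : ℝ)))
  have hrest := h.ncard_le hm (c := a) (d := b - k) le_rfl (by omega) (by omega) (by omega)
  push_cast at hrest
  omega

theorem IsMinimalHeavyInterval.le_ncard_inter_Ioo (hs : s.Finite) (hm : 1 ≤ m)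
    (h : IsMinimalHeavyInterval s m a b) {c d : ℤ} (hac : a ≤ c) (hcd : c < d) (hdb : d ≤ b) :
    d - c - m ≤ ((s ∩ Ioo (c : ℝ) d).ncard : ℤ) := by
  have hheavy : b - a + m ≤ _ := h.2.1
  have hcover := ncard_inter_le_of_subset_union hs
    (Icc_subset_Icc_union_Ioc (a := (a : ℝ)) (b := (c : ℝ)) (c := (b : ℝ)))
  have hcover' := ncard_inter_le_of_subset_union hs
    (Ioc_subset_Ioo_union_Icc (a := (c : ℝ)) (b := (d : ℝ)) (c := (b : ℝ)))
  have hleft := h.ncard_le hm (c := a) (d := c) le_rfl hac (by omega) (by omega)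
  have hright := h.ncard_le hm (c := d) (d := b) (by omega) hdb le_rfl (by omega)
  omega

theorem IsMinimalHeavyInterval.isSamplingSet (hs : s.Finite) (hm : 1 ≤ m)
    (h : IsMinimalHeavyInterval s m a b) : IsSamplingSet m a b (s ∩ Icc (a : ℝ) b) := by
  have hsub : ∀ {I : Set ℝ}, I ⊆ Icc (a : ℝ) b → s ∩ Icc (a : ℝ) b ∩ I = s ∩ I := fun hI => by
    rw [inter_assoc, inter_eq_right.mpr hI]
  refine ⟨h.2.1, fun k hk0 hkb => ?_, fun k hk0 hkb => ?_, fun c d hac hcd hdb => ?_⟩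
  · rw [hsub ((Ico_subset_Ico_right (by exact_mod_cast (by omega : a + k ≤ b))).trans
      Ico_subset_Icc_self)]
    exact h.le_ncard_inter_Ico hs hm hk0 hkb
  · rw [hsub ((Ioc_subset_Ioc_left (by exact_mod_cast (by omega : a ≤ b - k))).trans
      Ioc_subset_Icc_self)]
    exact h.le_ncard_inter_Ioc hs hm hk0 hkb
  · rw [hsub (Ioo_subset_Icc_self.trans (Icc_subset_Icc (by exact_mod_cast hac)
      (by exact_mod_cast hdb)))]
    exact h.le_ncard_inter_Ioo hs hm hac hcd hdb

end MinimalHeavyInterval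

/-- a set of at least `N₂ - N₁ + m` points in `[N₁, N₂]` contains a local
sampling set on some integer subinterval. -/
theorem stmt_9 (m : ℕ) (hm : 1 ≤ m) (N₁ N₂ : ℤ) (hN : N₁ < N₂) (E : Finset ℝ)
    (hE : (E : Set ℝ) ⊆ Set.Icc (N₁ : ℝ) N₂) (hcard : N₂ - N₁ + m ≤ (E.card : ℤ)) :
    ∃ n₁ n₂ : ℤ, N₁ ≤ n₁ ∧ n₁ < n₂ ∧ n₂ ≤ N₂ ∧
      IsSamplingSet m n₁ n₂ ((E : Set ℝ) ∩ Set.Icc (n₁ : ℝ) (n₂ : ℝ)) := by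
  have hheavy : IsHeavyInterval E m N₁ N₂ := by
    rwa [IsHeavyInterval, inter_eq_left.mpr hE, ncard_coe_finset]
  obtain ⟨n₁, n₂, hN₁, hN₂, hmin⟩ := exists_minimalHeavyInterval_le E m hN hheavy
  exact ⟨n₁, n₂, hN₁, hmin.1, hN₂, hmin.isSamplingSet E.finite_toSet (by exact_mod_cast hm)⟩
end

section
/- Let N_1 < N_2 be integers, m ≥ 1, and suppose E ⊂ [N_1, N_2] is a finite set of distinct real numbers satisfying: #E ≥ N_2−N_1+m+1; #(E ∩ [N_1, N_1+k)) ≥ k+1 and #(E ∩ (N_2−k, N_2]) ≥ k+1 for all 1 ≤ k ≤ N_2−N_1; and #(E ∩ (n_1, n_2)) ≥ n_2−n_1−m+1 for all integers N_1 ≤ n_1 < n_2 ≤ N_2. Then there exists a subset E' ⊆ E with #E' = N_2−N_1+m+1 satisfying the same three families of inequalities (with #E' = N_2−N_1+m+1 in place of the first). -/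
/-!
Every condition is a lower bound `#(E ∩ (α, β)) ≥ β - α - m + 1` on an open interval with integer
ends: the left conditions live on `(N₁ - m, N₁ + k)`, the right ones on `(N₂ - k, N₂ + m)` and the
cardinality bound on `(N₁ - m, N₂ + m)`. Both sides of the bound are modular in the interval, so
the union of two overlapping tight intervals (bound attained) is again tight. If `#E` exceeds the
bound of the whole interval, some point of `E` lies in no tight interval: otherwise, sweeping from
the left and always taking the tight interval that reaches furthest right, `E` is covered by
disjoint tight intervals, and since `m ≥ 1` their total count is at most the bound of the whole
interval. Removing such a point keeps every bound; repeat until the cardinality is attained.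
-/

open Finset

noncomputable def countIoo (E : Finset ℝ) (α β : ℤ) : ℕ := #{x ∈ E | x ∈ Set.Ioo (α : ℝ) β}

theorem ncard_inter_eq_countIoo {E : Finset ℝ} {T : Set ℝ} {α β : ℤ}
    (h : ∀ x ∈ E, x ∈ T ↔ x ∈ Set.Ioo (α : ℝ) β) :
    ((E : Set ℝ) ∩ T).ncard = countIoo E α β := by
  rw [countIoo, ← Set.ncard_coe_finset, coe_filter]
  exact congrArg Set.ncard (Set.ext fun x => and_congr_right (h x))

theorem countIoo_erase_of_notMem {E : Finset ℝ} {x : ℝ} {α β : ℤ}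
    (hx : x ∉ Set.Ioo (α : ℝ) β) : countIoo (E.erase x) α β = countIoo E α β := by
  rw [countIoo, countIoo, filter_erase, erase_eq_of_notMem fun h => hx (mem_filter.1 h).2]

theorem countIoo_le_countIoo_erase_add_one (E : Finset ℝ) (x : ℝ) (α β : ℤ) :
    countIoo E α β ≤ countIoo (E.erase x) α β + 1 := by
  rw [countIoo, countIoo, filter_erase]
  exact Nat.sub_le_iff_le_add.mp pred_card_le_card_erase

theorem countIoo_min_max_add_countIoo_max_min (E : Finset ℝ) {α β α' β' : ℤ}
    (h₁ : α' < β) (h₂ : α < β') :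
    countIoo E (min α α') (max β β') + countIoo E (max α α') (min β β') =
      countIoo E α β + countIoo E α' β' := by
  have hunion : Set.Ioo ((min α α' : ℤ) : ℝ) (max β β' : ℤ) =
      Set.Ioo (α : ℝ) β ∪ Set.Ioo (α' : ℝ) β' := by
    push_cast
    exact (Set.Ioo_union_Ioo' (by exact_mod_cast h₁) (by exact_mod_cast h₂)).symm
  have hinter : Set.Ioo ((max α α' : ℤ) : ℝ) (min β β' : ℤ) =
      Set.Ioo (α : ℝ) β ∩ Set.Ioo (α' : ℝ) β' := by
    push_cast
    exact (Set.Ioo_inter_Ioo).symm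
  simp only [countIoo, hunion, hinter, Set.mem_union, Set.mem_inter_iff, filter_or, filter_and]
  exact card_union_add_card_inter _ _

def CrossingClosed (F : ℤ → ℤ → Prop) : Prop :=
  ∀ ⦃α β α' β'⦄, F α β → F α' β' → α' < β → α < β' →
    F (min α α') (max β β') ∧ F (max α α') (min β β')

def HasCountBounds (F : ℤ → ℤ → Prop) (m : ℤ) (E : Finset ℝ) : Prop :=
  ∀ α β, F α β → β - α - m + 1 ≤ (countIoo E α β : ℤ)

def IsTight (F : ℤ → ℤ → Prop) (m : ℤ) (E : Finset ℝ) (α β : ℤ) : Prop :=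
  F α β ∧ (countIoo E α β : ℤ) = β - α - m + 1

section

variable {F : ℤ → ℤ → Prop} {m : ℤ} {E : Finset ℝ}

theorem IsTight.min_max (hF : CrossingClosed F) (hE : HasCountBounds F m E) {α β α' β' : ℤ}
    (h : IsTight F m E α β) (h' : IsTight F m E α' β') (h₁ : α' < β) (h₂ : α < β') :
    IsTight F m E (min α α') (max β β') := by
  obtain ⟨hunion, hinter⟩ := hF h.1 h'.1 h₁ h₂
  have hsum := countIoo_min_max_add_countIoo_max_min E h₁ h₂
  have hunion_le := hE _ _ hunion
  have hinter_le := hE _ _ hinter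
  exact ⟨hunion, by have := h.2; have := h'.2; omega⟩

theorem HasCountBounds.erase (hE : HasCountBounds F m E) {x : ℝ}
    (hx : ∀ α β, IsTight F m E α β → x ∉ Set.Ioo (α : ℝ) β) :
    HasCountBounds F m (E.erase x) := by
  intro α β hαβ
  by_cases hxI : x ∈ Set.Ioo (α : ℝ) β
  · have hslack : (countIoo E α β : ℤ) ≠ β - α - m + 1 := fun h => hx α β ⟨hαβ, h⟩ hxI
    have := hE α β hαβ
    have := countIoo_le_countIoo_erase_add_one E x α β
    omega
  · rw [countIoo_erase_of_notMem hxI]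
    exact hE α β hαβ

theorem card_filter_le_of_forall_mem_isTight (hm : 1 ≤ m) (hF : CrossingClosed F)
    (hE : HasCountBounds F m E) {Q : ℤ} (hQ : ∀ α β, F α β → β ≤ Q) (c : ℤ)
    (hcov : ∀ x ∈ E, (c : ℝ) ≤ x → ∃ α β, IsTight F m E α β ∧ c ≤ α ∧ x ∈ Set.Ioo (α : ℝ) β) :
    (#{x ∈ E | (c : ℝ) ≤ x} : ℤ) ≤ max 0 (Q - c - m + 1) := by
  rcases eq_empty_or_nonempty {x ∈ E | (c : ℝ) ≤ x} with hempty | hne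
  · simp [hempty]
  set s := min' _ hne
  obtain ⟨hsE, hcs⟩ := mem_filter.1 (min'_mem _ hne)
  -- among the tight intervals around the leftmost point, the one reaching furthest right
  obtain ⟨β, ⟨α, hαβ, hcα, hs⟩, hβmax⟩ := Int.exists_greatest_of_bdd
    (P := fun β => ∃ α, IsTight F m E α β ∧ c ≤ α ∧ s ∈ Set.Ioo (α : ℝ) β)
    ⟨Q, fun β ⟨α, h, _⟩ => hQ α β h.1⟩
    (by obtain ⟨α, β, h⟩ := hcov s hsE hcs; exact ⟨β, α, h⟩)
  have hcβ : c < β := by exact_mod_cast hcs.trans_lt hs.2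
  have hβQ : β ≤ Q := hQ α β hαβ.1
  have hcov' : ∀ x ∈ E, (β : ℝ) ≤ x →
      ∃ α' β', IsTight F m E α' β' ∧ β ≤ α' ∧ x ∈ Set.Ioo (α' : ℝ) β' := by
    intro x hxE hβx
    obtain ⟨α', β', h', hcα', hx⟩ := hcov x hxE ((Int.cast_le.2 hcβ.le).trans hβx)
    refine ⟨α', β', h', ?_, hx⟩
    by_contra! hα'β
    have hββ' : β < β' := by exact_mod_cast hβx.trans_lt hx.2
    have hαβ' : α < β' := by exact_mod_cast hs.1.trans (hs.2.trans (hβx.trans_lt hx.2))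
    have := hβmax _ ⟨min α α', hαβ.min_max hF hE h' hα'β hαβ', le_min hcα hcα',
      by push_cast; exact ⟨min_lt_of_left_lt hs.1, lt_max_of_lt_left hs.2⟩⟩
    omega
  have hrest := card_filter_le_of_forall_mem_isTight hm hF hE hQ β hcov'
  have hsplit : {x ∈ E | (c : ℝ) ≤ x} ⊆
      {x ∈ E | x ∈ Set.Ioo (α : ℝ) β} ∪ {x ∈ E | (β : ℝ) ≤ x} := by
    intro x hx
    obtain ⟨hxE, -⟩ := mem_filter.1 hx
    rcases lt_or_ge x β with hxβ | hβx
    · exact mem_union_left _ (mem_filter.2 ⟨hxE, hs.1.trans_le (min'_le _ x hx), hxβ⟩)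
    · exact mem_union_right _ (mem_filter.2 ⟨hxE, hβx⟩)
  have htight : (#{x ∈ E | x ∈ Set.Ioo (α : ℝ) β} : ℤ) = β - α - m + 1 := hαβ.2
  have := (card_le_card hsplit).trans (card_union_le _ _)
  omega
termination_by (Q - c).toNat
decreasing_by omega

theorem HasCountBounds.exists_erase (hm : 1 ≤ m) (hF : CrossingClosed F)
    (hE : HasCountBounds F m E) {P Q : ℤ} (hPQ : ∀ α β, F α β → P ≤ α ∧ β ≤ Q)
    (hcard : Q - P - m + 1 < #E) (hne : E.Nonempty) :
    ∃ x ∈ E, HasCountBounds F m (E.erase x) := by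
  by_contra! hno
  have hcov : ∀ x ∈ E, ∃ α β, IsTight F m E α β ∧ P ≤ α ∧ x ∈ Set.Ioo (α : ℝ) β := by
    intro x hx
    by_contra! hfree
    exact hno x hx (hE.erase fun α β h => hfree α β h (hPQ α β h.1).1)
  have hfilter : {x ∈ E | (P : ℝ) ≤ x} = E := by
    refine filter_true_of_mem fun x hx => ?_
    obtain ⟨α, β, -, hPα, hxα, -⟩ := hcov x hx
    exact (Int.cast_le.2 hPα).trans hxα.le
  have := card_filter_le_of_forall_mem_isTight hm hF hE (fun α β h => (hPQ α β h).2) P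
    fun x hx _ => hcov x hx
  rw [hfilter] at this
  have := card_pos.2 hne
  omega

theorem HasCountBounds.exists_subset_card_eq (hm : 1 ≤ m) (hF : CrossingClosed F)
    {P Q : ℤ} (hPQ : ∀ α β, F α β → P ≤ α ∧ β ≤ Q) {n : ℕ} (hn : Q - P - m + 1 ≤ n)
    {E : Finset ℝ} (hE : HasCountBounds F m E) (hnE : n ≤ #E) :
    ∃ E' ⊆ E, #E' = n ∧ HasCountBounds F m E' := by
  rcases hnE.eq_or_lt with heq | hlt
  · exact ⟨E, subset_rfl, heq.symm, hE⟩
  obtain ⟨x, hx, hEx⟩ := hE.exists_erase hm hF hPQ (by omega) (card_pos.1 (by omega))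
  have hcard := card_erase_add_one hx
  obtain ⟨E', hE', hcard', hbounds⟩ := hEx.exists_subset_card_eq hm hF hPQ hn (by omega)
  exact ⟨E', hE'.trans (erase_subset x E), hcard', hbounds⟩
termination_by #E
decreasing_by exact card_erase_lt_of_mem hx

end

def IsAdmissible (m N₁ N₂ α β : ℤ) : Prop :=
  (α = N₁ - m ∨ N₁ ≤ α) ∧ (β ≤ N₂ ∨ β = N₂ + m) ∧ α < β ∧ α < N₂ ∧ N₁ < β

theorem crossingClosed_isAdmissible (m N₁ N₂ : ℤ) : CrossingClosed (IsAdmissible m N₁ N₂) := by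
  intro α β α' β' h h' _ _
  simp only [IsAdmissible] at h h' ⊢
  omega

theorem IsAdmissible.bounds {m N₁ N₂ α β : ℤ} (hm : 0 ≤ m) (h : IsAdmissible m N₁ N₂ α β) :
    N₁ - m ≤ α ∧ β ≤ N₂ + m := by
  simp only [IsAdmissible] at h
  omega

section

variable {N₁ N₂ m : ℤ} {E : Finset ℝ}

theorem countIoo_sub_add_eq_card (hm : 0 < m) (hE : (E : Set ℝ) ⊆ Set.Icc (N₁ : ℝ) N₂) :
    countIoo E (N₁ - m) (N₂ + m) = #E := by
  have hm' : (0 : ℝ) < m := by exact_mod_cast hm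
  refine congrArg card (filter_true_of_mem fun x hx => ?_)
  obtain ⟨h₁, h₂⟩ := hE hx
  constructor <;> push_cast <;> linarith

theorem ncard_inter_Ico_eq_countIoo (hm : 0 < m) (hE : ∀ x ∈ E, (N₁ : ℝ) ≤ x) (k : ℤ) :
    ((E : Set ℝ) ∩ Set.Ico (N₁ : ℝ) ((N₁ : ℝ) + k)).ncard = countIoo E (N₁ - m) (N₁ + k) := by
  have hm' : (0 : ℝ) < m := by exact_mod_cast hm
  refine ncard_inter_eq_countIoo fun x hx => ?_
  have := hE x hx
  simp only [Set.mem_Ico, Set.mem_Ioo]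
  push_cast
  constructor <;> rintro ⟨h, h'⟩ <;> constructor <;> linarith

theorem ncard_inter_Ioc_eq_countIoo (hm : 0 < m) (hE : ∀ x ∈ E, x ≤ (N₂ : ℝ)) (k : ℤ) :
    ((E : Set ℝ) ∩ Set.Ioc ((N₂ : ℝ) - k) N₂).ncard = countIoo E (N₂ - k) (N₂ + m) := by
  have hm' : (0 : ℝ) < m := by exact_mod_cast hm
  refine ncard_inter_eq_countIoo fun x hx => ?_
  have := hE x hx
  simp only [Set.mem_Ioc, Set.mem_Ioo]
  push_cast
  constructor <;> rintro ⟨h, h'⟩ <;> constructor <;> linarith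

end

theorem hasCountBounds_isAdmissible_iff {m : ℕ} (hm : 1 ≤ m) {N₁ N₂ : ℤ} (hN : N₁ < N₂)
    {E : Finset ℝ} (hE : (E : Set ℝ) ⊆ Set.Icc (N₁ : ℝ) N₂) :
    HasCountBounds (IsAdmissible m N₁ N₂) m E ↔
      N₂ - N₁ + m + 1 ≤ (E.card : ℤ) ∧
      (∀ k : ℤ, 1 ≤ k → k ≤ N₂ - N₁ →
        k + 1 ≤ (((E : Set ℝ) ∩ Set.Ico (N₁ : ℝ) ((N₁ : ℝ) + k)).ncard : ℤ)) ∧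
      (∀ k : ℤ, 1 ≤ k → k ≤ N₂ - N₁ →
        k + 1 ≤ (((E : Set ℝ) ∩ Set.Ioc ((N₂ : ℝ) - k) (N₂ : ℝ)).ncard : ℤ)) ∧
      (∀ n₁ n₂ : ℤ, N₁ ≤ n₁ → n₁ < n₂ → n₂ ≤ N₂ →
        n₂ - n₁ - m + 1 ≤ (((E : Set ℝ) ∩ Set.Ioo (n₁ : ℝ) (n₂ : ℝ)).ncard : ℤ)) := by
  have hm' : 0 < (m : ℤ) := by omega
  have hall := countIoo_sub_add_eq_card hm' hE
  have hleft := ncard_inter_Ico_eq_countIoo hm' fun x hx => (hE hx).1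
  have hright := ncard_inter_Ioc_eq_countIoo hm' fun x hx => (hE hx).2
  have hmid (n₁ n₂ : ℤ) :
      ((E : Set ℝ) ∩ Set.Ioo (n₁ : ℝ) n₂).ncard = countIoo E n₁ n₂ :=
    ncard_inter_eq_countIoo fun _ _ => Iff.rfl
  simp only [hleft, hright, hmid]
  constructor
  · intro h
    refine ⟨?_, fun k hk₁ hk₂ => ?_, fun k hk₁ hk₂ => ?_, fun n₁ n₂ h₁ h₂ h₃ => ?_⟩
    · have := h _ _ ⟨Or.inl rfl, Or.inr rfl, by omega, by omega, by omega⟩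
      omega
    · have := h (N₁ - m) (N₁ + k) ⟨Or.inl rfl, Or.inl (by omega), by omega, by omega, by omega⟩
      omega
    · have := h (N₂ - k) (N₂ + m) ⟨Or.inr (by omega), Or.inr rfl, by omega, by omega, by omega⟩
      omega
    · exact h _ _ ⟨Or.inr h₁, Or.inl h₃, h₂, by omega, by omega⟩
  · rintro ⟨hcard, hl, hr, hmi⟩ α β ⟨rfl | hα, hβ | rfl, hαβ, hαN, hNβ⟩
    · have := hl (β - N₁) (by omega) (by omega)
      rw [add_sub_cancel] at this
      omega
    · omega
    · exact hmi α β hα hαβ hβ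
    · have := hr (N₂ - α) (by omega) (by omega)
      rw [sub_sub_cancel] at this
      omega

/-- combinatorial extraction lemma: from a point set satisfying the
almost-phaseless counting conditions one can extract a subset of the minimal
cardinality `N₂ - N₁ + m + 1` satisfying the same conditions. -/
theorem stmt_10 (m : ℕ) (hm : 1 ≤ m) (N₁ N₂ : ℤ) (hN : N₁ < N₂) (E : Finset ℝ)
    (hE : (E : Set ℝ) ⊆ Set.Icc (N₁ : ℝ) N₂)
    (hcard : N₂ - N₁ + m + 1 ≤ (E.card : ℤ))
    (hleft : ∀ k : ℤ, 1 ≤ k → k ≤ N₂ - N₁ →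
      k + 1 ≤ (((E : Set ℝ) ∩ Set.Ico (N₁ : ℝ) ((N₁ : ℝ) + k)).ncard : ℤ))
    (hright : ∀ k : ℤ, 1 ≤ k → k ≤ N₂ - N₁ →
      k + 1 ≤ (((E : Set ℝ) ∩ Set.Ioc ((N₂ : ℝ) - k) (N₂ : ℝ)).ncard : ℤ))
    (hmid : ∀ n₁ n₂ : ℤ, N₁ ≤ n₁ → n₁ < n₂ → n₂ ≤ N₂ →
      n₂ - n₁ - m + 1 ≤ (((E : Set ℝ) ∩ Set.Ioo (n₁ : ℝ) (n₂ : ℝ)).ncard : ℤ)) :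
    ∃ E' : Finset ℝ, E' ⊆ E ∧ (E'.card : ℤ) = N₂ - N₁ + m + 1 ∧
      (∀ k : ℤ, 1 ≤ k → k ≤ N₂ - N₁ →
        k + 1 ≤ (((E' : Set ℝ) ∩ Set.Ico (N₁ : ℝ) ((N₁ : ℝ) + k)).ncard : ℤ)) ∧
      (∀ k : ℤ, 1 ≤ k → k ≤ N₂ - N₁ →
        k + 1 ≤ (((E' : Set ℝ) ∩ Set.Ioc ((N₂ : ℝ) - k) (N₂ : ℝ)).ncard : ℤ)) ∧
      (∀ n₁ n₂ : ℤ, N₁ ≤ n₁ → n₁ < n₂ → n₂ ≤ N₂ →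
        n₂ - n₁ - m + 1 ≤ (((E' : Set ℝ) ∩ Set.Ioo (n₁ : ℝ) (n₂ : ℝ)).ncard : ℤ)) := by
  have hbounds := (hasCountBounds_isAdmissible_iff hm hN hE).2 ⟨hcard, hleft, hright, hmid⟩
  obtain ⟨E', hE'E, hcard', hE'⟩ := hbounds.exists_subset_card_eq (by exact_mod_cast hm)
    (crossingClosed_isAdmissible _ _ _) (fun _ _ h => h.bounds (by positivity))
    (n := (N₂ - N₁ + m + 1).toNat) (by omega) (by omega)
  obtain ⟨-, hl, hr, hmi⟩ :=
    (hasCountBounds_isAdmissible_iff hm hN ((coe_subset.2 hE'E).trans hE)).1 hE'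
  exact ⟨E', hE'E, by omega, hl, hr, hmi⟩
end

section
/- Every almost phaseless sampling set E = {x_1,...,x_N} ⊂ [N_1, N_2] for V_m|_{[N_1,N_2]} is a sampling set for V_m|_{[N_1,N_2]}: there exist functions S_1,...,S_N such that f(x) = Σ_{i=1}^N f(x_i) S_i(x) for all f ∈ V_m and x ∈ [N_1, N_2]. Equivalently, the matrix Φ = [φ_m(x_j − n)]_{N_1−m ≤ n ≤ N_2−1, 1 ≤ j ≤ N} has rank N_2 − N_1 + m. -/
open MeasureTheory

/-- `E` is an almost phaseless sampling set for `V_m|_{[N₁,N₂]}`: all functions with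
coefficient vector outside a finite union of proper subspaces of the coefficient space
are determined up to a sign on `[N₁,N₂]` by their unsigned samples on `E`. -/
def IsAlmostPhaselessSamplingSet (m : ℕ) (N₁ N₂ : ℤ) (E : Finset ℝ) : Prop :=
  ∃ S : Finset (Submodule ℝ ({n // n ∈ Finset.Icc (N₁ - (m : ℤ)) (N₂ - 1)} → ℝ)),
    (∀ W ∈ S, W ≠ ⊤) ∧
    ∀ c : ℤ → ℝ,
      (∀ W ∈ S, (fun n : {n // n ∈ Finset.Icc (N₁ - (m : ℤ)) (N₂ - 1)} => c n) ∉ W) →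
      ∀ c' : ℤ → ℝ,
        (∀ x ∈ E, |splineFun m N₁ N₂ c x| = |splineFun m N₁ N₂ c' x|) →
        (∀ x ∈ Set.Icc (N₁ : ℝ) N₂, splineFun m N₁ N₂ c' x = splineFun m N₁ N₂ c x) ∨
        (∀ x ∈ Set.Icc (N₁ : ℝ) N₂, splineFun m N₁ N₂ c' x = -splineFun m N₁ N₂ c x)

/-!
If `f₀` vanishes on `E` and `f` is generic, then `f` and `f + f₀` have the same unsigned
samples, so `f + f₀ = ±f` on `[N₁, N₂]`. The sign `-` forces `f₀ = -2f`; running the same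
argument with `2f` (also generic) forces `f₀ = -4f` as well, hence `f₀ = 0` on `[N₁, N₂]`.
So every evaluation functional `f ↦ f(x)`, `x ∈ [N₁, N₂]`, kills the common kernel of the
sampling functionals `f ↦ f(y)`, `y ∈ E`, and is therefore a linear combination of them;
the coefficients are the reconstruction functions.
-/

theorem Submodule.exists_forall_notMem_of_ne_top {K V : Type*} [DivisionRing K] [Infinite K]
    [AddCommGroup V] [Module K V] (S : Finset (Submodule K V)) (hS : ∀ W ∈ S, W ≠ ⊤) :
    ∃ w : V, ∀ W ∈ S, w ∉ W := by
  by_contra! hcover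
  refine Subspace.biUnion_ne_univ_of_top_notMem (fun hT => hS ⊤ hT rfl) ?_
  exact Set.eq_univ_of_forall fun w =>
    let ⟨W, hW, hwW⟩ := hcover w
    Set.mem_biUnion hW hwW

section AlmostPhaseRetrieval

variable {K V X : Type*} [Field K] [LinearOrder K] [IsStrictOrderedRing K]
  [AddCommGroup V] [Module K V]

theorem eq_zero_of_abs_samples_determine (S : Finset (Submodule K V)) (hS : ∀ W ∈ S, W ≠ ⊤)
    (φ : X → V →ₗ[K] K) (E T : Set X)
    (hdet : ∀ w : V, (∀ W ∈ S, w ∉ W) → ∀ w' : V, (∀ x ∈ E, |φ x w| = |φ x w'|) →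
      (∀ x ∈ T, φ x w' = φ x w) ∨ (∀ x ∈ T, φ x w' = -φ x w))
    {v : V} (hv : ∀ x ∈ E, φ x v = 0) : ∀ x ∈ T, φ x v = 0 := by
  have : Infinite K := Infinite.of_injective _ (Nat.cast_injective (R := K))
  obtain ⟨w, hw⟩ := Submodule.exists_forall_notMem_of_ne_top S hS
  have hsign : ∀ t : K, t ≠ 0 →
      (∀ x ∈ T, φ x v = 0) ∨ ∀ x ∈ T, φ x v = -2 * t * φ x w := by
    intro t ht
    have hgen : ∀ W ∈ S, t • w ∉ W := fun W hW => (W.smul_mem_iff ht).not.2 (hw W hW)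
    have habs : ∀ x ∈ E, |φ x (t • w)| = |φ x (t • w + v)| := fun x hx => by
      rw [map_add, hv x hx, add_zero]
    refine (hdet _ hgen _ habs).imp (fun h x hx => ?_) (fun h x hx => ?_) <;>
      have := h x hx <;> simp only [map_add, map_smul, smul_eq_mul] at this <;> linarith
  rcases hsign 1 one_ne_zero with h | h₁
  · exact h
  rcases hsign 2 two_ne_zero with h | h₂
  · exact h
  intro x hx
  linarith [h₁ x hx, h₂ x hx]

end AlmostPhaseRetrieval

section Spline

variable {m : ℕ} {N₁ N₂ : ℤ}

abbrev SplineIndex (m : ℕ) (N₁ N₂ : ℤ) : Type := {n // n ∈ Finset.Icc (N₁ - (m : ℤ)) (N₂ - 1)}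

noncomputable def splineEval (m : ℕ) (N₁ N₂ : ℤ) (x : ℝ) :
    (SplineIndex m N₁ N₂ → ℝ) →ₗ[ℝ] ℝ :=
  ∑ n : SplineIndex m N₁ N₂, bspline m (x - (n : ℤ)) • LinearMap.proj n

theorem splineFun_eq_splineEval (c : ℤ → ℝ) (x : ℝ) :
    splineFun m N₁ N₂ c x = splineEval m N₁ N₂ x (fun n => c n) := by
  rw [splineFun, ← Finset.sum_coe_sort]
  simp [splineEval, LinearMap.sum_apply, mul_comm]

theorem splineFun_extend (v : SplineIndex m N₁ N₂ → ℝ) (x : ℝ) :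
    splineFun m N₁ N₂ (Function.extend Subtype.val v 0) x = splineEval m N₁ N₂ x v := by
  rw [splineFun_eq_splineEval]
  congr
  funext n
  exact Subtype.val_injective.extend_apply v 0 n

theorem IsAlmostPhaselessSamplingSet.splineEval_eq_zero {E : Finset ℝ}
    (hAPS : IsAlmostPhaselessSamplingSet m N₁ N₂ E) {v : SplineIndex m N₁ N₂ → ℝ}
    (hv : ∀ y ∈ E, splineEval m N₁ N₂ y v = 0) :
    ∀ x ∈ Set.Icc (N₁ : ℝ) N₂, splineEval m N₁ N₂ x v = 0 := by
  obtain ⟨S, hS, hdet⟩ := hAPS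
  refine eq_zero_of_abs_samples_determine S hS (splineEval m N₁ N₂) E _
    (fun w hw w' habs => ?_) hv
  have hw' : ∀ W ∈ S,
      (fun n : SplineIndex m N₁ N₂ => Function.extend Subtype.val w 0 n) ∉ W := by
    intro W hW
    simpa only [Subtype.val_injective.extend_apply] using hw W hW
  simpa only [splineFun_extend] using hdet _ hw' (Function.extend Subtype.val w' 0)
    fun y hy => by simpa only [splineFun_extend] using habs y hy

end Spline

theorem stmt_12_general (m : ℕ) (N₁ N₂ : ℤ) (E : Finset ℝ)
    (hAPS : IsAlmostPhaselessSamplingSet m N₁ N₂ E) :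
    ∃ S : {y // y ∈ E} → ℝ → ℝ,
      ∀ c : ℤ → ℝ, ∀ x ∈ Set.Icc (N₁ : ℝ) N₂,
        splineFun m N₁ N₂ c x = ∑ y : {y // y ∈ E}, splineFun m N₁ N₂ c y * S y x := by
  have hspan : ∀ x ∈ Set.Icc (N₁ : ℝ) N₂, ∃ a : {y // y ∈ E} → ℝ,
      ∑ y, a y • splineEval m N₁ N₂ y = splineEval m N₁ N₂ x := fun x hx =>
    (Submodule.mem_span_range_iff_exists_fun ℝ).1 <| mem_span_of_iInf_ker_le_ker fun v hv =>
      hAPS.splineEval_eq_zero (fun y hy => by simpa using (Submodule.mem_iInf _).1 hv ⟨y, hy⟩)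
        x hx
  choose! a ha using hspan
  refine ⟨fun y x => a x y, fun c x hx => ?_⟩
  rw [splineFun_eq_splineEval, ← ha x hx]
  simp [splineFun_eq_splineEval, mul_comm]

/-- an almost phaseless sampling set is a sampling set: there are
reconstruction functions `S_y` with `f = Σ_y f(y) S_y` on `[N₁, N₂]` for all `f` in the
spline space. -/
theorem stmt_12 (m : ℕ) (hm : 1 ≤ m) (N₁ N₂ : ℤ) (hN : N₁ < N₂) (E : Finset ℝ)
    (hE : (E : Set ℝ) ⊆ Set.Icc (N₁ : ℝ) N₂)
    (hAPS : IsAlmostPhaselessSamplingSet m N₁ N₂ E) :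
    ∃ S : {y // y ∈ E} → ℝ → ℝ,
      ∀ c : ℤ → ℝ, ∀ x ∈ Set.Icc (N₁ : ℝ) N₂,
        splineFun m N₁ N₂ c x = ∑ y : {y // y ∈ E}, splineFun m N₁ N₂ c y * S y x :=
  stmt_12_general m N₁ N₂ E hAPS
end

section
/- Let m ≥ 1, let n_1 < n'_1 ≤ n_2 < n'_2 be integers, and let E ⊂ [n_1, n'_2] be a finite set of distinct points such that #(E ∩ (i, j)) ≥ 2(j−i) − 1 for all integers n_1 ≤ i < j ≤ n'_2. Suppose E = E_1 ⊔ E_2 is a partition with #(E_l ∩ [n_l, n'_l]) ≥ n'_l − n_l + m for l = 1, 2. Then there exist integers i_1 < i'_1 = i_2 < i'_2 in [n_1, n'_2] such that E_l ∩ [i_l, i'_l] is a sampling set for V_m|_{[i_l, i'_l]} for l = 1, 2. -/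
/-!
Call `(x, y, z)` a rich triple if `E₁` has at least `y - x + m` points in `[x, y]` and `E₂` at
least `z - y + m` points in `[y, z]`. The richness of `E₁` on `[n₁, n₁']` and of `E₂` on
`[n₂, n₂']`, together with the density of `E`, yields a rich triple inside `[n₁, n₂']`.
Choose one whose outer interval `[x, z]` contains the outer interval of no other rich triple
and whose middle point `y` maximises the number of points counted. Every Schönberg–Whitney
condition failing for `E₁` on `[x, y]` would produce a better rich triple: a deficit at the left
end or in the interior lets one shrink `[x, z]`, and a deficit at the right end lets one move `y`
to the left, because by density `E₂` has to fill the gap. The conditions for `E₂` on `[y, z]`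
follow by the reflection `t ↦ -t`, which exchanges the roles of `E₁` and `E₂`.
-/

open Set
open scoped Pointwise

-- Integer-valued, so that counts can be subtracted without truncation.
noncomputable def countIn {α : Type*} (A : Finset α) (s : Set α) : ℤ := ((A : Set α) ∩ s).ncard

section Counting

variable {α : Type*} (A : Finset α) {s t : Set α}

lemma countIn_nonneg (s : Set α) : 0 ≤ countIn A s := Int.natCast_nonneg _

lemma countIn_mono (h : s ⊆ t) : countIn A s ≤ countIn A t := by
  unfold countIn
  exact_mod_cast ncard_le_ncard (inter_subset_inter_right _ h) (A.finite_toSet.inter_of_left t)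

lemma countIn_union (h : Disjoint s t) : countIn A (s ∪ t) = countIn A s + countIn A t := by
  unfold countIn
  rw [inter_union_distrib_left, ncard_union_eq (h.mono inter_subset_right inter_subset_right)
    (A.finite_toSet.inter_of_left s) (A.finite_toSet.inter_of_left t), Nat.cast_add]

lemma countIn_finset_union [DecidableEq α] {A B : Finset α} (h : Disjoint A B) (s : Set α) :
    countIn (A ∪ B) s = countIn A s + countIn B s := by
  unfold countIn
  rw [Finset.coe_union, union_inter_distrib_right,
    ncard_union_eq ((Finset.disjoint_coe.2 h).mono inter_subset_left inter_subset_left)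
      (A.finite_toSet.inter_of_left s) (B.finite_toSet.inter_of_left s), Nat.cast_add]

lemma countIn_neg [DecidableEq α] [InvolutiveNeg α] (s : Set α) :
    countIn (-A) s = countIn A (-s) := by
  unfold countIn
  rw [Finset.coe_neg, ← ncard_neg, inter_neg, neg_neg]

variable [LinearOrder α] {a b c : α}

lemma lt_of_two_le_countIn_Icc (h : 2 ≤ countIn A (Icc a b)) : a < b := by
  by_contra! hba
  have hsub : Icc a b ⊆ {a} := fun x hx => le_antisymm (hx.2.trans hba) hx.1
  have hle : ((A : Set α) ∩ Icc a b).ncard ≤ ({a} : Set α).ncard :=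
    ncard_le_ncard (inter_subset_right.trans hsub)
  rw [ncard_singleton] at hle
  unfold countIn at h
  omega

lemma countIn_Icc_add_Ioc (hab : a ≤ b) (hbc : b ≤ c) :
    countIn A (Icc a b) + countIn A (Ioc b c) = countIn A (Icc a c) := by
  rw [← countIn_union A (disjoint_left.2 fun _ hx hx' => hx'.1.not_ge hx.2),
    Icc_union_Ioc_eq_Icc hab hbc]

lemma countIn_Ico_add_Icc (hab : a ≤ b) (hbc : b ≤ c) :
    countIn A (Ico a b) + countIn A (Icc b c) = countIn A (Icc a c) := by
  rw [← countIn_union A (disjoint_left.2 fun _ hx hx' => hx.2.not_ge hx'.1),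
    Ico_union_Icc_eq_Icc hab hbc]

lemma countIn_Ioo_add_Icc (hab : a < b) (hbc : b ≤ c) :
    countIn A (Ioo a b) + countIn A (Icc b c) = countIn A (Ioc a c) := by
  rw [← countIn_union A (disjoint_left.2 fun _ hx hx' => hx.2.not_ge hx'.1),
    Ioo_union_Icc_eq_Ioc hab hbc]

end Counting

lemma isSamplingSet_inter_Icc {m a b : ℤ} {A : Finset ℝ}
    (hcard : b - a + m ≤ countIn A (Icc (a : ℝ) b))
    (hleft : ∀ k : ℤ, 0 ≤ k → k ≤ b - a → k ≤ countIn A (Ico (a : ℝ) (a + k)))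
    (hright : ∀ k : ℤ, 0 ≤ k → k ≤ b - a → k ≤ countIn A (Ioc ((b : ℝ) - k) b))
    (hinner : ∀ c d : ℤ, a ≤ c → c < d → d ≤ b → d - c - m ≤ countIn A (Ioo (c : ℝ) d)) :
    IsSamplingSet m a b (A ∩ Icc (a : ℝ) b) := by
  refine ⟨hcard, fun k hk hkb => ?_, fun k hk hkb => ?_, fun c d hac hcd hdb => ?_⟩
  · have hk' : (a : ℝ) + k ≤ b := by exact_mod_cast (by omega : a + k ≤ b)
    rw [inter_assoc, inter_eq_right.2 (Ico_subset_Icc_self.trans (Icc_subset_Icc_right hk'))]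
    exact hleft k hk hkb
  · have hk' : (a : ℝ) ≤ b - k := by exact_mod_cast (by omega : a ≤ b - k)
    rw [inter_assoc, inter_eq_right.2 (Ioc_subset_Icc_self.trans (Icc_subset_Icc_left hk'))]
    exact hright k hk hkb
  · have hac' : (a : ℝ) ≤ c := by exact_mod_cast hac
    have hdb' : (d : ℝ) ≤ b := by exact_mod_cast hdb
    rw [inter_assoc, inter_eq_right.2 (Ioo_subset_Icc_self.trans (Icc_subset_Icc hac' hdb'))]
    exact hinner c d hac hcd hdb

lemma IsSamplingSet.neg {m a b : ℤ} {F : Set ℝ} (h : IsSamplingSet m a b F) :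
    IsSamplingSet m (-b) (-a) (-F) := by
  obtain ⟨hcard, hleft, hright, hinner⟩ := h
  have ncard_neg_inter (s : Set ℝ) : (-F ∩ s).ncard = (F ∩ -s).ncard := by
    rw [← ncard_neg, inter_neg, neg_neg]
  refine ⟨?_, fun k hk hkb => ?_, fun k hk hkb => ?_, fun c d hbc hcd hda => ?_⟩
  · rw [ncard_neg]
    linarith
  · have := hright k hk (by omega)
    rwa [ncard_neg_inter, neg_Ico, Int.cast_neg, neg_add_rev, neg_neg, neg_add_eq_sub]
  · have := hleft k hk (by omega)
    rwa [ncard_neg_inter, neg_Ioc, Int.cast_neg, neg_sub, sub_neg_eq_add, neg_neg, add_comm]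
  · have := hinner (-d) (-c) (by omega) (by omega) (by omega)
    rw [ncard_neg_inter, neg_Ioo]
    push_cast at this
    linarith

def IsRichTriple (m : ℤ) (A B : Finset ℝ) (x y z : ℤ) : Prop :=
  x < y ∧ y < z ∧ y - x + m ≤ countIn A (Icc (x : ℝ) y) ∧ z - y + m ≤ countIn B (Icc (y : ℝ) z)

def IsMinimalRichTriple (m : ℤ) (A B : Finset ℝ) (x y z : ℤ) : Prop :=
  IsRichTriple m A B x y z ∧
    ∀ x' y' z', IsRichTriple m A B x' y' z' → x ≤ x' → z' ≤ z →
      x' = x ∧ z' = z ∧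
        countIn A (Icc (x : ℝ) y') + countIn B (Icc (y' : ℝ) z) ≤
          countIn A (Icc (x : ℝ) y) + countIn B (Icc (y : ℝ) z)

def IsDenseOn (A B : Finset ℝ) (a b : ℤ) : Prop :=
  ∀ i j : ℤ, a ≤ i → i < j → j ≤ b →
    2 * (j - i) - 1 ≤ countIn A (Ioo (i : ℝ) j) + countIn B (Ioo (i : ℝ) j)

section RichTriples

variable {m : ℤ} {A B : Finset ℝ}

lemma IsDenseOn.mono {a b a' b' : ℤ} (h : IsDenseOn A B a b) (ha : a ≤ a') (hb : b' ≤ b) :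
    IsDenseOn A B a' b' :=
  fun i j hi hij hj => h i j (ha.trans hi) hij (hj.trans hb)

lemma IsDenseOn.neg {a b : ℤ} (h : IsDenseOn A B a b) : IsDenseOn (-B) (-A) (-b) (-a) := by
  intro i j hi hij hj
  have := h (-j) (-i) (by omega) (by omega) (by omega)
  simp only [countIn_neg, neg_Ioo, Int.cast_neg] at this ⊢
  linarith

lemma IsRichTriple.neg {x y z : ℤ} (h : IsRichTriple m A B x y z) :
    IsRichTriple m (-B) (-A) (-z) (-y) (-x) := by
  obtain ⟨hxy, hyz, hA, hB⟩ := h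
  refine ⟨by omega, by omega, ?_, ?_⟩ <;>
    simp only [countIn_neg, neg_Icc, Int.cast_neg, neg_neg] <;> linarith

lemma IsMinimalRichTriple.neg {x y z : ℤ} (h : IsMinimalRichTriple m A B x y z) :
    IsMinimalRichTriple m (-B) (-A) (-z) (-y) (-x) := by
  refine ⟨h.1.neg, fun x' y' z' h' hx hz => ?_⟩
  obtain ⟨hx', hz', htotal⟩ :=
    h.2 (-z') (-y') (-x') (by simpa only [neg_neg] using h'.neg) (by omega) (by omega)
  refine ⟨by omega, by omega, ?_⟩
  simp only [countIn_neg, neg_Icc, Int.cast_neg, neg_neg] at htotal ⊢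
  linarith

lemma exists_isRichTriple {a a' b b' : ℤ} (ha : a < a') (hab : a' ≤ b) (hb : b < b')
    (hA : a' - a + m ≤ countIn A (Icc (a : ℝ) a')) (hB : b' - b + m ≤ countIn B (Icc (b : ℝ) b'))
    (hdense : IsDenseOn A B a' b) : ∃ y, IsRichTriple m A B a y b' := by
  obtain ⟨t, ⟨hat, htb, ht⟩, htmax⟩ := Int.exists_greatest_of_bdd
    (P := fun t => a' ≤ t ∧ t ≤ b ∧ t - a + m ≤ countIn A (Icc (a : ℝ) t))
    ⟨b, fun _ ht => ht.2.1⟩ ⟨a', le_rfl, hab, hA⟩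
  refine ⟨t, by omega, by omega, ht, ?_⟩
  rcases htb.eq_or_lt with rfl | htb
  · exact hB
  have hsparse : countIn A (Ioc (t : ℝ) b) < b - t := by
    by_contra! hcon
    have hsplit := countIn_Icc_add_Ioc A (a := (a : ℝ)) (b := t) (c := b)
      (by exact_mod_cast (by omega : a ≤ t)) (by exact_mod_cast htb.le)
    have := htmax b ⟨hab, le_rfl, by linarith⟩
    omega
  have htb' : (t : ℝ) < b := by exact_mod_cast htb
  have hbb' : (b : ℝ) ≤ b' := by exact_mod_cast hb.le
  have := hdense t b hat htb le_rfl
  have := countIn_mono A (Ioo_subset_Ioc_self : Ioo (t : ℝ) b ⊆ Ioc t b)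
  have := countIn_Ioo_add_Icc B htb' hbb'
  have := countIn_mono B (Ioc_subset_Icc_self : Ioc (t : ℝ) b' ⊆ Icc t b')
  linarith

lemma IsRichTriple.exists_isMinimalRichTriple {x₀ y₀ z₀ : ℤ} (h : IsRichTriple m A B x₀ y₀ z₀) :
    ∃ x y z, x₀ ≤ x ∧ z ≤ z₀ ∧ IsMinimalRichTriple m A B x y z := by
  classical
  obtain ⟨_, ⟨x, y, z, hrich, hx, hz, rfl⟩, hspan⟩ := Int.exists_least_of_bdd
    (P := fun d => ∃ x y z, IsRichTriple m A B x y z ∧ x₀ ≤ x ∧ z ≤ z₀ ∧ z - x = d)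
    ⟨0, fun _ ⟨_, _, _, h, _, _, hd⟩ => by linarith [h.1, h.2.1]⟩
    ⟨_, x₀, y₀, z₀, h, le_rfl, le_rfl, rfl⟩
  obtain ⟨y', hy', hmax⟩ := Finset.exists_max_image
    ((Finset.Ioo x z).filter (IsRichTriple m A B x · z))
    (fun y => countIn A (Icc (x : ℝ) y) + countIn B (Icc (y : ℝ) z))
    ⟨y, Finset.mem_filter.2 ⟨Finset.mem_Ioo.2 ⟨hrich.1, hrich.2.1⟩, hrich⟩⟩
  refine ⟨x, y', z, hx, hz, (Finset.mem_filter.1 hy').2, fun x' y'' z' h' hx' hz' => ?_⟩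
  have := hspan _ ⟨x', y'', z', h', by omega, by omega, rfl⟩
  obtain ⟨rfl, rfl⟩ : x' = x ∧ z' = z := by omega
  exact ⟨rfl, rfl, hmax y'' (Finset.mem_filter.2 ⟨Finset.mem_Ioo.2 ⟨h'.1, h'.2.1⟩, h'⟩)⟩

namespace IsMinimalRichTriple

variable {x y z : ℤ} (hm : 1 ≤ m) (h : IsMinimalRichTriple m A B x y z)
include hm h

lemma countIn_Icc_le {s : ℤ} (hxs : x < s) (hsy : s ≤ y) :
    countIn A (Icc (s : ℝ) y) ≤ y - s + m := by
  by_contra! hcon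
  have hsy : s < y :=
    Int.cast_lt.1 (lt_of_two_le_countIn_Icc A (show 2 ≤ countIn A (Icc (s : ℝ) y) by omega))
  have := (h.2 s y z ⟨hsy, h.1.2.1, hcon.le, h.1.2.2.2⟩ hxs.le le_rfl).1
  omega

lemma le_countIn_Ico {k : ℤ} (hk : 0 ≤ k) (hky : k ≤ y - x) :
    k ≤ countIn A (Ico (x : ℝ) (x + k)) := by
  rcases hk.eq_or_lt with rfl | hk
  · exact countIn_nonneg A _
  have hsplit := countIn_Ico_add_Icc A (a := (x : ℝ)) (b := ((x + k : ℤ) : ℝ)) (c := y)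
    (by exact_mod_cast (by omega : x ≤ x + k)) (by exact_mod_cast (by omega : x + k ≤ y))
  have htail := h.countIn_Icc_le hm (s := x + k) (by omega) (by omega)
  push_cast at hsplit htail
  linarith [h.1.2.2.1]

lemma le_countIn_Ioc (hdense : IsDenseOn A B x y) {k : ℤ} (hk : 0 ≤ k) (hky : k ≤ y - x) :
    k ≤ countIn A (Ioc ((y : ℝ) - k) y) := by
  rcases hk.eq_or_lt with rfl | hk
  · exact countIn_nonneg A _
  by_contra! hcon
  rw [show (y : ℝ) - k = ((y - k : ℤ) : ℝ) by push_cast; ring] at hcon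
  obtain ⟨-, hyz, hA, hB⟩ := h.1
  have hsplitA := countIn_Icc_add_Ioc A (a := (x : ℝ)) (b := ((y - k : ℤ) : ℝ)) (c := y)
    (by exact_mod_cast (by omega : x ≤ y - k)) (by exact_mod_cast (by omega : y - k ≤ y))
  have hxw : x < y - k := Int.cast_lt.1 (lt_of_two_le_countIn_Icc A
    (show 2 ≤ countIn A (Icc (x : ℝ) ((y - k : ℤ) : ℝ)) by linarith))
  have := hdense (y - k) y (by omega) (by omega) le_rfl
  have := countIn_mono A (Ioo_subset_Ioc_self : Ioo ((y - k : ℤ) : ℝ) y ⊆ Ioc _ _)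
  have hsplitB := countIn_Ico_add_Icc B (a := ((y - k : ℤ) : ℝ)) (b := y) (c := z)
    (by exact_mod_cast (by omega : y - k ≤ y)) (by exact_mod_cast hyz.le)
  have := countIn_mono B (Ioo_subset_Ico_self : Ioo ((y - k : ℤ) : ℝ) y ⊆ Ico _ _)
  have := (h.2 x (y - k) z ⟨hxw, by omega, by linarith, by linarith⟩ le_rfl le_rfl).2.2
  linarith

lemma sub_sub_le_countIn_Ioo (hdense : IsDenseOn A B x y) {c d : ℤ} (hxc : x ≤ c) (hcd : c < d)
    (hdy : d ≤ y) : d - c - m ≤ countIn A (Ioo (c : ℝ) d) := by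
  by_contra! hcon
  obtain ⟨-, hyz, hA, -⟩ := h.1
  have hsplit₁ := countIn_Icc_add_Ioc A (a := (x : ℝ)) (b := c) (c := y)
    (by exact_mod_cast hxc) (by exact_mod_cast (by omega : c ≤ y))
  have hsplit₂ := countIn_Ioo_add_Icc A (a := (c : ℝ)) (b := d) (c := y)
    (by exact_mod_cast hcd) (by exact_mod_cast hdy)
  have := h.countIn_Icc_le hm (s := d) (by omega) hdy
  have hxc : x < c := Int.cast_lt.1 (lt_of_two_le_countIn_Icc A
    (show 2 ≤ countIn A (Icc (x : ℝ) c) by linarith))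
  have := hdense c d hxc.le hcd hdy
  have := countIn_mono B (Ioo_subset_Icc_self : Ioo (c : ℝ) d ⊆ Icc c d)
  have := (h.2 x c d ⟨hxc, hcd, by linarith, by linarith⟩ le_rfl (by omega)).2.1
  omega

lemma isSamplingSet_left (hdense : IsDenseOn A B x y) :
    IsSamplingSet m x y (A ∩ Icc (x : ℝ) y) :=
  isSamplingSet_inter_Icc h.1.2.2.1 (fun _ => h.le_countIn_Ico hm)
    (fun _ => h.le_countIn_Ioc hm hdense) (fun _ _ => h.sub_sub_le_countIn_Ioo hm hdense)

lemma isSamplingSet_right (hdense : IsDenseOn A B y z) :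
    IsSamplingSet m y z (B ∩ Icc (y : ℝ) z) := by
  simpa only [neg_neg, Finset.coe_neg, inter_neg, neg_Icc, Int.cast_neg] using
    (h.neg.isSamplingSet_left hm hdense.neg).neg

end IsMinimalRichTriple

end RichTriples

theorem stmt_13_general (m : ℕ) (hm : 1 ≤ m) (n₁ n₁' n₂ n₂' : ℤ)
    (h₁ : n₁ < n₁') (h₁₂ : n₁' ≤ n₂) (h₂ : n₂ < n₂')
    (E E₁ E₂ : Finset ℝ)
    (hdense : ∀ i j : ℤ, n₁ ≤ i → i < j → j ≤ n₂' →
      2 * (j - i) - 1 ≤ (((E : Set ℝ) ∩ Set.Ioo (i : ℝ) (j : ℝ)).ncard : ℤ))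
    (hunion : E₁ ∪ E₂ = E) (hdisj : Disjoint E₁ E₂)
    (hrich₁ : n₁' - n₁ + m ≤ (((E₁ : Set ℝ) ∩ Set.Icc (n₁ : ℝ) (n₁' : ℝ)).ncard : ℤ))
    (hrich₂ : n₂' - n₂ + m ≤ (((E₂ : Set ℝ) ∩ Set.Icc (n₂ : ℝ) (n₂' : ℝ)).ncard : ℤ)) :
    ∃ i₁ i₂ i₃ : ℤ, n₁ ≤ i₁ ∧ i₁ < i₂ ∧ i₂ < i₃ ∧ i₃ ≤ n₂' ∧
      IsSamplingSet m i₁ i₂ ((E₁ : Set ℝ) ∩ Set.Icc (i₁ : ℝ) (i₂ : ℝ)) ∧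
      IsSamplingSet m i₂ i₃ ((E₂ : Set ℝ) ∩ Set.Icc (i₂ : ℝ) (i₃ : ℝ)) := by
  have hm : (1 : ℤ) ≤ m := by exact_mod_cast hm
  have hdense : IsDenseOn E₁ E₂ n₁ n₂' := fun i j hi hij hj => by
    rw [← countIn_finset_union hdisj, hunion]
    exact hdense i j hi hij hj
  obtain ⟨_, hrich⟩ := exists_isRichTriple h₁ h₁₂ h₂ hrich₁ hrich₂ (hdense.mono h₁.le h₂.le)
  obtain ⟨x, y, z, hx, hz, hmin⟩ := hrich.exists_isMinimalRichTriple
  obtain ⟨hxy, hyz, -⟩ := hmin.1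
  exact ⟨x, y, z, hx, hxy, hyz, hz, hmin.isSamplingSet_left hm (hdense.mono hx (by omega)),
    hmin.isSamplingSet_right hm (hdense.mono (by omega) hz)⟩

/-- from a dense enough point set split into two parts, each rich on its
own interval, one can find two adjacent integer intervals (sharing one endpoint) on
which the respective parts are sampling sets. -/
theorem stmt_13 (m : ℕ) (hm : 1 ≤ m) (n₁ n₁' n₂ n₂' : ℤ)
    (h₁ : n₁ < n₁') (h₁₂ : n₁' ≤ n₂) (h₂ : n₂ < n₂')
    (E E₁ E₂ : Finset ℝ) (hE : (E : Set ℝ) ⊆ Set.Icc (n₁ : ℝ) (n₂' : ℝ))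
    (hdense : ∀ i j : ℤ, n₁ ≤ i → i < j → j ≤ n₂' →
      2 * (j - i) - 1 ≤ (((E : Set ℝ) ∩ Set.Ioo (i : ℝ) (j : ℝ)).ncard : ℤ))
    (hunion : E₁ ∪ E₂ = E) (hdisj : Disjoint E₁ E₂)
    (hrich₁ : n₁' - n₁ + m ≤ (((E₁ : Set ℝ) ∩ Set.Icc (n₁ : ℝ) (n₁' : ℝ)).ncard : ℤ))
    (hrich₂ : n₂' - n₂ + m ≤ (((E₂ : Set ℝ) ∩ Set.Icc (n₂ : ℝ) (n₂' : ℝ)).ncard : ℤ)) :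
    ∃ i₁ i₂ i₃ : ℤ, n₁ ≤ i₁ ∧ i₁ < i₂ ∧ i₂ < i₃ ∧ i₃ ≤ n₂' ∧
      IsSamplingSet m i₁ i₂ ((E₁ : Set ℝ) ∩ Set.Icc (i₁ : ℝ) (i₂ : ℝ)) ∧
      IsSamplingSet m i₂ i₃ ((E₂ : Set ℝ) ∩ Set.Icc (i₂ : ℝ) (i₃ : ℝ)) :=
  stmt_13_general m hm n₁ n₁' n₂ n₂' h₁ h₁₂ h₂ E E₁ E₂ hdense hunion hdisj hrich₁ hrich₂
end

section
/- Let E ⊂ [N_1, N_2] satisfy the local phaseless sampling conditions: #E ≥ 2(N_2−N_1+m)−1; #(E∩[N_1, N_1+k)) ≥ 2k+m−1 and #(E∩(N_2−k, N_2]) ≥ 2k+m−1 for 1 ≤ k ≤ N_2−N_1; and #(E∩(n_1,n_2)) ≥ 2(n_2−n_1)−1 for all integers N_1 ≤ n_1 < n_2 ≤ N_2. Suppose E = E_1 ⊔ E_2 with #E_1 ≤ #E_2 and E_2 is not a sampling set for V_m|_{[N_1,N_2]}. Then there exist integers i_1 < i'_1 and i_2 < i'_2 in [N_1, N_2] with [i_1,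 i'_1] ∩ [i_2, i'_2] a single point, such that E_l ∩ [i_l, i'_l] is a sampling set for V_m|_{[i_l,i'_l]} for l = 1, 2. -/
lemma Int.exists_minimal_window {P : ℤ → ℤ → Prop} {a b : ℤ}
    (h : ∃ x y, a ≤ x ∧ x < y ∧ y ≤ b ∧ P x y) :
    ∃ x y, a ≤ x ∧ x < y ∧ y ≤ b ∧ P x y ∧
      ∀ x' y', a ≤ x' → x' < y' → y' ≤ b → y' - x' < y - x → ¬ P x' y' := by
  obtain ⟨x, y, hx, hxy, hy, hP⟩ := h
  obtain ⟨n, ⟨x, y, hx, hxy, hy, hP, rfl⟩, hmin⟩ :=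
    Int.exists_least_of_bdd (P := fun n => ∃ x y, a ≤ x ∧ x < y ∧ y ≤ b ∧ P x y ∧ y - x = n)
      ⟨0, fun _ ⟨_, _, _, h, _, _, hn⟩ => by omega⟩ ⟨_, x, y, hx, hxy, hy, hP, rfl⟩
  exact ⟨x, y, hx, hxy, hy, hP, fun x' y' h₁ h₂ h₃ hlt hP' =>
    absurd (hmin _ ⟨x', y', h₁, h₂, h₃, hP', rfl⟩) (not_le.2 hlt)⟩

lemma ncard_inter_union_of_disjoint {α : Type*} {s S T : Set α} (hs : s.Finite)
    (h : Disjoint S T) : (s ∩ (S ∪ T)).ncard = (s ∩ S).ncard + (s ∩ T).ncard := by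
  rw [Set.inter_union_distrib_left]
  exact Set.ncard_union_eq (h.mono Set.inter_subset_right Set.inter_subset_right)
    (hs.inter_of_left _) (hs.inter_of_left _)

lemma ncard_union_inter_of_disjoint {α : Type*} {s t : Set α} (hs : s.Finite) (ht : t.Finite)
    (h : Disjoint s t) (S : Set α) : ((s ∪ t) ∩ S).ncard = (s ∩ S).ncard + (t ∩ S).ncard := by
  rw [Set.union_inter_distrib_right]
  exact Set.ncard_union_eq (h.mono Set.inter_subset_left Set.inter_subset_left)
    (hs.inter_of_left _) (ht.inter_of_left _)

/-- `below n` and `upto n` model `#(F ∩ (-∞, n))` and `#(F ∩ (-∞, n])` for a finite `F ⊂ ℝ`. -/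
structure CountingProfile where
  below : ℤ → ℤ
  upto : ℤ → ℤ
  below_le_upto (n : ℤ) : below n ≤ upto n
  upto_le_below_add_one (n : ℤ) : upto n ≤ below n + 1
  upto_le_below {x y : ℤ} : x < y → upto x ≤ below y

namespace CountingProfile

section Intervals

variable (f : CountingProfile)

def Ioo (x y : ℤ) : ℤ := f.below y - f.upto x

def Ico (x y : ℤ) : ℤ := f.below y - f.below x

def Ioc (x y : ℤ) : ℤ := f.upto y - f.upto x

def Icc (x y : ℤ) : ℤ := f.upto y - f.below x

def Samples (m : ℕ) (a b : ℤ) : Prop :=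
  b - a + m ≤ f.Icc a b ∧
  (∀ y, a < y → y ≤ b → y - a ≤ f.Ico a y) ∧
  (∀ x, a ≤ x → x < b → b - x ≤ f.Ioc x b) ∧
  ∀ x y, a ≤ x → x < y → y ≤ b → y - x - m ≤ f.Ioo x y

/-- The profile of `-F`, shifted by the constant `-#F`, which no interval count sees. -/
def reflect : CountingProfile where
  below n := -f.upto (-n)
  upto n := -f.below (-n)
  below_le_upto n := neg_le_neg (f.below_le_upto _)
  upto_le_below_add_one n := by linarith [f.upto_le_below_add_one (-n)]
  upto_le_below h := neg_le_neg (f.upto_le_below (neg_lt_neg h))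

@[simp]
lemma reflect_reflect : f.reflect.reflect = f := by
  cases f
  simp [reflect]

@[simp]
lemma reflect_Ioo (x y : ℤ) : f.reflect.Ioo x y = f.Ioo (-y) (-x) := by
  simp only [Ioo, reflect]; ring

@[simp]
lemma reflect_Ico (x y : ℤ) : f.reflect.Ico x y = f.Ioc (-y) (-x) := by
  simp only [Ico, Ioc, reflect]; ring

@[simp]
lemma reflect_Ioc (x y : ℤ) : f.reflect.Ioc x y = f.Ico (-y) (-x) := by
  simp only [Ico, Ioc, reflect]; ring

@[simp]
lemma reflect_Icc (x y : ℤ) : f.reflect.Icc x y = f.Icc (-y) (-x) := by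
  simp only [Icc, reflect]; ring

end Intervals

noncomputable def ofFinset (F : Finset ℝ) : CountingProfile where
  below n := ((F : Set ℝ) ∩ Set.Iio (n : ℝ)).ncard
  upto n := ((F : Set ℝ) ∩ Set.Iic (n : ℝ)).ncard
  below_le_upto n := by
    exact_mod_cast Set.ncard_le_ncard (Set.inter_subset_inter_right _ Set.Iio_subset_Iic_self)
      (F.finite_toSet.inter_of_left _)
  upto_le_below_add_one n := by
    have hsub : (F : Set ℝ) ∩ Set.Iic (n : ℝ) ⊆ insert (n : ℝ) ((F : Set ℝ) ∩ Set.Iio (n : ℝ)) := by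
      rintro x ⟨hF, hx⟩
      rcases (show x ≤ n from hx).lt_or_eq with hx | rfl
      · exact Or.inr ⟨hF, hx⟩
      · exact Or.inl rfl
    have := (Set.ncard_le_ncard hsub ((F.finite_toSet.inter_of_left _).insert _)).trans
      (Set.ncard_insert_le _ _)
    omega
  upto_le_below h := by
    exact_mod_cast Set.ncard_le_ncard
      (Set.inter_subset_inter_right _ (Set.Iic_subset_Iio.2 (by exact_mod_cast h)))
      (F.finite_toSet.inter_of_left _)

section OfFinset

variable (F : Finset ℝ) {x y : ℤ}

lemma ofFinset_Ioo (h : x < y) :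
    (ofFinset F).Ioo x y = ((F : Set ℝ) ∩ Set.Ioo (x : ℝ) y).ncard := by
  have := ncard_inter_union_of_disjoint (S := Set.Iic (x : ℝ)) (T := Set.Ioo (x : ℝ) y)
    F.finite_toSet ((Set.Iic_disjoint_Ioi le_rfl).mono_right Set.Ioo_subset_Ioi_self)
  rw [Set.Iic_union_Ioo_eq_Iio (by exact_mod_cast h)] at this
  simp only [Ioo, ofFinset]; omega

lemma ofFinset_Ico (h : x ≤ y) :
    (ofFinset F).Ico x y = ((F : Set ℝ) ∩ Set.Ico (x : ℝ) y).ncard := by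
  have := ncard_inter_union_of_disjoint (S := Set.Iio (x : ℝ)) (T := Set.Ico (x : ℝ) y)
    F.finite_toSet ((Set.Iio_disjoint_Ici le_rfl).mono_right Set.Ico_subset_Ici_self)
  rw [Set.Iio_union_Ico_eq_Iio (by exact_mod_cast h)] at this
  simp only [Ico, ofFinset]; omega

lemma ofFinset_Ioc (h : x ≤ y) :
    (ofFinset F).Ioc x y = ((F : Set ℝ) ∩ Set.Ioc (x : ℝ) y).ncard := by
  have := ncard_inter_union_of_disjoint (S := Set.Iic (x : ℝ)) (T := Set.Ioc (x : ℝ) y)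
    F.finite_toSet ((Set.Iic_disjoint_Ioi le_rfl).mono_right Set.Ioc_subset_Ioi_self)
  rw [Set.Iic_union_Ioc_eq_Iic (by exact_mod_cast h)] at this
  simp only [Ioc, ofFinset]; omega

lemma ofFinset_Icc (h : x ≤ y) :
    (ofFinset F).Icc x y = ((F : Set ℝ) ∩ Set.Icc (x : ℝ) y).ncard := by
  have := ncard_inter_union_of_disjoint (S := Set.Iio (x : ℝ)) (T := Set.Icc (x : ℝ) y)
    F.finite_toSet ((Set.Iio_disjoint_Ici le_rfl).mono_right Set.Icc_subset_Ici_self)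
  rw [Set.Iio_union_Icc_eq_Iic (by exact_mod_cast h)] at this
  simp only [Icc, ofFinset]; omega

lemma ofFinset_Ico_add {k : ℤ} (hk : 0 ≤ k) :
    (ofFinset F).Ico x (x + k) = ((F : Set ℝ) ∩ Set.Ico (x : ℝ) (x + k)).ncard := by
  rw [ofFinset_Ico F (by omega)]; push_cast; rfl

lemma ofFinset_Ioc_sub {k : ℤ} (hk : 0 ≤ k) :
    (ofFinset F).Ioc (y - k) y = ((F : Set ℝ) ∩ Set.Ioc ((y : ℝ) - k) y).ncard := by
  rw [ofFinset_Ioc F (by omega)]; push_cast; rfl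

end OfFinset

lemma isSamplingSet_of_samples {F : Finset ℝ} {m : ℕ} {a b : ℤ} (hab : a ≤ b)
    (h : (ofFinset F).Samples m a b) :
    IsSamplingSet m a b ((F : Set ℝ) ∩ Set.Icc (a : ℝ) b) := by
  obtain ⟨hcard, hleft, hright, hmid⟩ := h
  have restrict : ∀ S ⊆ Set.Icc (a : ℝ) b, (F : Set ℝ) ∩ Set.Icc (a : ℝ) b ∩ S = (F : Set ℝ) ∩ S :=
    fun S hS => by rw [Set.inter_assoc, Set.inter_eq_right.2 hS]
  refine ⟨by rwa [← ofFinset_Icc F hab], fun k h₀ hk => ?_, fun k h₀ hk => ?_,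
    fun c d h₁ h₂ h₃ => ?_⟩
  · rw [restrict _ (Set.Ico_subset_Icc_self.trans (Set.Icc_subset_Icc_right
      (by exact_mod_cast (by omega : a + k ≤ b)))), ← ofFinset_Ico_add F h₀]
    rcases h₀.eq_or_lt with rfl | hk₀
    · simp [Ico]
    · have := hleft (a + k) (by omega) (by omega); omega
  · rw [restrict _ (Set.Ioc_subset_Icc_self.trans (Set.Icc_subset_Icc_left
      (by exact_mod_cast (by omega : a ≤ b - k)))), ← ofFinset_Ioc_sub F h₀]
    rcases h₀.eq_or_lt with rfl | hk₀
    · simp [Ioc]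
    · have := hright (b - k) (by omega) (by omega); omega
  · rw [restrict _ (Set.Ioo_subset_Icc_self.trans
      (Set.Icc_subset_Icc (by exact_mod_cast h₁) (by exact_mod_cast h₃))), ← ofFinset_Ioo F h₂]
    exact hmid c d h₁ h₂ h₃

variable {m : ℕ} {f g : CountingProfile} {a b : ℤ}

lemma Samples.reflect (h : f.Samples m a b) : f.reflect.Samples m (-b) (-a) := by
  obtain ⟨hcard, hleft, hright, hmid⟩ := h
  refine ⟨?_, fun y h₁ h₂ => ?_, fun x h₁ h₂ => ?_, fun x y h₁ h₂ h₃ => ?_⟩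
  · simp only [reflect_Icc, neg_neg]; omega
  · simp only [reflect_Ico, neg_neg]; have := hright (-y) (by omega) (by omega); omega
  · simp only [reflect_Ioc, neg_neg]; have := hleft (-x) (by omega) (by omega); omega
  · simp only [reflect_Ioo]; have := hmid (-y) (-x) (by omega) (by omega) (by omega); omega

lemma Samples.of_reflect (h : f.reflect.Samples m a b) : f.Samples m (-b) (-a) := by
  simpa using h.reflect

def DoublyDense (f g : CountingProfile) (N₁ N₂ : ℤ) : Prop :=
  ∀ c d, N₁ ≤ c → c < d → d ≤ N₂ → 2 * (d - c) - 1 ≤ f.Ioo c d + g.Ioo c d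

lemma DoublyDense.mono {N₁ N₂ : ℤ} (h : DoublyDense f g N₁ N₂) (ha : N₁ ≤ a) (hb : b ≤ N₂) :
    DoublyDense f g a b :=
  fun c d h₁ h₂ h₃ => h c d (ha.trans h₁) h₂ (h₃.trans hb)

lemma DoublyDense.reflect {N₁ N₂ : ℤ} (h : DoublyDense f g N₁ N₂) :
    DoublyDense f.reflect g.reflect (-N₂) (-N₁) := by
  intro c d h₁ h₂ h₃
  simp only [reflect_Ioo]
  have := h (-d) (-c) (by omega) (by omega) (by omega)
  omega

def SplitSampled (m : ℕ) (f g : CountingProfile) (N₁ N₂ : ℤ) : Prop :=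
  ∃ a p b, N₁ ≤ a ∧ a < p ∧ p < b ∧ b ≤ N₂ ∧
    (f.Samples m a p ∧ g.Samples m p b ∨ g.Samples m a p ∧ f.Samples m p b)

lemma SplitSampled.of_reflect {N₁ N₂ : ℤ}
    (h : SplitSampled m f.reflect g.reflect (-N₂) (-N₁)) : SplitSampled m f g N₁ N₂ := by
  obtain ⟨a, p, b, ha, hap, hpb, hb, ⟨hf, hg⟩ | ⟨hg, hf⟩⟩ := h
  · exact ⟨-b, -p, -a, by omega, by omega, by omega, by omega,
      Or.inr ⟨hg.of_reflect, hf.of_reflect⟩⟩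
  · exact ⟨-b, -p, -a, by omega, by omega, by omega, by omega,
      Or.inl ⟨hf.of_reflect, hg.of_reflect⟩⟩

lemma exists_failure_of_not_samples (hcard : b - a + m ≤ g.Icc a b) (h : ¬ g.Samples m a b) :
    (∃ y, a < y ∧ y ≤ b ∧ g.Ico a y < y - a) ∨ (∃ x, a ≤ x ∧ x < b ∧ g.Ioc x b < b - x) ∨
      ∃ x y, a ≤ x ∧ x < y ∧ y ≤ b ∧ g.Ioo x y < y - x - m := by
  by_contra! h'
  exact h ⟨hcard, h'.1, h'.2.1, h'.2.2⟩

lemma exists_minimal_prefix_failure (h : ∃ y, a < y ∧ y ≤ b ∧ g.Ico a y < y - a) :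
    ∃ y₀, a < y₀ ∧ y₀ ≤ b ∧ g.Ico a y₀ < y₀ - a ∧ ∀ z, a ≤ z → z < y₀ → z - a ≤ g.Ico a z := by
  obtain ⟨y₀, ⟨h₁, h₂, h₃⟩, hmin⟩ := Int.exists_least_of_bdd ⟨a, fun z hz => hz.1.le⟩ h
  refine ⟨y₀, h₁, h₂, h₃, fun z hz₁ hz₂ => ?_⟩
  rcases hz₁.eq_or_lt with rfl | hz₁
  · simp [Ico]
  by_contra! hz
  linarith [hmin z ⟨hz₁, by omega, hz⟩]

lemma mass_right_of_prefix_failure (hm : 1 ≤ m) (hg : b - a + m ≤ g.Icc a b) {y : ℤ}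
    (hyb : y ≤ b) (hfail : g.Ico a y < y - a) :
    y < b ∧ b - y + m ≤ g.Icc y b := by
  have := g.upto_le_below_add_one b
  rcases hyb.lt_or_eq with hyb | rfl <;> simp only [Icc, Ico] at * <;> omega

lemma mass_left_of_suffix_failure (hm : 1 ≤ m) (hg : b - a + m ≤ g.Icc a b) {x : ℤ}
    (hax : a ≤ x) (hxb : x < b) (hfail : g.Ioc x b < b - x) :
    a < x ∧ x - a + m ≤ g.Icc a x := by
  have := g.upto_le_below_add_one a
  rcases hax.eq_or_lt with rfl | hax <;> simp only [Icc, Ioc] at * <;> omega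

lemma mass_split (hm : 1 ≤ m) (hg : b - a + m ≤ g.Icc a b) {x y : ℤ}
    (hax : a ≤ x) (hyb : y ≤ b) (hfail : g.Ioo x y < y - x - m) :
    y < b ∧ b - y + m ≤ g.Icc y b ∨ a < x ∧ x - a + m ≤ g.Icc a x := by
  have := g.upto_le_below_add_one a
  have := g.upto_le_below_add_one b
  rcases hax.eq_or_lt with rfl | hax <;> rcases hyb.lt_or_eq with hyb | rfl <;>
    simp only [Icc, Ioo] at * <;> omega

lemma samples_of_minimal_window {γ δ : ℤ} (hd : DoublyDense f g γ δ) (hγδ : γ < δ)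
    (hfail : g.Ioo γ δ < δ - γ - m)
    (hmin : ∀ x y, γ ≤ x → x < y → y ≤ δ → y - x < δ - γ → y - x - m ≤ g.Ioo x y) :
    f.Samples m γ δ := by
  have hpre : ∀ x, γ ≤ x → x < δ → x - γ - m ≤ g.Ioc γ x := fun x h₁ h₂ => by
    rcases h₁.eq_or_lt with rfl | h₁
    · simp [Ioc]
    have := hmin γ x le_rfl h₁ h₂.le (by omega)
    have := g.below_le_upto x
    simp only [Ioc, Ioo] at *; omega
  have hsuf : ∀ y, γ < y → y ≤ δ → δ - y - m ≤ g.Ico y δ := fun y h₁ h₂ => by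
    rcases h₂.lt_or_eq with h₂ | rfl
    · have := hmin y δ h₁.le h₂ le_rfl (by omega)
      have := g.below_le_upto y
      simp only [Ico, Ioo] at *; omega
    · simp [Ico]
  -- Where `f` is thin, density makes `g` rich; with `hpre` and `hsuf` this contradicts `hfail`.
  refine ⟨?_, fun y h₁ h₂ => ?_, fun x h₁ h₂ => ?_, fun x y h₁ h₂ h₃ => ?_⟩ <;> by_contra! hlt
  · have := hd γ δ le_rfl hγδ le_rfl
    have := f.below_le_upto γ
    have := f.below_le_upto δ
    simp only [Icc, Ioo] at *; omega
  · have := hd γ y le_rfl h₁ h₂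
    have := hsuf y h₁ h₂
    have := f.below_le_upto γ
    simp only [Ico, Ioo] at *; omega
  · have := hd x δ h₁ h₂ le_rfl
    have := hpre x h₁ h₂
    have := f.below_le_upto δ
    simp only [Ioc, Ioo] at *; omega
  · have := hd x y h₁ h₂ h₃
    have := hpre x h₁ (by omega)
    have := hsuf y (by omega) h₃
    simp only [Ico, Ioc, Ioo] at *; omega

lemma samples_of_minimal_prefix_failure (hd : DoublyDense f g a b)
    (hleft : ∀ y, a < y → y ≤ b → 2 * (y - a) + m - 1 ≤ f.Ico a y + g.Ico a y)
    (hab : a < b) (hfail : g.Ico a b < b - a) (hmin : ∀ z, a ≤ z → z < b → z - a ≤ g.Ico a z)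
    (hmid : ∀ x y, a ≤ x → x < y → y ≤ b → y - x - m ≤ g.Ioo x y) :
    f.Samples m a b := by
  have hsuf : ∀ y, a < y → y ≤ b → b - y - m ≤ g.Ico y b := fun y h₁ h₂ => by
    rcases h₂.lt_or_eq with h₂ | rfl
    · have := hmid y b h₁.le h₂ le_rfl
      have := g.below_le_upto y
      simp only [Ico, Ioo] at *; omega
    · simp [Ico]
  refine ⟨?_, fun y h₁ h₂ => ?_, fun x h₁ h₂ => ?_, fun x y h₁ h₂ h₃ => ?_⟩ <;> by_contra! hlt
  · have := hleft b hab le_rfl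
    have := f.below_le_upto b
    simp only [Icc, Ico] at *; omega
  · have := hleft y h₁ h₂
    have := hsuf y h₁ h₂
    simp only [Ico] at *; omega
  · have := hd x b h₁ h₂ le_rfl
    have := hmin x h₁ h₂
    have := f.below_le_upto b
    have := g.below_le_upto x
    simp only [Ico, Ioc, Ioo] at *; omega
  · have := hd x y h₁ h₂ h₃
    have := hmin x h₁ (by omega)
    have := hsuf y (by omega) h₃
    have := g.below_le_upto x
    simp only [Ico, Ioo] at *; omega

lemma Samples.extend_right {c : ℤ} (hf : f.Samples m a c) (hcb : c < b)
    (hR : ∀ x, c ≤ x → x < b → b - x ≤ f.Ioo x b)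
    (hM : ∀ x y, c ≤ x → x < y → y < b → y - x - m ≤ f.Ioo x y) :
    f.Samples m a b := by
  obtain ⟨hcard, hleft, hright, hmid⟩ := hf
  have hc : ∀ y, c < y → y ≤ b → y - c - m ≤ f.Ioo c y := fun y h₁ h₂ => by
    rcases h₂.lt_or_eq with h₂ | rfl
    · exact hM c y le_rfl h₁ h₂
    · have := hR c le_rfl hcb; omega
  have := f.below_le_upto b
  refine ⟨?_, fun y h₁ h₂ => ?_, fun x h₁ h₂ => ?_, fun x y h₁ h₂ h₃ => ?_⟩
  · have := hR c le_rfl hcb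
    simp only [Icc, Ioo] at *; omega
  · rcases le_or_gt y c with hyc | hyc
    · exact hleft y h₁ hyc
    · have := hc y hyc h₂
      simp only [Icc, Ico, Ioo] at *; omega
  · rcases lt_or_ge x c with hxc | hxc
    · have := hright x h₁ hxc
      have := hR c le_rfl hcb
      simp only [Ioc, Ioo] at *; omega
    · have := hR x hxc h₂
      simp only [Ioc, Ioo] at *; omega
  · rcases le_or_gt y c with hyc | hyc
    · exact hmid x y h₁ h₂ hyc
    rcases lt_or_ge x c with hxc | hxc
    · have := hright x h₁ hxc
      have := hc y hyc h₃
      simp only [Ioc, Ioo] at *; omega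
    · rcases h₃.lt_or_eq with h₃ | rfl
      · exact hM x y hxc h₂ h₃
      · have := hR x hxc h₂; omega

lemma exists_anchor_of_mid_failure (hm : 1 ≤ m) (hd : DoublyDense f g a b)
    (hg : b - a + m ≤ g.Icc a b) (hfail : ∃ x y, a ≤ x ∧ x < y ∧ y ≤ b ∧ g.Ioo x y < y - x - m) :
    ∃ γ δ, a ≤ γ ∧ γ < δ ∧ δ ≤ b ∧ f.Samples m γ δ ∧
      (δ < b ∧ b - δ + m ≤ g.Icc δ b ∨ a < γ ∧ γ - a + m ≤ g.Icc a γ) := by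
  obtain ⟨γ, δ, hγ, hγδ, hδ, hfail, hmin⟩ := Int.exists_minimal_window hfail
  refine ⟨γ, δ, hγ, hγδ, hδ, samples_of_minimal_window (hd.mono hγ hδ) hγδ hfail ?_,
    mass_split hm hg hγ hδ hfail⟩
  exact fun x y h₁ h₂ h₃ h₄ => not_lt.1 (hmin x y (by omega) h₂ (by omega) h₄)

lemma exists_shorter_of_prefix_failure (hm : 1 ≤ m) {γ δ : ℤ} (hd : DoublyDense f g δ b)
    (hf : f.Samples m γ δ) (hg : b - δ + m ≤ g.Icc δ b)
    (hfail : ∃ y, δ < y ∧ y ≤ b ∧ g.Ico δ y < y - δ) :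
    (∃ y, δ < y ∧ y < b ∧ f.Samples m γ y ∧ b - y + m ≤ g.Icc y b) ∨
      ∃ w, δ < w ∧ w < b ∧ w - δ + m ≤ g.Icc δ w := by
  obtain ⟨y₀, hδy, hyb, hgy₀, hmin⟩ := exists_minimal_prefix_failure hfail
  obtain ⟨hyb', hgy⟩ := mass_right_of_prefix_failure hm hg hyb hgy₀
  by_cases hs : f.Samples m γ y₀
  · exact Or.inl ⟨y₀, hδy, hyb', hs, hgy⟩
  -- By minimality of `y₀`, `g` is thin on `[x, y₀)`, so density makes `f` rich on `(x, y₀)`.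
  have hrich : ∀ x, δ ≤ x → x < y₀ → y₀ - x ≤ f.Ioo x y₀ := fun x h₁ h₂ => by
    have := hd x y₀ h₁ h₂ hyb
    have := hmin x h₁ h₂
    have := g.below_le_upto x
    simp only [Ico, Ioo] at *; omega
  obtain ⟨x, w, hx, hxw, hw, hthin⟩ :
      ∃ x w, δ ≤ x ∧ x < w ∧ w < y₀ ∧ f.Ioo x w < w - x - m := by
    by_contra! h
    exact hs (hf.extend_right hδy hrich h)
  -- `g` fills `[δ, x)` by minimality of `y₀`, and `(x, w)` because `f` is thin there.
  refine Or.inr ⟨w, by omega, by omega, ?_⟩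
  have := hd x w hx hxw (by omega)
  have := hmin x hx (by omega)
  have := g.below_le_upto x
  have := g.below_le_upto w
  simp only [Ico, Ioo, Icc] at *; omega

theorem splitSampled_of_anchor_right {m : ℕ} (hm : 1 ≤ m) {f g : CountingProfile}
    {N₁ N₂ γ δ b : ℤ} (hd : DoublyDense f g N₁ N₂)
    (hγ : N₁ ≤ γ) (hγδ : γ < δ) (hδb : δ < b) (hb : b ≤ N₂)
    (hf : f.Samples m γ δ) (hg : b - δ + m ≤ g.Icc δ b) : SplitSampled m f g N₁ N₂ := by
  by_cases hs : g.Samples m δ b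
  · exact ⟨γ, δ, b, hγ, hγδ, hδb, hb, Or.inl ⟨hf, hs⟩⟩
  have hd' : DoublyDense f g δ b := hd.mono (by omega) hb
  rcases exists_failure_of_not_samples hg hs with hpre | ⟨x, hx, hxb, hsuf⟩ | hmid
  · rcases exists_shorter_of_prefix_failure hm hd' hf hg hpre with
      ⟨y, hy, hyb, hfy, hgy⟩ | ⟨w, hw, hwb, hgw⟩
    · exact splitSampled_of_anchor_right hm hd hγ (by omega) hyb hb hfy hgy
    · exact splitSampled_of_anchor_right hm hd hγ hγδ hw (by omega) hf hgw
  · obtain ⟨hδx, hgx⟩ := mass_left_of_suffix_failure hm hg hx hxb hsuf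
    exact splitSampled_of_anchor_right hm hd hγ hγδ hδx (by omega) hf hgx
  · obtain ⟨γ', δ', hγ', hγδ', hδ', hf', ⟨hδ'b, hgr⟩ | ⟨hδγ', hgl⟩⟩ :=
      exists_anchor_of_mid_failure hm hd' hg hmid
    · exact splitSampled_of_anchor_right hm hd (by omega) hγδ' hδ'b hb hf' hgr
    · refine SplitSampled.of_reflect (splitSampled_of_anchor_right hm hd.reflect (by omega)
        (neg_lt_neg hγδ') (neg_lt_neg hδγ') (by omega) hf'.reflect ?_)
      simp only [reflect_Icc, neg_neg]; omega
termination_by (b - δ).toNat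
decreasing_by all_goals omega

lemma splitSampled_of_anchor_left (hm : 1 ≤ m) {N₁ N₂ γ δ : ℤ} (hd : DoublyDense f g N₁ N₂)
    (ha : N₁ ≤ a) (haγ : a < γ) (hγδ : γ < δ) (hδ : δ ≤ N₂)
    (hf : f.Samples m γ δ) (hg : γ - a + m ≤ g.Icc a γ) : SplitSampled m f g N₁ N₂ := by
  refine SplitSampled.of_reflect (splitSampled_of_anchor_right hm hd.reflect (by omega)
    (neg_lt_neg hγδ) (neg_lt_neg haγ) (by omega) hf.reflect ?_)
  simp only [reflect_Icc, neg_neg]; omega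

lemma splitSampled_of_prefix_failure (hm : 1 ≤ m) {N₁ N₂ : ℤ} (hd : DoublyDense f g N₁ N₂)
    (hleft : ∀ y, N₁ < y → y ≤ N₂ → 2 * (y - N₁) + m - 1 ≤ f.Ico N₁ y + g.Ico N₁ y)
    (hg : N₂ - N₁ + m ≤ g.Icc N₁ N₂)
    (hmid : ∀ x y, N₁ ≤ x → x < y → y ≤ N₂ → y - x - m ≤ g.Ioo x y)
    (hfail : ∃ y, N₁ < y ∧ y ≤ N₂ ∧ g.Ico N₁ y < y - N₁) : SplitSampled m f g N₁ N₂ := by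
  obtain ⟨d, hd₁, hd₂, hgd, hmin⟩ := exists_minimal_prefix_failure hfail
  have hf : f.Samples m N₁ d :=
    samples_of_minimal_prefix_failure (hd.mono le_rfl hd₂) (fun y h₁ h₂ => hleft y h₁ (by omega))
      hd₁ hgd hmin fun x y h₁ h₂ h₃ => hmid x y h₁ h₂ (by omega)
  obtain ⟨hdN, hgN⟩ := mass_right_of_prefix_failure hm hg hd₂ hgd
  exact splitSampled_of_anchor_right hm hd le_rfl hd₁ hdN le_rfl hf hgN

theorem splitSampled_of_not_samples (hm : 1 ≤ m) {N₁ N₂ : ℤ} (hd : DoublyDense f g N₁ N₂)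
    (hleft : ∀ y, N₁ < y → y ≤ N₂ → 2 * (y - N₁) + m - 1 ≤ f.Ico N₁ y + g.Ico N₁ y)
    (hright : ∀ x, N₁ ≤ x → x < N₂ → 2 * (N₂ - x) + m - 1 ≤ f.Ioc x N₂ + g.Ioc x N₂)
    (hg : N₂ - N₁ + m ≤ g.Icc N₁ N₂) (hns : ¬ g.Samples m N₁ N₂) :
    SplitSampled m f g N₁ N₂ := by
  by_cases hmid : ∃ x y, N₁ ≤ x ∧ x < y ∧ y ≤ N₂ ∧ g.Ioo x y < y - x - m
  · obtain ⟨γ, δ, hγ, hγδ, hδ, hf, ⟨hδN, hgr⟩ | ⟨hNγ, hgl⟩⟩ :=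
      exists_anchor_of_mid_failure hm hd hg hmid
    · exact splitSampled_of_anchor_right hm hd hγ hγδ hδN le_rfl hf hgr
    · exact splitSampled_of_anchor_left hm hd le_rfl hNγ hγδ hδ hf hgl
  push Not at hmid
  rcases exists_failure_of_not_samples hg hns with
    hpre | ⟨x, hx, hxN, hsuf⟩ | ⟨x, y, h₁, h₂, h₃, hlt⟩
  · exact splitSampled_of_prefix_failure hm hd hleft hg hmid hpre
  · refine SplitSampled.of_reflect
      (splitSampled_of_prefix_failure hm hd.reflect (fun y h₁ h₂ => ?_) ?_ (fun x y h₁ h₂ h₃ => ?_)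
        ⟨-x, by omega, by omega, ?_⟩)
    · have := hright (-y) (by omega) (by omega)
      simp only [reflect_Ico, neg_neg]; omega
    · simp only [reflect_Icc, neg_neg]; omega
    · have := hmid (-y) (-x) (by omega) (by omega) (by omega)
      simp only [reflect_Ioo]; omega
    · simp only [reflect_Ico, neg_neg]; omega
  · exact absurd (hmid x y h₁ h₂ h₃) (not_le.2 hlt)

lemma SplitSampled.exists_isSamplingSet {E₁ E₂ : Finset ℝ} {N₁ N₂ : ℤ}
    (h : SplitSampled m (ofFinset E₁) (ofFinset E₂) N₁ N₂) :
    ∃ i₁ i₁' i₂ i₂' : ℤ, N₁ ≤ i₁ ∧ i₁ < i₁' ∧ N₁ ≤ i₂ ∧ i₂ < i₂' ∧ i₁' ≤ N₂ ∧ i₂' ≤ N₂ ∧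
      (∃ p : ℤ, Set.Icc i₁ i₁' ∩ Set.Icc i₂ i₂' = {p}) ∧
      IsSamplingSet m i₁ i₁' ((E₁ : Set ℝ) ∩ Set.Icc (i₁ : ℝ) (i₁' : ℝ)) ∧
      IsSamplingSet m i₂ i₂' ((E₂ : Set ℝ) ∩ Set.Icc (i₂ : ℝ) (i₂' : ℝ)) := by
  obtain ⟨a, p, b, ha, hap, hpb, hb, ⟨hf₁, hf₂⟩ | ⟨hf₂, hf₁⟩⟩ := h
  · exact ⟨a, p, p, b, ha, hap, by omega, hpb, by omega, hb,
      ⟨p, Set.Icc_inter_Icc_eq_singleton hap.le hpb.le⟩,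
      isSamplingSet_of_samples hap.le hf₁, isSamplingSet_of_samples hpb.le hf₂⟩
  · exact ⟨p, b, a, p, by omega, hpb, ha, hap, hb, by omega,
      ⟨p, by rw [Set.inter_comm, Set.Icc_inter_Icc_eq_singleton hap.le hpb.le]⟩,
      isSamplingSet_of_samples hpb.le hf₁, isSamplingSet_of_samples hap.le hf₂⟩

end CountingProfile

open CountingProfile

/-- for a set satisfying the local phaseless sampling counting conditions,
split into two parts with the larger one not a sampling set, there are two integer
intervals meeting in a single point on which the respective parts are sampling sets. -/
theorem stmt_14 (m : ℕ) (hm : 1 ≤ m) (N₁ N₂ : ℤ) (hN : N₁ < N₂)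
    (E E₁ E₂ : Finset ℝ) (hE : (E : Set ℝ) ⊆ Set.Icc (N₁ : ℝ) (N₂ : ℝ))
    (hcard : 2 * (N₂ - N₁ + m) - 1 ≤ (E.card : ℤ))
    (hleft : ∀ k : ℤ, 1 ≤ k → k ≤ N₂ - N₁ →
      2 * k + m - 1 ≤ (((E : Set ℝ) ∩ Set.Ico (N₁ : ℝ) ((N₁ : ℝ) + k)).ncard : ℤ))
    (hright : ∀ k : ℤ, 1 ≤ k → k ≤ N₂ - N₁ →
      2 * k + m - 1 ≤ (((E : Set ℝ) ∩ Set.Ioc ((N₂ : ℝ) - k) (N₂ : ℝ)).ncard : ℤ))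
    (hmid : ∀ n₁ n₂ : ℤ, N₁ ≤ n₁ → n₁ < n₂ → n₂ ≤ N₂ →
      2 * (n₂ - n₁) - 1 ≤ (((E : Set ℝ) ∩ Set.Ioo (n₁ : ℝ) (n₂ : ℝ)).ncard : ℤ))
    (hunion : E₁ ∪ E₂ = E) (hdisj : Disjoint E₁ E₂) (hle : E₁.card ≤ E₂.card)
    (hnotsamp : ¬ IsSamplingSet m N₁ N₂ (E₂ : Set ℝ)) :
    ∃ i₁ i₁' i₂ i₂' : ℤ, N₁ ≤ i₁ ∧ i₁ < i₁' ∧ N₁ ≤ i₂ ∧ i₂ < i₂' ∧ i₁' ≤ N₂ ∧ i₂' ≤ N₂ ∧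
      (∃ p : ℤ, Set.Icc i₁ i₁' ∩ Set.Icc i₂ i₂' = {p}) ∧
      IsSamplingSet m i₁ i₁' ((E₁ : Set ℝ) ∩ Set.Icc (i₁ : ℝ) (i₁' : ℝ)) ∧
      IsSamplingSet m i₂ i₂' ((E₂ : Set ℝ) ∩ Set.Icc (i₂ : ℝ) (i₂' : ℝ)) := by
  have hE₂ : (E₂ : Set ℝ) ⊆ Set.Icc (N₁ : ℝ) N₂ :=
    (Finset.coe_subset.2 (hunion ▸ Finset.subset_union_right)).trans hE
  have hsplit : ∀ S : Set ℝ, (((E : Set ℝ) ∩ S).ncard : ℤ) =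
      ((E₁ : Set ℝ) ∩ S).ncard + ((E₂ : Set ℝ) ∩ S).ncard := fun S => by
    rw [← hunion, Finset.coe_union, ncard_union_inter_of_disjoint E₁.finite_toSet
      E₂.finite_toSet (Finset.disjoint_coe.2 hdisj)]
    push_cast; rfl
  have hd : DoublyDense (ofFinset E₁) (ofFinset E₂) N₁ N₂ := fun c d h₁ h₂ h₃ => by
    simpa only [hsplit, ← ofFinset_Ioo _ h₂] using hmid c d h₁ h₂ h₃
  have hleft' : ∀ y, N₁ < y → y ≤ N₂ → 2 * (y - N₁) + m - 1 ≤
      (ofFinset E₁).Ico N₁ y + (ofFinset E₂).Ico N₁ y := fun y h₁ h₂ => by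
    simpa only [hsplit, ← ofFinset_Ico_add _ (sub_nonneg.2 h₁.le), add_sub_cancel]
      using hleft (y - N₁) (by omega) (by omega)
  have hright' : ∀ x, N₁ ≤ x → x < N₂ → 2 * (N₂ - x) + m - 1 ≤
      (ofFinset E₁).Ioc x N₂ + (ofFinset E₂).Ioc x N₂ := fun x h₁ h₂ => by
    simpa only [hsplit, ← ofFinset_Ioc_sub _ (sub_nonneg.2 h₂.le), sub_sub_cancel]
      using hright (N₂ - x) (by omega) (by omega)
  have hg : N₂ - N₁ + m ≤ (ofFinset E₂).Icc N₁ N₂ := by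
    rw [ofFinset_Icc _ hN.le, Set.inter_eq_left.2 hE₂, Set.ncard_coe_finset]
    have := Finset.card_union_of_disjoint hdisj
    rw [hunion] at this
    omega
  have hns : ¬ (ofFinset E₂).Samples m N₁ N₂ := fun h => hnotsamp <| by
    simpa only [Set.inter_eq_left.2 hE₂] using isSamplingSet_of_samples hN.le h
  exact (splitSampled_of_not_samples hm hd hleft' hright' hg hns).exists_isSamplingSet
end

section
/- Let m ≥ 2 and let E ⊂ ℝ be a set of distinct points satisfying #(E ∩ (n_1, n_2)) ≥ 2(n_2−n_1)−1 for all integers n_1 < n_2. Then the following are equivalent: (a) for every integer n_0 there exist integers n_2 > n_1 ≥ n_0 with #(E ∩ [n_1, n_2]) ≥ 2(n_2−n_1+m)−1, and integers i_1 < i_2 ≤ n_0 with #(E ∩ [i_1, i_2]) ≥ 2(i_2−i_1+m)−1; (b) for every integer n_0, sup_{n > n_0} (#(E ∩ [n_0, n]) − 2(n−n_0)) = ∞ and sup_{n < n_0} (#(E ∩ [n, n_0]) − 2(n_0−n)) = ∞; (c) for every integer n_0, lim_{n→∞} (#(E ∩ [n_0, n]) − 2(n−n_0)) = ∞ and lim_{n→−∞}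 (#(E ∩ [n, n_0]) − 2(n_0−n)) = ∞. -/
/-!
Write `e(a, b) = #(E ∩ [a, b]) - 2 (b - a)` for the excess of `E` over density two on
`[a, b]`. Hypothesis (P1) makes `E` locally finite and, since a gap `(q, r)` between two
intervals contains at least `2 (r - q) - 1` points, gives `e(p, s) ≥ e(p, q) + e(r, s) - 1`
for `p ≤ q ≤ r ≤ s`. Hence enlarging an interval lowers its excess by at most one, so an
unbounded excess tends to infinity; and appending an interval of excess `2m - 1 ≥ 3` raises
the excess by at least one, so intervals of that size on every half-line make the excess
unbounded. The left-hand statements follow by the reflection `x ↦ -x`.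
-/

open Filter Set

structure AlmostSuperadditive (f : ℤ → ℤ → ℤ) : Prop where
  nonneg_diag : ∀ a, 0 ≤ f a a
  add_sub_one_le : ∀ {p q r s : ℤ}, p ≤ q → q ≤ r → r ≤ s → f p q + f r s - 1 ≤ f p s

namespace AlmostSuperadditive

variable {f : ℤ → ℤ → ℤ}

theorem reflect (hf : AlmostSuperadditive f) : AlmostSuperadditive fun a b => f (-b) (-a) where
  nonneg_diag a := hf.nonneg_diag (-a)
  add_sub_one_le hpq hqr hrs := by
    linarith [hf.add_sub_one_le (neg_le_neg hrs) (neg_le_neg hqr) (neg_le_neg hpq)]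

theorem sub_one_le_of_le (hf : AlmostSuperadditive f) {a b c : ℤ} (hab : a ≤ b) (hbc : b ≤ c) :
    f a b - 1 ≤ f a c := by
  linarith [hf.add_sub_one_le hab hbc le_rfl, hf.nonneg_diag c]

theorem tendsto_atTop (hf : AlmostSuperadditive f) {a : ℤ}
    (h : ∀ M, ∃ n, a < n ∧ M ≤ f a n) : Tendsto (f a) atTop atTop := by
  rw [tendsto_atTop_atTop]
  intro M
  obtain ⟨b, hab, hb⟩ := h (M + 1)
  exact ⟨b, fun n hbn => by linarith [hf.sub_one_le_of_le hab.le hbn]⟩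

theorem tendsto_atBot (hf : AlmostSuperadditive f) {a : ℤ}
    (h : ∀ M, ∃ n, n < a ∧ M ≤ f n a) : Tendsto (fun n => f n a) atBot atTop := by
  have hrefl := hf.reflect.tendsto_atTop (a := -a) fun M => by
    obtain ⟨n, hna, hM⟩ := h M
    exact ⟨-n, by omega, by simpa using hM⟩
  simpa [Function.comp_def] using hrefl.comp tendsto_neg_atBot_atTop

theorem forall_exists_gt_le_iff_tendsto (hf : AlmostSuperadditive f) (a : ℤ) :
    (∀ M, ∃ n, a < n ∧ M ≤ f a n) ↔ Tendsto (f a) atTop atTop :=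
  ⟨hf.tendsto_atTop, fun h M =>
    ((h.eventually_ge_atTop M).and (eventually_gt_atTop a)).exists.imp fun _ hn => hn.symm⟩

theorem forall_exists_lt_le_iff_tendsto (hf : AlmostSuperadditive f) (a : ℤ) :
    (∀ M, ∃ n, n < a ∧ M ≤ f n a) ↔ Tendsto (fun n => f n a) atBot atTop :=
  ⟨hf.tendsto_atBot, fun h M =>
    ((h.eventually_ge_atTop M).and (eventually_lt_atBot a)).exists.imp fun _ hn => hn.symm⟩

section Rich

variable {c : ℤ}

theorem exists_gt_add_one_le (hf : AlmostSuperadditive f) (hc : 2 ≤ c)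
    (hrich : ∀ a, ∃ b₁ b₂, a ≤ b₁ ∧ b₁ < b₂ ∧ c ≤ f b₁ b₂) {a n k : ℤ} (han : a ≤ n)
    (hk : k ≤ f a n) : ∃ n', n < n' ∧ k + 1 ≤ f a n' := by
  obtain ⟨b₁, b₂, hnb, hb, hcb⟩ := hrich n
  exact ⟨b₂, hnb.trans_lt hb, by linarith [hf.add_sub_one_le han hnb hb.le]⟩

theorem exists_gt_le_of_rich (hf : AlmostSuperadditive f) (hc : 2 ≤ c)
    (hrich : ∀ a, ∃ b₁ b₂, a ≤ b₁ ∧ b₁ < b₂ ∧ c ≤ f b₁ b₂) (a M : ℤ) :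
    ∃ n, a < n ∧ M ≤ f a n := by
  have hnat : ∀ k : ℕ, ∃ n, a ≤ n ∧ (k : ℤ) ≤ f a n := by
    intro k
    induction k with
    | zero => exact ⟨a, le_rfl, hf.nonneg_diag a⟩
    | succ k ih =>
      obtain ⟨n, han, hk⟩ := ih
      obtain ⟨n', hnn', hn'⟩ := hf.exists_gt_add_one_le hc hrich han hk
      exact ⟨n', han.trans hnn'.le, by exact_mod_cast hn'⟩
  obtain ⟨n, han, hn⟩ := hnat M.toNat
  obtain ⟨n', hnn', hn'⟩ := hf.exists_gt_add_one_le hc hrich han hn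
  exact ⟨n', han.trans_lt hnn', by linarith [Int.self_le_toNat M]⟩

theorem exists_lt_le_of_rich (hf : AlmostSuperadditive f) (hc : 2 ≤ c)
    (hrich : ∀ a, ∃ i₁ i₂, i₁ < i₂ ∧ i₂ ≤ a ∧ c ≤ f i₁ i₂) (a M : ℤ) :
    ∃ n, n < a ∧ M ≤ f n a := by
  obtain ⟨n, hn, hM⟩ := hf.reflect.exists_gt_le_of_rich hc (fun b => by
    obtain ⟨i₁, i₂, hi, hib, hci⟩ := hrich (-b)
    exact ⟨-i₂, -i₁, by omega, by omega, by simpa using hci⟩) (-a) M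
  exact ⟨-n, by omega, by simpa using hM⟩

theorem forall_rich_right_iff (hf : AlmostSuperadditive f) (hc : 2 ≤ c) :
    (∀ a, ∃ b₁ b₂, a ≤ b₁ ∧ b₁ < b₂ ∧ c ≤ f b₁ b₂) ↔ ∀ a M, ∃ n, a < n ∧ M ≤ f a n :=
  ⟨hf.exists_gt_le_of_rich hc, fun h a =>
    let ⟨n, han, hcn⟩ := h a c; ⟨a, n, le_rfl, han, hcn⟩⟩

theorem forall_rich_left_iff (hf : AlmostSuperadditive f) (hc : 2 ≤ c) :
    (∀ a, ∃ i₁ i₂, i₁ < i₂ ∧ i₂ ≤ a ∧ c ≤ f i₁ i₂) ↔ ∀ a M, ∃ n, n < a ∧ M ≤ f n a :=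
  ⟨hf.exists_lt_le_of_rich hc, fun h a =>
    let ⟨n, hna, hcn⟩ := h a c; ⟨n, a, hna, le_rfl, hcn⟩⟩

end Rich

end AlmostSuperadditive

theorem ncard_inter_Icc_add_ncard_inter_Icc_le {E : Set ℝ} {a b c : ℝ} (hab : a ≤ b)
    (hbc : b ≤ c) (hfin : (E ∩ Icc a c).Finite) :
    (E ∩ Icc a b).ncard + (E ∩ Icc b c).ncard ≤ (E ∩ Icc a c).ncard + 1 := by
  have hA := hfin.subset (inter_subset_inter_right E (Icc_subset_Icc_right hbc))
  have hC := hfin.subset (inter_subset_inter_right E (Icc_subset_Icc_left hab))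
  rw [← ncard_union_add_ncard_inter _ _ hA hC, ← inter_union_distrib_left,
    Icc_union_Icc_eq_Icc hab hbc, ← inter_inter_distrib_left, Icc_inter_Icc_eq_singleton hab hbc]
  have := ncard_inter_le_ncard_right E {b}
  rw [ncard_singleton] at this
  omega

theorem ncard_inter_Icc_add_ncard_inter_Ioo_add_ncard_inter_Icc {E : Set ℝ} {a b c d : ℝ}
    (hab : a ≤ b) (hbc : b < c) (hcd : c ≤ d) (hfin : (E ∩ Icc a d).Finite) :
    (E ∩ Icc a b).ncard + (E ∩ Ioo b c).ncard + (E ∩ Icc c d).ncard = (E ∩ Icc a d).ncard := by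
  have hA := hfin.subset (inter_subset_inter_right E (Icc_subset_Icc_right (hbc.le.trans hcd)))
  have hB := hfin.subset (inter_subset_inter_right E (Ioo_subset_Icc_self.trans
    (Icc_subset_Icc hab hcd)))
  have hC := hfin.subset (inter_subset_inter_right E (Icc_subset_Icc_left (hab.trans hbc.le)))
  have hAB : Disjoint (E ∩ Icc a b) (E ∩ Ioo b c) :=
    disjoint_left.2 fun x hA hB => by linarith [hA.2.2, hB.2.1]
  have hABC : Disjoint (E ∩ Icc a b ∪ E ∩ Ioo b c) (E ∩ Icc c d) :=
    disjoint_left.2 fun x hAB hC => by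
      rcases hAB with hA | hB
      · linarith [hA.2.2, hC.2.1]
      · linarith [hB.2.2, hC.2.1]
  rw [← ncard_union_eq hAB hA hB, ← ncard_union_eq hABC (hA.union hB) hC,
    ← inter_union_distrib_left, ← inter_union_distrib_left, Icc_union_Ioo_eq_Ico hab hbc,
    Ico_union_Icc_eq_Icc (hab.trans hbc.le) hcd]

noncomputable def excess (E : Set ℝ) (a b : ℤ) : ℤ := ((E ∩ Icc (a : ℝ) b).ncard : ℤ) - 2 * (b - a)

theorem finite_inter_Icc_of_density {E : Set ℝ}
    (hP1 : ∀ n₁ n₂ : ℤ, n₁ < n₂ → 2 * (n₂ - n₁) - 1 ≤ ((E ∩ Ioo (n₁ : ℝ) n₂).ncard : ℤ))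
    (a b : ℤ) : (E ∩ Icc (a : ℝ) b).Finite := by
  have hfin : (E ∩ Ioo ((a - 1 : ℤ) : ℝ) ((max a b + 1 : ℤ) : ℝ)).Finite :=
    finite_of_ncard_pos (by have := hP1 (a - 1) (max a b + 1) (by omega); omega)
  refine hfin.subset fun x hx => ⟨hx.1, ?_, ?_⟩
  · push_cast; linarith [hx.2.1]
  · push_cast; linarith [hx.2.2, le_max_right (a : ℝ) b]

theorem almostSuperadditive_excess {E : Set ℝ}
    (hP1 : ∀ n₁ n₂ : ℤ, n₁ < n₂ → 2 * (n₂ - n₁) - 1 ≤ ((E ∩ Ioo (n₁ : ℝ) n₂).ncard : ℤ)) :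
    AlmostSuperadditive (excess E) where
  nonneg_diag a := by simp [excess]
  add_sub_one_le {p q r s} hpq hqr hrs := by
    have hfin := finite_inter_Icc_of_density hP1 p s
    have hpq' : (p : ℝ) ≤ q := by exact_mod_cast hpq
    have hrs' : (r : ℝ) ≤ s := by exact_mod_cast hrs
    unfold excess
    rcases hqr.eq_or_lt with rfl | hqr
    · have := ncard_inter_Icc_add_ncard_inter_Icc_le hpq' hrs' hfin
      omega
    · have := ncard_inter_Icc_add_ncard_inter_Ioo_add_ncard_inter_Icc hpq'
        (by exact_mod_cast hqr) hrs' hfin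
      have := hP1 q r hqr
      omega

/-- for a set satisfying (P1), the three formulations of condition (P2)
(existence of rich intervals on both sides / unbounded excess / divergent excess) are
equivalent. -/
theorem stmt_15 (m : ℕ) (hm : 2 ≤ m) (E : Set ℝ)
    (hP1 : ∀ n₁ n₂ : ℤ, n₁ < n₂ →
      2 * (n₂ - n₁) - 1 ≤ ((E ∩ Set.Ioo (n₁ : ℝ) (n₂ : ℝ)).ncard : ℤ)) :
    ((∀ n₀ : ℤ,
        (∃ n₁ n₂ : ℤ, n₀ ≤ n₁ ∧ n₁ < n₂ ∧
          2 * (n₂ - n₁ + m) - 1 ≤ ((E ∩ Set.Icc (n₁ : ℝ) (n₂ : ℝ)).ncard : ℤ)) ∧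
        (∃ i₁ i₂ : ℤ, i₁ < i₂ ∧ i₂ ≤ n₀ ∧
          2 * (i₂ - i₁ + m) - 1 ≤ ((E ∩ Set.Icc (i₁ : ℝ) (i₂ : ℝ)).ncard : ℤ))) ↔
      (∀ n₀ M : ℤ,
        (∃ n : ℤ, n₀ < n ∧
          M ≤ ((E ∩ Set.Icc (n₀ : ℝ) (n : ℝ)).ncard : ℤ) - 2 * (n - n₀)) ∧
        (∃ n : ℤ, n < n₀ ∧
          M ≤ ((E ∩ Set.Icc (n : ℝ) (n₀ : ℝ)).ncard : ℤ) - 2 * (n₀ - n)))) ∧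
    ((∀ n₀ M : ℤ,
        (∃ n : ℤ, n₀ < n ∧
          M ≤ ((E ∩ Set.Icc (n₀ : ℝ) (n : ℝ)).ncard : ℤ) - 2 * (n - n₀)) ∧
        (∃ n : ℤ, n < n₀ ∧
          M ≤ ((E ∩ Set.Icc (n : ℝ) (n₀ : ℝ)).ncard : ℤ) - 2 * (n₀ - n))) ↔
      (∀ n₀ : ℤ,
        Tendsto (fun n : ℤ => ((E ∩ Set.Icc (n₀ : ℝ) (n : ℝ)).ncard : ℤ) - 2 * (n - n₀))
          atTop atTop ∧
        Tendsto (fun n : ℤ => ((E ∩ Set.Icc (n : ℝ) (n₀ : ℝ)).ncard : ℤ) - 2 * (n₀ - n))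
          atBot atTop)) := by
  have hf := almostSuperadditive_excess hP1
  have hc : (2 : ℤ) ≤ 2 * m - 1 := by omega
  have hrich (a b : ℤ) : 2 * (b - a + m) - 1 ≤ ((E ∩ Icc (a : ℝ) (b : ℝ)).ncard : ℤ) ↔
      2 * m - 1 ≤ excess E a b := by
    unfold excess; omega
  simp only [hrich, forall_and]
  exact ⟨and_congr (hf.forall_rich_right_iff hc) (hf.forall_rich_left_iff hc),
    and_congr (forall_congr' hf.forall_exists_gt_le_iff_tendsto)
      (forall_congr' hf.forall_exists_lt_le_iff_tendsto)⟩
end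

section
/- Let m ≥ 2 and α, β real with α > β ≥ 0. The arithmetic progression E = {nα + β : n ∈ ℤ} satisfies both conditions (P1): #(E ∩ (n_1, n_2)) ≥ 2(n_2−n_1)−1 for all integers n_1 < n_2, and (P2): for every integer n_0 there exist n_2 > n_1 ≥ n_0 with #(E ∩ [n_1, n_2]) ≥ 2(n_2−n_1+m)−1 and i_1 < i_2 ≤ n_0 with #(E ∩ [i_1, i_2]) ≥ 2(i_2−i_1+m)−1, if and only if 0 < α < 1/2. -/
/-!
If `α > 0`, the progression `{nα + β}` meets an interval of length `ℓ` in `ℓ/α ± 1` points.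
For `α < 1/2` this exceeds `2ℓ` by a margin that grows linearly in `ℓ`, which gives (P1) at once
and (P2) on every interval of a suitable fixed length. Conversely, (P2) asks for an interval
`[n₁, n₂]` with at least `2(n₂ - n₁) + 2m - 1 > 2(n₂ - n₁) + 1` points, which is impossible
once `α ≥ 1/2`.
-/

open Set

lemma exists_pos_two_mul_add_le_div {α : ℝ} (hα : 0 < α) (hα2 : α < 1 / 2) (c : ℝ) :
    ∃ L : ℕ, 0 < L ∧ 2 * L + c ≤ L / α := by
  have hgap : 0 < 1 / α - 2 := by
    rw [sub_pos, lt_div_iff₀ hα]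
    linarith
  obtain ⟨N, hN⟩ := exists_nat_gt (c / (1 / α - 2))
  refine ⟨N + 1, N.succ_pos, ?_⟩
  rw [div_lt_iff₀ hgap] at hN
  have : (N : ℝ) / α = N * (1 / α) := by ring
  push_cast
  rw [add_div, this]
  nlinarith

section ArithmeticProgression

variable {α : ℝ} (β : ℝ) (hα : 0 < α)
include hα

lemma intCast_mul_add_injective : Function.Injective fun n : ℤ => (n : ℝ) * α + β :=
  fun a b h => by exact_mod_cast mul_right_cancel₀ hα.ne' (add_right_cancel h)

lemma ncard_range_inter_Ioo (x y : ℝ) :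
    (((range fun n : ℤ => (n : ℝ) * α + β) ∩ Ioo x y).ncard : ℤ)
      = max (⌈(y - β) / α⌉ - ⌊(x - β) / α⌋ - 1) 0 := by
  have hpre : (fun n : ℤ => (n : ℝ) * α + β) ⁻¹' Ioo x y
      = ↑(Finset.Ioo ⌊(x - β) / α⌋ ⌈(y - β) / α⌉) := by
    ext n
    simp only [mem_preimage, mem_Ioo, Finset.coe_Ioo, Int.floor_lt, Int.lt_ceil,
      div_lt_iff₀ hα, lt_div_iff₀ hα, sub_lt_iff_lt_add, lt_sub_iff_add_lt]
  rw [← image_preimage_eq_range_inter, hpre, ncard_image_of_injective _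
    (intCast_mul_add_injective β hα), ncard_coe_finset, Int.card_Ioo, Int.toNat_eq_max]

lemma ncard_range_inter_Icc (x y : ℝ) :
    (((range fun n : ℤ => (n : ℝ) * α + β) ∩ Icc x y).ncard : ℤ)
      = max (⌊(y - β) / α⌋ + 1 - ⌈(x - β) / α⌉) 0 := by
  have hpre : (fun n : ℤ => (n : ℝ) * α + β) ⁻¹' Icc x y
      = ↑(Finset.Icc ⌈(x - β) / α⌉ ⌊(y - β) / α⌋) := by
    ext n
    simp only [mem_preimage, mem_Icc, Finset.coe_Icc, Int.ceil_le, Int.le_floor,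
      div_le_iff₀ hα, le_div_iff₀ hα, sub_le_iff_le_add, le_sub_iff_add_le]
  rw [← image_preimage_eq_range_inter, hpre, ncard_image_of_injective _
    (intCast_mul_add_injective β hα), ncard_coe_finset, Int.card_Icc, Int.toNat_eq_max]

lemma div_sub_one_le_ncard_range_inter_Ioo (x y : ℝ) :
    (y - x) / α - 1 ≤ ((range fun n : ℤ => (n : ℝ) * α + β) ∩ Ioo x y).ncard := by
  have hcount := congrArg (Int.cast (R := ℝ)) (ncard_range_inter_Ioo β hα x y)
  push_cast at hcount
  have hdiff : (y - β) / α - (x - β) / α = (y - x) / α := by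
    rw [div_sub_div_same, sub_sub_sub_cancel_right]
  rw [hcount]
  refine le_max_of_le_left ?_
  linarith [Int.le_ceil ((y - β) / α), Int.floor_le ((x - β) / α)]

lemma div_sub_one_le_ncard_range_inter_Icc (x y : ℝ) :
    (y - x) / α - 1 ≤ ((range fun n : ℤ => (n : ℝ) * α + β) ∩ Icc x y).ncard := by
  have hcount := congrArg (Int.cast (R := ℝ)) (ncard_range_inter_Icc β hα x y)
  push_cast at hcount
  have hdiff : (y - β) / α - (x - β) / α = (y - x) / α := by
    rw [div_sub_div_same, sub_sub_sub_cancel_right]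
  rw [hcount]
  refine le_max_of_le_left ?_
  linarith [Int.sub_one_lt_floor ((y - β) / α), Int.ceil_lt_add_one ((x - β) / α)]

lemma ncard_range_inter_Icc_le {x y : ℝ} (hxy : x ≤ y) :
    (((range fun n : ℤ => (n : ℝ) * α + β) ∩ Icc x y).ncard : ℝ) ≤ (y - x) / α + 1 := by
  have hdiff : (y - β) / α - (x - β) / α = (y - x) / α := by
    rw [div_sub_div_same, sub_sub_sub_cancel_right]
  have hlen : 0 ≤ (y - x) / α := div_nonneg (sub_nonneg.mpr hxy) hα.le
  have hcount := congrArg (Int.cast (R := ℝ)) (ncard_range_inter_Icc β hα x y)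
  push_cast at hcount
  refine hcount.le.trans (max_le ?_ (by linarith))
  linarith [Int.floor_le ((y - β) / α), Int.le_ceil ((x - β) / α)]

lemma lt_half_of_le_ncard_range_inter_Icc {m : ℤ} (hm : 2 ≤ m) {n₁ n₂ : ℤ} (hlt : n₁ < n₂)
    (hcount : 2 * (n₂ - n₁ + m) - 1 ≤
      (((range fun n : ℤ => (n : ℝ) * α + β) ∩ Icc (n₁ : ℝ) (n₂ : ℝ)).ncard : ℤ)) :
    α < 1 / 2 := by
  have hlen : (0 : ℝ) < n₂ - n₁ := sub_pos.mpr (by exact_mod_cast hlt)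
  have hm' : (2 : ℝ) ≤ m := by exact_mod_cast hm
  have hupper := ncard_range_inter_Icc_le β hα (Int.cast_le.mpr hlt.le)
  have hlower := (Int.cast_le (R := ℝ)).mpr hcount
  push_cast at hlower
  have htwice : 2 * ((n₂ : ℝ) - n₁) < (n₂ - n₁) / α := by linarith
  rw [lt_div_iff₀ hα] at htwice
  nlinarith

lemma two_mul_sub_one_le_ncard_range_inter_Ioo (hα2 : α ≤ 1 / 2) {n₁ n₂ : ℤ} (hle : n₁ ≤ n₂) :
    2 * (n₂ - n₁) - 1 ≤
      (((range fun n : ℤ => (n : ℝ) * α + β) ∩ Ioo (n₁ : ℝ) (n₂ : ℝ)).ncard : ℤ) := by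
  have hlen : (0 : ℝ) ≤ n₂ - n₁ := sub_nonneg.mpr (by exact_mod_cast hle)
  have htwice : 2 * ((n₂ : ℝ) - n₁) ≤ (n₂ - n₁) / α := by
    rw [le_div_iff₀ hα]
    nlinarith
  have hlower := div_sub_one_le_ncard_range_inter_Ioo β hα n₁ n₂
  rw [← Int.cast_le (R := ℝ)]
  push_cast
  linarith

lemma exists_forall_le_ncard_range_inter_Icc (hα2 : α < 1 / 2) (m : ℤ) :
    ∃ L : ℕ, 0 < L ∧ ∀ x y : ℤ, y - x = L → 2 * (y - x + m) - 1 ≤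
      (((range fun n : ℤ => (n : ℝ) * α + β) ∩ Icc (x : ℝ) (y : ℝ)).ncard : ℤ) := by
  obtain ⟨L, hL, hLα⟩ := exists_pos_two_mul_add_le_div hα hα2 (2 * m)
  refine ⟨L, hL, fun x y hxy => ?_⟩
  have hlower := div_sub_one_le_ncard_range_inter_Icc β hα x y
  rw [show (y : ℝ) - x = L by exact_mod_cast hxy] at hlower
  rw [hxy, ← Int.cast_le (R := ℝ)]
  push_cast
  linarith

end ArithmeticProgression

/-- the arithmetic progression `{nα + β : n ∈ ℤ}` satisfies the global
phaseless sampling conditions (P1) and (P2) for `m ≥ 2` iff `0 < α < 1/2`. -/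
theorem stmt_16 (m : ℕ) (hm : 2 ≤ m) (α β : ℝ) (hαβ : β < α) (hβ : 0 ≤ β) :
    ((∀ n₁ n₂ : ℤ, n₁ < n₂ →
        2 * (n₂ - n₁) - 1 ≤
          (((Set.range fun n : ℤ => (n : ℝ) * α + β) ∩
            Set.Ioo (n₁ : ℝ) (n₂ : ℝ)).ncard : ℤ)) ∧
      (∀ n₀ : ℤ,
        (∃ n₁ n₂ : ℤ, n₀ ≤ n₁ ∧ n₁ < n₂ ∧
          2 * (n₂ - n₁ + m) - 1 ≤
            (((Set.range fun n : ℤ => (n : ℝ) * α + β) ∩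
              Set.Icc (n₁ : ℝ) (n₂ : ℝ)).ncard : ℤ)) ∧
        (∃ i₁ i₂ : ℤ, i₁ < i₂ ∧ i₂ ≤ n₀ ∧
          2 * (i₂ - i₁ + m) - 1 ≤
            (((Set.range fun n : ℤ => (n : ℝ) * α + β) ∩
              Set.Icc (i₁ : ℝ) (i₂ : ℝ)).ncard : ℤ)))) ↔
    (0 < α ∧ α < 1 / 2) := by
  have hα : 0 < α := hβ.trans_lt hαβ
  constructor
  · rintro ⟨-, hP2⟩
    obtain ⟨⟨n₁, n₂, -, hlt, hcount⟩, -⟩ := hP2 0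
    exact ⟨hα, lt_half_of_le_ncard_range_inter_Icc β hα (by exact_mod_cast hm) hlt hcount⟩
  · rintro ⟨-, hα2⟩
    refine ⟨fun n₁ n₂ hlt =>
      two_mul_sub_one_le_ncard_range_inter_Ioo β hα hα2.le hlt.le, fun n₀ => ?_⟩
    obtain ⟨L, hL, hcount⟩ := exists_forall_le_ncard_range_inter_Icc β hα hα2 m
    exact ⟨⟨n₀, n₀ + L, le_rfl, by omega, hcount _ _ (by ring)⟩,
      ⟨n₀ - L, n₀, by omega, le_rfl, hcount _ _ (by ring)⟩⟩
end
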